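/- arXiv:2601.22469 — 9 statements merged into one kernel-verified Lean document; each statement's English description precedes it below -/
import Mathlib

section
/- Let H and K be monoids, and let f be a monoid isomorphism from the reduced finitary power monoid P_fin,1(H) to P_fin,1(K). Then for every two-element set X in P_fin,1(H), the image f(X) is a two-element set. -/
/-!
Write `X = {1, a}`, `Y = f X`, and suppose `|Y| ≥ 3`. An isomorphism preserves the number of
two-sided divisors `{U | ∃ A B, A * U * B = V}` of every element.

If the powers of `a` repeat, some `E = X ^ k` with `k ≥ 1` is idempotent. The divisors of an
idempotent `E` of `P_fin,1` are exactly the subsets of `E` containing `1`, so `|f E| = |E|`.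
But `X ^ (n + 1) = X ^ n` iff `Y ^ (n + 1) = Y ^ n`, and `X ^ (n + 1)` has at most one element
more than `X ^ n`, so `|X ^ k| < |Y ^ k|`.

If the powers of `a` are distinct, a divisor of `X ^ 3 = {1, a, a², a³}` containing `a³` is
`X ^ 3` itself, so `X ^ 3` has at most `1 + 4` divisors. Yet `Y ^ 3` has at least six:
`Y ^ i` for `i ≤ 3`, and `Y ^ 2 \ {b}`, `Y ^ 2 \ {c}` for distinct `b, c ∈ Y \ {1}`,
because `(Y ^ 2 \ {b}) * Y = Y ^ 3`.
-/

open scoped Pointwise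

/-- The reduced finitary power monoid of `M`: finite subsets of `M` containing `1`,
under setwise multiplication, realized as a submonoid of `Finset M`. -/
def redPow (M : Type*) [Monoid M] [DecidableEq M] : Submonoid (Finset M) where
  carrier := {X | (1 : M) ∈ X}
  one_mem' := by simp
  mul_mem' := by
    intro X Y hX hY
    simpa using Finset.mul_mem_mul hX hY

open Finset Function

section Monoid

variable {M N : Type*} [Monoid M] [Monoid N]

def twoSidedDivisors (x : M) : Set M := {u | ∃ a b, a * u * b = x}

theorem mem_twoSidedDivisors_of_dvd {u x : M} (h : u ∣ x) : u ∈ twoSidedDivisors x := by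
  obtain ⟨c, rfl⟩ := h
  exact ⟨1, c, by rw [one_mul]⟩

theorem MulEquiv.image_twoSidedDivisors (e : M ≃* N) (x : M) :
    e '' twoSidedDivisors x = twoSidedDivisors (e x) := by
  ext w
  constructor
  · rintro ⟨u, ⟨a, b, h⟩, rfl⟩
    exact ⟨e a, e b, by rw [← map_mul, ← map_mul, h]⟩
  · rintro ⟨a, b, h⟩
    refine ⟨e.symm w, ⟨e.symm a, e.symm b, e.injective ?_⟩, e.apply_symm_apply w⟩
    simpa only [map_mul, MulEquiv.apply_symm_apply] using h

theorem MulEquiv.encard_twoSidedDivisors (e : M ≃* N) (x : M) :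
    (twoSidedDivisors (e x)).encard = (twoSidedDivisors x).encard := by
  rw [← e.image_twoSidedDivisors, e.injective.encard_image]

theorem isIdempotentElem_pow_of_pow_succ_eq {x : M} {k : ℕ} (h : x ^ (k + 1) = x ^ k) :
    IsIdempotentElem (x ^ k) := by
  have hstable : ∀ m, x ^ (k + m) = x ^ k := by
    intro m
    induction m with
    | zero => rfl
    | succ m ih => rw [← add_assoc, pow_succ, ih, ← pow_succ, h]
  exact (pow_add x k k).symm.trans (hstable k)

end Monoid

theorem Finset.erase_mul_self_mul_self {M : Type*} [Monoid M] [DecidableEq M] {s : Finset M}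
    {b : M} (hs : 1 ∈ s) (hb : b ∈ s) (hb1 : b ≠ 1) :
    (s * s).erase b * s = s * s * s := by
  refine Subset.antisymm (mul_subset_mul_right (erase_subset _ _)) ?_
  intro w hw
  obtain ⟨u, hu, v, hv, rfl⟩ := mem_mul.1 hw
  by_cases hub : u = b
  · subst hub
    by_cases hv1 : u * v = u
    · have h1 : (1 : M) ∈ (s * s).erase u :=
        mem_erase.2 ⟨hb1.symm, one_mul (1 : M) ▸ mul_mem_mul hs hs⟩
      rw [hv1]
      simpa only [one_mul] using mul_mem_mul h1 hb
    · rw [← mul_one (u * v)]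
      exact mul_mem_mul (mem_erase.2 ⟨hv1, mul_mem_mul hb hv⟩) hs
  · exact mul_mem_mul (mem_erase.2 ⟨hub, hu⟩) hv

namespace redPow

variable {M N : Type*} [Monoid M] [DecidableEq M] [Monoid N] [DecidableEq N]

theorem coe_subset_of_mem_twoSidedDivisors {U V : redPow M} (h : U ∈ twoSidedDivisors V) :
    (U : Finset M) ⊆ V := by
  obtain ⟨A, B, rfl⟩ := h
  simp only [Submonoid.coe_mul]
  exact (subset_mul_right _ A.2).trans (subset_mul_left _ B.2)

theorem twoSidedDivisors_of_isIdempotentElem {E : redPow M} (hE : IsIdempotentElem E) :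
    twoSidedDivisors E = {U : redPow M | (U : Finset M) ⊆ E} := by
  refine Set.Subset.antisymm (fun U => coe_subset_of_mem_twoSidedDivisors) fun U hU => ?_
  have hEE : (E : Finset M) * E = E := congrArg Subtype.val hE.eq
  refine ⟨E, E, Subtype.ext (Subset.antisymm ?_ ?_)⟩
  · calc (E : Finset M) * U * E ⊆ E * E * E := mul_subset_mul_right (mul_subset_mul_left hU)
      _ = E := by rw [hEE, hEE]
  · exact (subset_mul_left _ U.2).trans (subset_mul_left _ E.2)

theorem encard_setOf_coe_subset {S : Finset M} (hS : (1 : M) ∈ S) :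
    {U : redPow M | (U : Finset M) ⊆ S}.encard = 2 ^ (S.card - 1) := by
  have herase : Injective fun U : redPow M => (U : Finset M).erase 1 := fun U V h =>
    Subtype.ext (by rw [← insert_erase U.2, ← insert_erase V.2]; exact congrArg (insert 1) h)
  have himage : (fun U : redPow M => (U : Finset M).erase 1) '' {U | (U : Finset M) ⊆ S} =
      ↑(S.erase 1).powerset := by
    ext T
    simp only [Set.mem_image, coe_powerset, Set.mem_preimage, Set.mem_powerset_iff, coe_subset]
    constructor
    · rintro ⟨U, hU, rfl⟩
      exact erase_subset_erase 1 hU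
    · intro hT
      have h1T : (1 : M) ∉ T := fun h => (mem_erase.1 (hT h)).1 rfl
      refine ⟨⟨insert 1 T, mem_insert_self 1 T⟩, ?_, erase_insert h1T⟩
      exact insert_subset hS (hT.trans (erase_subset 1 S))
  rw [← herase.encard_image, himage, Set.encard_coe_eq_coe_finsetCard, card_powerset,
    card_erase_of_mem hS]
  norm_cast

theorem card_coe_map_of_isIdempotentElem (e : redPow M ≃* redPow N) {E : redPow M}
    (hE : IsIdempotentElem E) : ((e E : redPow N) : Finset N).card = (E : Finset M).card := by
  have h := e.encard_twoSidedDivisors E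
  rw [twoSidedDivisors_of_isIdempotentElem hE, twoSidedDivisors_of_isIdempotentElem (hE.map e),
    encard_setOf_coe_subset (e E).2, encard_setOf_coe_subset E.2] at h
  have h' : ((e E : redPow N) : Finset N).card - 1 = (E : Finset M).card - 1 :=
    Nat.pow_right_injective le_rfl (by exact_mod_cast h)
  have := card_pos.2 ⟨_, (e E).2⟩
  have := card_pos.2 ⟨_, E.2⟩
  omega

theorem exists_coe_eq_pair {X : redPow M} (hX : (X : Finset M).card = 2) :
    ∃ a, (X : Finset M) = {1, a} := by
  obtain ⟨a, ha⟩ := card_eq_one.1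
    (by rw [card_erase_of_mem X.2, hX] : ((X : Finset M).erase 1).card = 1)
  exact ⟨a, by rw [← insert_erase X.2, ha]⟩

theorem two_le_card_coe {Z : redPow M} (hZ : Z ≠ 1) : 2 ≤ (Z : Finset M).card := by
  by_contra! h
  refine hZ (Subtype.ext ?_)
  rw [Submonoid.coe_one, ← singleton_one]
  exact (eq_singleton_iff_unique_mem.2 ⟨Z.2, fun x hx => card_le_one.1 (by omega) x hx 1 Z.2⟩)

section Pair

variable {X : redPow M} {a : M}

theorem coe_pow_eq_image_range (hX : (X : Finset M) = {1, a}) (n : ℕ) :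
    ((X ^ n : redPow M) : Finset M) = (range (n + 1)).image (a ^ ·) := by
  induction n with
  | zero => simpa using singleton_one.symm
  | succ n ih =>
    ext w
    simp only [pow_succ, Submonoid.coe_mul, ih, hX, mem_mul, mem_image, mem_range, mem_insert,
      mem_singleton]
    constructor
    · rintro ⟨_, ⟨j, hj, rfl⟩, z, rfl | rfl, rfl⟩
      · exact ⟨j, by omega, (mul_one _).symm⟩
      · exact ⟨j + 1, by omega, pow_succ z j⟩
    · rintro ⟨_ | j, hj, rfl⟩
      · exact ⟨1, ⟨0, by omega, pow_zero a⟩, 1, Or.inl rfl, by rw [pow_zero, mul_one]⟩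
      · exact ⟨a ^ j, ⟨j, by omega, rfl⟩, a, Or.inr rfl, (pow_succ a j).symm⟩

theorem coe_pow_succ_eq_insert (hX : (X : Finset M) = {1, a}) (n : ℕ) :
    ((X ^ (n + 1) : redPow M) : Finset M) =
      insert (a ^ (n + 1)) ((X ^ n : redPow M) : Finset M) := by
  rw [coe_pow_eq_image_range hX, coe_pow_eq_image_range hX, range_add_one, image_insert]

theorem exists_isIdempotentElem_pow_succ (hX : (X : Finset M) = {1, a})
    (ha : ¬ Injective (a ^ · : ℕ → M)) : ∃ k, IsIdempotentElem (X ^ (k + 1)) := by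
  obtain ⟨i, j, hij, hne⟩ := not_injective_iff.1 ha
  wlog hlt : i < j generalizing i j
  · exact this j i hij.symm (Ne.symm hne) (by omega)
  obtain ⟨k, rfl⟩ : ∃ k, j = k + 1 := ⟨j - 1, by omega⟩
  refine ⟨k, isIdempotentElem_pow_of_pow_succ_eq (Subtype.ext ?_)⟩
  have hmem : a ^ (k + 1 + 1) ∈ ((X ^ (k + 1) : redPow M) : Finset M) := by
    rw [pow_succ a (k + 1), ← hij, ← pow_succ, coe_pow_eq_image_range hX]
    exact mem_image_of_mem _ (mem_range.2 (by omega))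
  rw [coe_pow_succ_eq_insert hX, insert_eq_of_mem hmem]

theorem card_coe_pow_succ_le (hX : (X : Finset M) = {1, a}) (n : ℕ) :
    ((X ^ (n + 1) : redPow M) : Finset M).card ≤ ((X ^ n : redPow M) : Finset M).card + 1 := by
  rw [coe_pow_succ_eq_insert hX]
  exact card_insert_le _ _

theorem exists_pow_eq_of_mem_coe_pow (hX : (X : Finset M) = {1, a}) {w : M} {n : ℕ}
    (hw : w ∈ ((X ^ n : redPow M) : Finset M)) : ∃ i ≤ n, a ^ i = w := by
  rw [coe_pow_eq_image_range hX] at hw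
  obtain ⟨i, hi, rfl⟩ := mem_image.1 hw
  exact ⟨i, Nat.lt_succ_iff.1 (mem_range.1 hi), rfl⟩

theorem pow_mem_coe_pow_iff (hX : (X : Finset M) = {1, a}) (ha : Injective (a ^ · : ℕ → M))
    {m n : ℕ} : a ^ m ∈ ((X ^ n : redPow M) : Finset M) ↔ m ≤ n := by
  refine ⟨fun h => ?_, fun h => ?_⟩
  · obtain ⟨i, hi, hia⟩ := exists_pow_eq_of_mem_coe_pow hX h
    exact ha hia ▸ hi
  · rw [coe_pow_eq_image_range hX]
    exact mem_image_of_mem _ (mem_range.2 (by omega))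

theorem card_coe_pow (hX : (X : Finset M) = {1, a}) (ha : Injective (a ^ · : ℕ → M))
    (n : ℕ) : ((X ^ n : redPow M) : Finset M).card = n + 1 := by
  rw [coe_pow_eq_image_range hX, card_image_of_injective _ ha, card_range]

theorem injective_pow (hX : (X : Finset M) = {1, a}) (ha : Injective (a ^ · : ℕ → M)) :
    Injective (X ^ · : ℕ → redPow M) :=
  fun m n h => by
    simpa only [card_coe_pow hX ha, Nat.add_right_cancel_iff] using
      congrArg (fun Z : redPow M => (Z : Finset M).card) h

theorem eq_one_of_mul_pow_mem_coe_pow (hX : (X : Finset M) = {1, a})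
    (ha : Injective (a ^ · : ℕ → M)) {α : M} {n : ℕ}
    (hα : α ∈ ((X ^ n : redPow M) : Finset M))
    (h : α * a ^ n ∈ ((X ^ n : redPow M) : Finset M)) : α = 1 := by
  obtain ⟨i, -, rfl⟩ := exists_pow_eq_of_mem_coe_pow hX hα
  rw [← pow_add, pow_mem_coe_pow_iff hX ha] at h
  obtain rfl : i = 0 := by omega
  exact pow_zero a

theorem eq_one_of_pow_mul_mem_coe_pow (hX : (X : Finset M) = {1, a})
    (ha : Injective (a ^ · : ℕ → M)) {β : M} {n : ℕ}
    (hβ : β ∈ ((X ^ n : redPow M) : Finset M))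
    (h : a ^ n * β ∈ ((X ^ n : redPow M) : Finset M)) : β = 1 := by
  obtain ⟨i, -, rfl⟩ := exists_pow_eq_of_mem_coe_pow hX hβ
  rw [← pow_add, pow_mem_coe_pow_iff hX ha] at h
  obtain rfl : i = 0 := by omega
  exact pow_zero a

theorem twoSidedDivisors_pow_succ_subset (hX : (X : Finset M) = {1, a})
    (ha : Injective (a ^ · : ℕ → M)) (n : ℕ) :
    twoSidedDivisors (X ^ (n + 1)) ⊆
      insert (X ^ (n + 1)) {U : redPow M | (U : Finset M) ⊆ ↑(X ^ n)} := by
  intro U hU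
  have hUsub := coe_subset_of_mem_twoSidedDivisors hU
  by_cases htop : a ^ (n + 1) ∉ (U : Finset M)
  · right
    exact (subset_insert_iff_of_notMem htop).1 (coe_pow_succ_eq_insert hX n ▸ hUsub)
  left
  rw [not_not] at htop
  obtain ⟨A, B, hAB⟩ := hU
  have hv : (A : Finset M) * U * B = ↑(X ^ (n + 1)) := by
    simpa only [Submonoid.coe_mul] using congrArg Subtype.val hAB
  have hAsub : (A : Finset M) ⊆ ↑(X ^ (n + 1)) :=
    coe_subset_of_mem_twoSidedDivisors ⟨1, U * B, by rw [one_mul, ← mul_assoc, hAB]⟩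
  have hBsub : (B : Finset M) ⊆ ↑(X ^ (n + 1)) :=
    coe_subset_of_mem_twoSidedDivisors ⟨A * U, 1, by rw [mul_one, hAB]⟩
  have hA : ∀ α ∈ (A : Finset M), α = 1 := fun α hα =>
    eq_one_of_mul_pow_mem_coe_pow hX ha (hAsub hα) <| by
      rw [← hv, ← mul_one (α * _)]
      exact mul_mem_mul (mul_mem_mul hα htop) B.2
  have hB : ∀ β ∈ (B : Finset M), β = 1 := fun β hβ =>
    eq_one_of_pow_mul_mem_coe_pow hX ha (hBsub hβ) <| by
      rw [← hv, ← one_mul (a ^ (n + 1))]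
      exact mul_mem_mul (mul_mem_mul A.2 htop) hβ
  refine Subtype.ext (Subset.antisymm hUsub ?_)
  rw [← hv]
  intro w hw
  obtain ⟨_, hαu, β, hβ, rfl⟩ := mem_mul.1 hw
  obtain ⟨α, hα, u, hu, rfl⟩ := mem_mul.1 hαu
  rwa [hA α hα, hB β hβ, one_mul, mul_one]

theorem encard_twoSidedDivisors_pow_three_le (hX : (X : Finset M) = {1, a})
    (ha : Injective (a ^ · : ℕ → M)) :
    (twoSidedDivisors (X ^ 3)).encard ≤ 5 :=
  calc (twoSidedDivisors (X ^ 3)).encard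
      ≤ (insert (X ^ 3) {U : redPow M | (U : Finset M) ⊆ ↑(X ^ 2)}).encard :=
        Set.encard_le_encard (twoSidedDivisors_pow_succ_subset hX ha 2)
    _ ≤ {U : redPow M | (U : Finset M) ⊆ ↑(X ^ 2)}.encard + 1 := Set.encard_insert_le _ _
    _ = 5 := by rw [encard_setOf_coe_subset (X ^ 2).2, card_coe_pow hX ha]; rfl

end Pair

theorem coe_pow_subset_coe_pow (Z : redPow M) {m n : ℕ} (h : m ≤ n) :
    ((Z ^ m : redPow M) : Finset M) ⊆ ((Z ^ n : redPow M) : Finset M) := by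
  simpa only [SubmonoidClass.coe_pow] using pow_subset_pow_right Z.2 h

theorem card_coe_pow_lt_of_ne (Z : redPow M) {n : ℕ} (h : Z ^ n ≠ Z ^ (n + 1)) :
    ((Z ^ n : redPow M) : Finset M).card < ((Z ^ (n + 1) : redPow M) : Finset M).card :=
  card_lt_card (Finset.ssubset_iff_subset_ne.2
    ⟨coe_pow_subset_coe_pow Z n.le_succ, fun h' => h (Subtype.ext h')⟩)

theorem card_coe_pow_succ_lt_card_coe_map_pow_succ (e : redPow M ≃* redPow N) {X : redPow M}
    (hX : ∀ n, ((X ^ (n + 1) : redPow M) : Finset M).card ≤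
      ((X ^ n : redPow M) : Finset M).card + 1)
    (h : (X : Finset M).card < ((e X : redPow N) : Finset N).card) (n : ℕ) :
    ((X ^ (n + 1) : redPow M) : Finset M).card <
      ((e X ^ (n + 1) : redPow N) : Finset N).card := by
  induction n with
  | zero => simpa only [zero_add, pow_one] using h
  | succ n ih =>
    by_cases hstable : X ^ (n + 1) = X ^ (n + 1 + 1)
    · rwa [← map_pow, ← hstable, map_pow]
    · have hne : e X ^ (n + 1) ≠ e X ^ (n + 1 + 1) := by
        simpa only [← map_pow] using e.injective.ne hstable
      have := card_coe_pow_lt_of_ne _ hne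
      have := hX (n + 1)
      omega

theorem mem_coe_pow_of_mem {Y : redPow M} {y : M} (hy : y ∈ (Y : Finset M)) {n : ℕ}
    (hn : n ≠ 0) : y ∈ ((Y ^ n : redPow M) : Finset M) :=
  coe_pow_subset_coe_pow Y (Nat.one_le_iff_ne_zero.2 hn) (by rwa [pow_one])

def erase (Z : redPow M) {y : M} (hy : y ≠ 1) : redPow M :=
  ⟨(Z : Finset M).erase y, mem_erase.2 ⟨hy.symm, Z.2⟩⟩

theorem coe_erase (Z : redPow M) {y : M} (hy : y ≠ 1) :
    (redPow.erase Z hy : Finset M) = (Z : Finset M).erase y := rfl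

section SixDivisors

variable {Y : redPow M} {y z : M}

theorem erase_sq_mem_twoSidedDivisors (hy : y ∈ (Y : Finset M)) (hy1 : y ≠ 1) :
    redPow.erase (Y ^ 2) hy1 ∈ twoSidedDivisors (Y ^ 3) := by
  refine mem_twoSidedDivisors_of_dvd ⟨Y, Subtype.ext ?_⟩
  simp only [coe_erase, Submonoid.coe_mul, pow_succ, pow_zero, one_mul]
  exact (erase_mul_self_mul_self Y.2 hy hy1).symm

theorem erase_sq_ne_pow (hy : y ∈ (Y : Finset M)) (hy1 : y ≠ 1) (hz : z ∈ (Y : Finset M))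
    (hz1 : z ≠ 1) (hzy : z ≠ y) (i : ℕ) : redPow.erase (Y ^ 2) hy1 ≠ Y ^ i := by
  intro h
  have h' : ((Y ^ 2 : redPow M) : Finset M).erase y = ↑(Y ^ i) := congrArg Subtype.val h
  cases i with
  | zero =>
    have hz' := mem_erase.2 ⟨hzy, mem_coe_pow_of_mem hz two_ne_zero⟩
    rw [h', pow_zero, Submonoid.coe_one, ← singleton_one, mem_singleton] at hz'
    exact hz1 hz'
  | succ i =>
    have hy' := mem_coe_pow_of_mem hy i.succ_ne_zero
    rw [← h'] at hy'
    exact notMem_erase y _ hy'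

theorem six_le_encard_twoSidedDivisors_pow_three
    (hY : Injective (Y ^ · : ℕ → redPow M)) {b c : M} (hb : b ∈ (Y : Finset M))
    (hc : c ∈ (Y : Finset M)) (hb1 : b ≠ 1) (hc1 : c ≠ 1) (hbc : b ≠ c) :
    6 ≤ (twoSidedDivisors (Y ^ 3)).encard := by
  let S : Finset (redPow M) :=
    insert (redPow.erase (Y ^ 2) hb1) <|
      insert (redPow.erase (Y ^ 2) hc1) ((range 4).image (Y ^ ·))
  have hS : S.card = 6 := by
    rw [card_insert_of_notMem, card_insert_of_notMem, card_image_of_injective _ hY, card_range]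
    · simp only [mem_image, not_exists, not_and]
      exact fun i _ => (erase_sq_ne_pow hc hc1 hb hb1 hbc i).symm
    · intro h
      rcases mem_insert.1 h with h | h
      · have hc' : c ∈ (redPow.erase (Y ^ 2) hb1 : Finset M) :=
          mem_erase.2 ⟨hbc.symm, mem_coe_pow_of_mem hc two_ne_zero⟩
        rw [h, coe_erase] at hc'
        exact notMem_erase c _ hc'
      · obtain ⟨i, -, hi⟩ := mem_image.1 h
        exact erase_sq_ne_pow hb hb1 hc hc1 hbc.symm i hi.symm
  have hsub : (S : Set (redPow M)) ⊆ twoSidedDivisors (Y ^ 3) := by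
    intro U hU
    simp only [S, coe_insert, coe_image, coe_range, Set.mem_insert_iff, Set.mem_image,
      Set.mem_Iio] at hU
    rcases hU with rfl | rfl | ⟨i, hi, rfl⟩
    · exact erase_sq_mem_twoSidedDivisors hb hb1
    · exact erase_sq_mem_twoSidedDivisors hc hc1
    · exact mem_twoSidedDivisors_of_dvd (pow_dvd_pow Y (by omega))
  calc (6 : ℕ∞) = (S : Set (redPow M)).encard := by
        rw [Set.encard_coe_eq_coe_finsetCard, hS]; rfl
    _ ≤ _ := Set.encard_le_encard hsub

end SixDivisors

end redPow

/-- If `f : P_fin,1(H) → P_fin,1(K)` is a monoid isomorphism, then `f` maps every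
two-element set to a two-element set. -/
theorem stmt0 {H K : Type*} [Monoid H] [Monoid K] [DecidableEq H] [DecidableEq K]
    (f : redPow H ≃* redPow K) (X : redPow H) (hX : (X : Finset H).card = 2) :
    ((f X : redPow K) : Finset K).card = 2 := by
  obtain ⟨a, hXa⟩ := redPow.exists_coe_eq_pair hX
  by_contra hY
  have hfX1 : f X ≠ 1 := by
    rw [ne_eq, ← map_one f, f.injective.eq_iff]
    rintro rfl
    simp at hX
  have hXY : (X : Finset H).card < ((f X : redPow K) : Finset K).card := by
    have := redPow.two_le_card_coe hfX1
    omega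
  by_cases ha : Injective (a ^ · : ℕ → H)
  · obtain ⟨b, hb, c, hc, hbc⟩ := one_lt_card.1
      (by rw [card_erase_of_mem (f X).2]; omega : 1 < ((f X : Finset K).erase 1).card)
    have hinj : Injective (f X ^ · : ℕ → redPow K) := by
      simpa only [comp_def, map_pow] using f.injective.comp (redPow.injective_pow hXa ha)
    have h6 := redPow.six_le_encard_twoSidedDivisors_pow_three hinj (mem_erase.1 hb).2
      (mem_erase.1 hc).2 (mem_erase.1 hb).1 (mem_erase.1 hc).1 hbc
    rw [← map_pow, f.encard_twoSidedDivisors] at h6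
    exact absurd (h6.trans (redPow.encard_twoSidedDivisors_pow_three_le hXa ha)) (by norm_num)
  · obtain ⟨k, hk⟩ := redPow.exists_isIdempotentElem_pow_succ hXa ha
    have hlt := redPow.card_coe_pow_succ_lt_card_coe_map_pow_succ f
      (redPow.card_coe_pow_succ_le hXa) hXY k
    rw [← map_pow, redPow.card_coe_map_of_isIdempotentElem f hk] at hlt
    exact lt_irrefl _ hlt
end

section
/- Let H and K be cancellative monoids and f : P_fin,1(H) → P_fin,1(K) an isomorphism with pullback g. Then g(a^n) = g(a)^n for all a ∈ H and all n ∈ ℕ₀. -/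
open scoped Pointwise

/-- The element `{1, a}` of the reduced finitary power monoid. -/
def pairSet {M : Type*} [Monoid M] [DecidableEq M] (a : M) : redPow M :=
  ⟨{1, a}, by simp [redPow]⟩

section Aux

lemma pair_pow {M : Type*} [Monoid M] [DecidableEq M] (a : M) (k : ℕ) :
    (({1, a} : Finset M)) ^ k = (Finset.range (k + 1)).image (a ^ ·) := by
  induction k with
  | zero =>
    ext z
    simp
  | succ k ih =>
    rw [pow_succ, ih]
    ext z
    simp only [Finset.mem_mul, Finset.mem_image, Finset.mem_range, Finset.mem_insert,
      Finset.mem_singleton]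
    constructor
    · rintro ⟨x, ⟨i, hi, rfl⟩, y, hy, rfl⟩
      rcases hy with h | h
      · exact ⟨i, by omega, by simp [h]⟩
      · exact ⟨i + 1, by omega, by rw [h, pow_succ]⟩
    · rintro ⟨i, hi, rfl⟩
      rcases Nat.lt_or_ge i (k + 1) with h | h
      · exact ⟨a ^ i, ⟨i, h, rfl⟩, 1, Or.inl rfl, mul_one _⟩
      · have hik : i = k + 1 := by omega
        subst hik
        exact ⟨a ^ k, ⟨k, by omega, rfl⟩, a, Or.inr rfl, (pow_succ a k).symm⟩

lemma pair_mul_pow {M : Type*} [Monoid M] [DecidableEq M] (a : M) {j k : ℕ} (h : j ≤ k + 1) :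
    ({1, a ^ j} : Finset M) * ({1, a} : Finset M) ^ k = ({1, a} : Finset M) ^ (j + k) := by
  rw [pair_pow, pair_pow]
  ext z
  simp only [Finset.mem_mul, Finset.mem_image, Finset.mem_range, Finset.mem_insert,
    Finset.mem_singleton]
  constructor
  · rintro ⟨x, hx, y, ⟨i, hi, rfl⟩, rfl⟩
    rcases hx with rfl | rfl
    · exact ⟨i, by omega, by simp⟩
    · exact ⟨j + i, by omega, by rw [pow_add]⟩
  · rintro ⟨i, hi, rfl⟩
    rcases Nat.lt_or_ge i (k + 1) with h' | h'
    · exact ⟨1, Or.inl rfl, a ^ i, ⟨i, h', rfl⟩, one_mul _⟩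
    · refine ⟨a ^ j, Or.inr rfl, a ^ (i - j), ⟨i - j, by omega, rfl⟩, ?_⟩
      rw [← pow_add]
      congr 1
      omega

lemma pairSet_mul_pow {M : Type*} [Monoid M] [DecidableEq M] (a : M) {j k : ℕ} (h : j ≤ k + 1) :
    pairSet (a ^ j) * (pairSet a) ^ k = (pairSet a) ^ (j + k) := by
  apply Subtype.ext
  rw [Submonoid.coe_mul, SubmonoidClass.coe_pow, SubmonoidClass.coe_pow]
  exact pair_mul_pow a h

lemma pair_pow_stab {M : Type*} [CancelMonoid M] [DecidableEq M] (a : M) (k : ℕ) :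
    ({1, a} : Finset M) ^ (k + 1) = ({1, a} : Finset M) ^ k ↔
      (0 < orderOf a ∧ orderOf a ≤ k + 1) := by
  rw [pair_pow, pair_pow]
  constructor
  · intro h
    have hmem : a ^ (k + 1) ∈ (Finset.range (k + 1)).image (a ^ ·) := by
      rw [← h]
      exact Finset.mem_image.2 ⟨k + 1, Finset.mem_range.2 (by omega), rfl⟩
    obtain ⟨i, hi, hia⟩ := Finset.mem_image.1 hmem
    rw [Finset.mem_range] at hi
    have hmod : i % orderOf a = (k + 1) % orderOf a := pow_inj_mod.1 hia
    rcases Nat.eq_zero_or_pos (orderOf a) with h0 | h0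
    · rw [h0, Nat.mod_zero, Nat.mod_zero] at hmod
      omega
    · refine ⟨h0, ?_⟩
      by_contra hlt
      push_neg at hlt
      rw [Nat.mod_eq_of_lt (by omega), Nat.mod_eq_of_lt (by omega)] at hmod
      omega
  · rintro ⟨h0, hle⟩
    apply Finset.Subset.antisymm
    · intro z hz
      obtain ⟨i, hi, rfl⟩ := Finset.mem_image.1 hz
      rw [Finset.mem_range] at hi
      rcases Nat.lt_or_ge i (k + 1) with h' | h'
      · exact Finset.mem_image.2 ⟨i, Finset.mem_range.2 h', rfl⟩
      · have hik : i = k + 1 := by omega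
        subst hik
        refine Finset.mem_image.2 ⟨(k + 1) % orderOf a, Finset.mem_range.2 ?_, ?_⟩
        · have := Nat.mod_lt (k + 1) h0
          omega
        · exact pow_mod_orderOf a (k + 1)
    · intro z hz
      obtain ⟨i, hi, rfl⟩ := Finset.mem_image.1 hz
      rw [Finset.mem_range] at hi
      exact Finset.mem_image.2 ⟨i, Finset.mem_range.2 (by omega), rfl⟩

lemma pairSet_pow_stab {M : Type*} [CancelMonoid M] [DecidableEq M] (a : M) (k : ℕ) :
    (pairSet a) ^ (k + 1) = (pairSet a) ^ k ↔ (0 < orderOf a ∧ orderOf a ≤ k + 1) := by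
  rw [← pair_pow_stab a k]
  constructor
  · intro h
    have := congrArg Subtype.val h
    rwa [SubmonoidClass.coe_pow, SubmonoidClass.coe_pow] at this
  · intro h
    apply Subtype.ext
    rw [SubmonoidClass.coe_pow, SubmonoidClass.coe_pow]
    exact h

end Aux

/-- The pullback of an isomorphism of reduced finitary power monoids of cancellative
monoids preserves powers: `g(a^n) = g(a)^n`. -/
theorem stmt1 {H K : Type*} [CancelMonoid H] [CancelMonoid K] [DecidableEq H] [DecidableEq K]
    (f : redPow H ≃* redPow K) (g : H → K)
    (hg : ∀ a : H, f (pairSet a) = pairSet (g a)) :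
    ∀ (a : H) (n : ℕ), g (a ^ n) = g a ^ n := by
  -- g sends 1 to 1
  have hg1 : g 1 = 1 := by
    have h1 : pairSet (1 : H) = 1 := by
      apply Subtype.ext
      simp [pairSet, redPow]
      rfl
    have h2 := hg 1
    rw [h1, map_one] at h2
    have h3 := congrArg Subtype.val h2.symm
    -- h3 : {1, g 1} = 1
    have h4 : g 1 ∈ ((1 : redPow K) : Finset K) := by
      rw [← h3]; simp [pairSet]
    have h5 : ((1 : redPow K) : Finset K) = {1} := rfl
    rw [h5, Finset.mem_singleton] at h4
    exact h4
  -- g is injective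
  have ginj : Function.Injective g := by
    intro x y hxy
    have h1 : f (pairSet x) = f (pairSet y) := by rw [hg, hg, hxy]
    have h2 : pairSet x = pairSet y := f.injective h1
    have hv : ({1, x} : Finset H) = {1, y} := congrArg Subtype.val h2
    have hx : x ∈ ({1, y} : Finset H) := by rw [← hv]; simp
    have hy : y ∈ ({1, x} : Finset H) := by rw [hv]; simp
    simp only [Finset.mem_insert, Finset.mem_singleton] at hx hy
    rcases hx with rfl | h
    · rcases hy with rfl | h'
      · rfl
      · exact h'.symm
    · exact h
  -- g preserves orders
  have hord : ∀ x : H, orderOf (g x) = orderOf x := by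
    intro x
    have key : ∀ k : ℕ, ((0 < orderOf x ∧ orderOf x ≤ k + 1) ↔
        (0 < orderOf (g x) ∧ orderOf (g x) ≤ k + 1)) := by
      intro k
      rw [← pairSet_pow_stab x k, ← pairSet_pow_stab (g x) k]
      constructor
      · intro hEq
        have h1 := congrArg f hEq
        rwa [map_pow, map_pow, hg] at h1
      · intro hEq
        apply f.injective
        rwa [map_pow, map_pow, hg]
    rcases Nat.eq_zero_or_pos (orderOf x) with h0 | h0
    · rcases Nat.eq_zero_or_pos (orderOf (g x)) with h1 | h1
      · omega
      · have := (key (orderOf (g x) - 1)).2 ⟨h1, by omega⟩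
        omega
    · have h2 := (key (orderOf x - 1)).1 ⟨h0, by omega⟩
      have h3 := (key (orderOf (g x) - 1)).2 ⟨h2.1, by omega⟩
      omega
  intro a
  intro n
  induction n using Nat.strong_induction_on with
  | _ n IH =>
    match n, IH with
    | 0, _ => simpa using hg1
    | (s + 1), IH =>
      set m := orderOf a with hm
      by_cases hred : 0 < m ∧ m ≤ s + 1
      · -- reduce the exponent modulo the order
        have hlt : (s + 1) % m < s + 1 := by
          have := Nat.mod_lt (s + 1) hred.1
          omega
        have h1 : a ^ (s + 1) = a ^ ((s + 1) % m) := (pow_mod_orderOf a (s + 1)).symm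
        have h2 : g a ^ (s + 1) = g a ^ ((s + 1) % m) := by
          rw [← pow_mod_orderOf (g a) (s + 1), hord a]
        rw [h1, h2]
        exact IH _ hlt
      · -- main case: either infinite order or s + 1 < m
        push_neg at hred
        have hb : orderOf (g a) = m := hord a
        -- the key equation transported through f
        have hH : pairSet (a ^ (s + 1)) * (pairSet a) ^ s = (pairSet a) ^ (s + 1 + s) :=
          pairSet_mul_pow a (by omega)
        have hK : pairSet (g (a ^ (s + 1))) * (pairSet (g a)) ^ s
            = (pairSet (g a)) ^ (s + 1 + s) := by
          have := congrArg f hH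
          rwa [map_mul, map_pow, map_pow, hg, hg] at this
        set b := g a with hbdef
        set c := g (a ^ (s + 1)) with hcdef
        have hEQ : ({1, c} : Finset K) * (Finset.range (s + 1)).image (b ^ ·)
            = (Finset.range (s + 1 + s + 1)).image (b ^ ·) := by
          have := congrArg Subtype.val hK
          rw [Submonoid.coe_mul, SubmonoidClass.coe_pow, SubmonoidClass.coe_pow] at this
          show ({1, c} : Finset K) * _ = _
          rw [← pair_pow, ← pair_pow]
          exact this
        -- c is a power of b
        have hcS : c ∈ (Finset.range (s + 1 + s + 1)).image (b ^ ·) := by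
          rw [← hEQ]
          have h1 : c ∈ ({1, c} : Finset K) := by simp
          have h2 : (1 : K) ∈ (Finset.range (s + 1)).image (b ^ ·) :=
            Finset.mem_image.2 ⟨0, Finset.mem_range.2 (by omega), by simp⟩
          simpa using Finset.mul_mem_mul h1 h2
        obtain ⟨l, hl, hlc⟩ := Finset.mem_image.1 hcS
        rw [Finset.mem_range] at hl
        -- normalize the exponent
        set j : ℕ := if m = 0 then l else l % m with hjdef
        have hcj : c = b ^ j := by
          rcases Nat.eq_zero_or_pos m with h0 | h0
          · simp only [hjdef, h0, if_pos rfl]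
            exact hlc.symm
          · have : j = l % m := by simp [hjdef]; omega
            rw [this, ← hb] at *
            rw [pow_mod_orderOf b l]
            exact hlc.symm
        have hjlt : j < s + 1 + s + 1 := by
          rcases Nat.eq_zero_or_pos m with h0 | h0
          · simp only [hjdef, if_pos h0]; omega
          · have : j = l % m := by simp only [hjdef]; rw [if_neg (by omega)]
            have := Nat.mod_le l m
            omega
        have hjm : 0 < m → j < m := by
          intro h0
          have : j = l % m := by simp only [hjdef]; rw [if_neg (by omega)]
          rw [this]
          exact Nat.mod_lt l h0
        have hnm : 0 < m → s + 1 < m := hred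
        -- lower bound: s + 1 ≤ j
        have hjge : s + 1 ≤ j := by
          by_contra hjlt'
          push_neg at hjlt'
          have h1 : g (a ^ j) = b ^ j := IH j (by omega)
          have h2 : a ^ j = a ^ (s + 1) := ginj (by rw [h1, ← hcj, hcdef])
          have h3 : j % m = (s + 1) % m := by
            have := pow_inj_mod.1 h2
            rwa [← hm] at this
          rcases Nat.eq_zero_or_pos m with h0 | h0
          · rw [h0, Nat.mod_zero, Nat.mod_zero] at h3; omega
          · have := hnm h0
            rw [Nat.mod_eq_of_lt (by omega), Nat.mod_eq_of_lt (by omega)] at h3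
            omega
        -- upper bound: j ≤ s + 1
        have hjle : j ≤ s + 1 := by
          by_contra hjgt
          push_neg at hjgt
          have hj1 : 1 ≤ j := by omega
          -- b ^ (j - 1) is in the right-hand side
          have hmem : b ^ (j - 1) ∈ (Finset.range (s + 1 + s + 1)).image (b ^ ·) :=
            Finset.mem_image.2 ⟨j - 1, Finset.mem_range.2 (by omega), rfl⟩
          rw [← hEQ] at hmem
          obtain ⟨x, hx, y, hy, hxy⟩ := Finset.mem_mul.1 hmem
          obtain ⟨i, hi, rfl⟩ := Finset.mem_image.1 hy
          rw [Finset.mem_range] at hi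
          simp only [Finset.mem_insert, Finset.mem_singleton] at hx
          rcases hx with rfl | rfl
          · -- 1 * b ^ i = b ^ (j - 1)
            rw [one_mul] at hxy
            have h3 : i % orderOf b = (j - 1) % orderOf b := pow_inj_mod.1 hxy
            rw [hb] at h3
            rcases Nat.eq_zero_or_pos m with h0 | h0
            · rw [h0, Nat.mod_zero, Nat.mod_zero] at h3; omega
            · have := hjm h0
              rw [Nat.mod_eq_of_lt (by omega), Nat.mod_eq_of_lt (by omega)] at h3
              omega
          · -- c * b ^ i = b ^ (j - 1)
            rw [hcj, ← pow_add] at hxy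
            have h3 : (j + i) % orderOf b = (j - 1) % orderOf b := pow_inj_mod.1 hxy
            rw [hb] at h3
            rcases Nat.eq_zero_or_pos m with h0 | h0
            · rw [h0, Nat.mod_zero, Nat.mod_zero] at h3; omega
            · have hjm' := hjm h0
              have hnm' := hnm h0
              -- j + i ≡ j - 1 [MOD m] with j - 1 < m, i + 1 < m
              have h4 : (j - 1 + (i + 1)) % m = (j - 1 + 0) % m := by
                rw [Nat.add_zero]
                rw [(by omega : j - 1 + (i + 1) = j + i)]
                exact h3
              have h5 : (i + 1) % m = 0 % m :=
                Nat.ModEq.add_left_cancel' (j - 1) h4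
              rw [Nat.zero_mod, Nat.mod_eq_of_lt (by omega)] at h5
              omega
        have hj : j = s + 1 := by omega
        rw [hcj, hj]
end

section
/- Let H and K be commutative cancellative monoids, each with an element of infinite order, f : P_fin,1(H) → P_fin,1(K) an isomorphism with pullback g, and X ∈ P_fin,1(H). Then an element a ∈ H, a ≠ 1_H, is a quotient of X of multiplicity n if and only if g(a) is a quotient of f(X) of multiplicity n. -/
open scoped Pointwise

namespace Stmt5Aux

set_option linter.unusedSectionVars false
set_option linter.unusedVariables false

open Finset

section Basic

variable {M : Type*} [CancelCommMonoid M] [DecidableEq M]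

lemma one_mem_val (X : redPow M) : (1 : M) ∈ (X : Finset M) := X.prop

lemma coe_pairSet (a : M) : ((pairSet a : redPow M) : Finset M) = {1, a} := rfl

lemma pow_inj {a : M} (ha : ∀ n : ℕ, 0 < n → a ^ n ≠ 1) {s t : ℕ}
    (h : a ^ s = a ^ t) : s = t := by
  rcases lt_trichotomy s t with hlt | he | hlt
  · exfalso
    have h2 : a ^ s * a ^ (t - s) = a ^ s * 1 := by
      rw [← pow_add, mul_one]
      rw [show s + (t - s) = t by omega, h]
    exact ha (t - s) (by omega) (mul_left_cancel h2)
  · exact he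
  · exfalso
    have h2 : a ^ t * a ^ (s - t) = a ^ t * 1 := by
      rw [← pow_add, mul_one]
      rw [show t + (s - t) = s by omega, h]
    exact ha (s - t) (by omega) (mul_left_cancel h2)

/-- chain `{1, b, b², …, b^k}` -/
def chainF (b : M) (k : ℕ) : Finset M := (Finset.range (k+1)).image (b ^ ·)

lemma mem_chainF {b z : M} {k : ℕ} : z ∈ chainF b k ↔ ∃ i, i ≤ k ∧ b ^ i = z := by
  simp [chainF, Nat.lt_succ_iff]

lemma coe_pairSet_pow (b : M) (k : ℕ) :
    ((pairSet b ^ k : redPow M) : Finset M) = chainF b k := by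
  induction k with
  | zero =>
    ext z
    simp [pow_zero, chainF, Finset.mem_one, eq_comm]
  | succ n ih =>
    rw [pow_succ, MulMemClass.coe_mul, ih]
    ext z
    constructor
    · intro hz
      rw [Finset.mem_mul] at hz
      obtain ⟨u, hu, v, hv, huv⟩ := hz
      rw [mem_chainF] at hu
      obtain ⟨i, hi, rfl⟩ := hu
      rw [coe_pairSet, Finset.mem_insert, Finset.mem_singleton] at hv
      rw [mem_chainF]
      rcases hv with rfl | rfl
      · exact ⟨i, by omega, by simpa using huv⟩
      · exact ⟨i + 1, by omega, by rw [pow_succ]; exact huv⟩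
    · intro hz
      rw [mem_chainF] at hz
      obtain ⟨i, hi, rfl⟩ := hz
      rw [Finset.mem_mul]
      rcases Nat.lt_or_ge i (n+1) with h | h
      · exact ⟨b ^ i, mem_chainF.2 ⟨i, by omega, rfl⟩, 1, by simp [coe_pairSet], by simp⟩
      · have hi' : i = n + 1 := by omega
        subst hi'
        exact ⟨b ^ n, mem_chainF.2 ⟨n, le_refl _, rfl⟩, b, by simp [coe_pairSet], by
          rw [pow_succ]⟩

/-- genericity of `b` w.r.t. `X` -/
def Good (b : M) (X : Finset M) : Prop :=
  ∀ s : ℕ, 1 ≤ s → s ≤ 6 → ∀ u ∈ X, ∀ v ∈ X, b ^ s * u ≠ v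

lemma mem_mul_chain {X : Finset M} {b z : M} {k : ℕ} :
    z ∈ X * chainF b k ↔ ∃ x ∈ X, ∃ i, i ≤ k ∧ x * b ^ i = z := by
  rw [Finset.mem_mul]
  constructor
  · rintro ⟨x, hx, c, hc, rfl⟩
    obtain ⟨i, hi, rfl⟩ := mem_chainF.1 hc
    exact ⟨x, hx, i, hi, rfl⟩
  · rintro ⟨x, hx, i, hi, rfl⟩
    exact ⟨x, hx, b ^ i, mem_chainF.2 ⟨i, hi, rfl⟩, rfl⟩

end Basic

section Char

variable {M : Type*} [CancelCommMonoid M] [DecidableEq M]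
variable {b : M} {X Y : Finset M}

lemma char_sub (hb : Good b X) (hY : Y * chainF b 2 = X * chainF b 4) : X ⊆ Y := by
  intro u hu
  have hu4 : u ∈ X * chainF b 4 := mem_mul_chain.2 ⟨u, hu, 0, by omega, by simp⟩
  rw [← hY] at hu4
  obtain ⟨y, hy, i, hi, hyi⟩ := mem_mul_chain.1 hu4
  have hy4 : y ∈ X * chainF b 4 := by
    rw [← hY]; exact mem_mul_chain.2 ⟨y, hy, 0, by omega, by simp⟩
  obtain ⟨x, hx, l, hl, hxl⟩ := mem_mul_chain.1 hy4
  have key : b ^ (l + i) * x = u := by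
    rw [← hyi, ← hxl, pow_add]; ac_rfl
  rcases Nat.eq_zero_or_pos (l + i) with h0 | hpos
  · have : i = 0 := by omega
    subst this
    simpa [← hyi] using hy
  · exact absurd key (hb (l + i) hpos (by omega) x hx u hu)

lemma char_levels (hb : Good b X) (hY : Y * chainF b 2 = X * chainF b 4) :
    ∀ y ∈ Y, ∃ x ∈ X, ∃ l, l ≤ 2 ∧ x * b ^ l = y := by
  intro y hy
  have hy4 : y ∈ X * chainF b 4 := by
    rw [← hY]; exact mem_mul_chain.2 ⟨y, hy, 0, by omega, by simp⟩
  obtain ⟨x, hx, l, hl, hxl⟩ := mem_mul_chain.1 hy4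
  rcases Nat.lt_or_ge l 3 with h | h
  · exact ⟨x, hx, l, by omega, hxl⟩
  · exfalso
    have h2 : y * b ^ 2 ∈ X * chainF b 4 := by
      rw [← hY]; exact mem_mul_chain.2 ⟨y, hy, 2, by omega, rfl⟩
    obtain ⟨x', hx', l', hl', hxl'⟩ := mem_mul_chain.1 h2
    have key : x' * b ^ l' = x * b ^ (l + 2) := by
      rw [hxl', ← hxl, pow_add, mul_assoc]
    have hgt : l' < l + 2 := by omega
    have key2 : b ^ (l + 2 - l') * x = x' := by
      have : b ^ l' * (b ^ (l + 2 - l') * x) = b ^ l' * x' := by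
        rw [← mul_assoc, ← pow_add, show l' + (l + 2 - l') = l + 2 by omega,
          mul_comm (b ^ (l + 2)) x, ← key, mul_comm]
      exact mul_left_cancel this
    exact hb (l + 2 - l') (by omega) (by omega) x hx x' hx' key2

lemma char_top (hb : Good b X) (hY : Y * chainF b 2 = X * chainF b 4) :
    ∀ x ∈ X, b ^ 2 * x ∈ Y := by
  intro x hx
  have h4 : x * b ^ 4 ∈ X * chainF b 4 := mem_mul_chain.2 ⟨x, hx, 4, le_refl _, rfl⟩
  rw [← hY] at h4
  obtain ⟨y, hy, i, hi, hyi⟩ := mem_mul_chain.1 h4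
  obtain ⟨x', hx', l, hl, hxl⟩ := char_levels hb hY y hy
  have key : x' * b ^ (l + i) = x * b ^ 4 := by
    rw [← hyi, ← hxl, pow_add, mul_assoc]
  rcases Nat.lt_or_ge (l + i) 4 with h | h
  · exfalso
    have key2 : b ^ (4 - (l + i)) * x = x' := by
      have : b ^ (l + i) * (b ^ (4 - (l + i)) * x) = b ^ (l + i) * x' := by
        rw [← mul_assoc, ← pow_add, show l + i + (4 - (l + i)) = 4 by omega,
          mul_comm (b ^ 4) x, ← key, mul_comm]
      exact mul_left_cancel this
    exact hb (4 - (l + i)) (by omega) (by omega) x hx x' hx' key2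
  · have hl2 : l = 2 ∧ i = 2 := by omega
    obtain ⟨rfl, rfl⟩ := hl2
    have : x' = x := by
      have : x' * b ^ 4 = x * b ^ 4 := by rw [← key]
      exact mul_right_cancel this
    subst this
    rw [← hxl] at hy
    rw [mul_comm] at hy
    exact hy

/-- the candidate solutions -/
def YS (b : M) (X S : Finset M) : Finset M :=
  X ∪ S.image (fun t => b * t) ∪ X.image (fun t => b ^ 2 * t)

lemma sol_forward {S : Finset M} (hS : S ⊆ X) :
    YS b X S * chainF b 2 = X * chainF b 4 := by
  ext z
  constructor
  · intro hz
    obtain ⟨y, hy, i, hi, rfl⟩ := mem_mul_chain.1 hz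
    rw [YS, Finset.mem_union, Finset.mem_union] at hy
    rcases hy with (hy | hy) | hy
    · exact mem_mul_chain.2 ⟨y, hy, i, by omega, rfl⟩
    · obtain ⟨t, ht, rfl⟩ := Finset.mem_image.1 hy
      exact mem_mul_chain.2 ⟨t, hS ht, i + 1, by omega, by rw [pow_succ]; ac_rfl⟩
    · obtain ⟨t, ht, rfl⟩ := Finset.mem_image.1 hy
      exact mem_mul_chain.2 ⟨t, ht, i + 2, by omega, by rw [pow_add]; ac_rfl⟩
  · intro hz
    obtain ⟨x, hx, k, hk, rfl⟩ := mem_mul_chain.1 hz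
    have hxY : x ∈ YS b X S := by rw [YS]; simp [hx]
    have hx2 : b ^ 2 * x ∈ YS b X S := by
      rw [YS]
      simp only [Finset.mem_union, Finset.mem_image]
      exact Or.inr ⟨x, hx, rfl⟩
    interval_cases k
    · exact mem_mul_chain.2 ⟨x, hxY, 0, by omega, rfl⟩
    · exact mem_mul_chain.2 ⟨x, hxY, 1, by omega, rfl⟩
    · exact mem_mul_chain.2 ⟨x, hxY, 2, by omega, rfl⟩
    · exact mem_mul_chain.2 ⟨b ^ 2 * x, hx2, 1, by omega, by
        rw [pow_one, show (3:ℕ) = 2 + 1 from rfl, pow_add, pow_one]; ac_rfl⟩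
    · exact mem_mul_chain.2 ⟨b ^ 2 * x, hx2, 2, by omega, by
        rw [show (4:ℕ) = 2 + 2 from rfl, pow_add]; ac_rfl⟩

lemma extract (hb : Good b X) {S : Finset M} (hS : S ⊆ X) :
    X.filter (fun u => b * u ∈ YS b X S) = S := by
  ext u
  rw [Finset.mem_filter]
  constructor
  · rintro ⟨hu, hbu⟩
    rw [YS, Finset.mem_union, Finset.mem_union] at hbu
    rcases hbu with (h | h) | h
    · exact absurd (by rw [pow_one] : b ^ 1 * u = b * u)
        (hb 1 (by omega) (by omega) u hu (b * u) h)
    · obtain ⟨t, ht, htu⟩ := Finset.mem_image.1 h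
      have : t = u := mul_left_cancel htu
      subst this; exact ht
    · exfalso
      obtain ⟨t, ht, htu⟩ := Finset.mem_image.1 h
      have h2 : b * (b * t) = b * u := by rw [← htu, pow_two, mul_assoc]
      have : b * t = u := mul_left_cancel h2
      exact hb 1 (by omega) (by omega) t ht u hu (by simpa [pow_one] using this)
  · intro hu
    refine ⟨hS hu, ?_⟩
    rw [YS]
    simp only [Finset.mem_union, Finset.mem_image]
    exact Or.inl (Or.inr ⟨u, hu, rfl⟩)

lemma char_backward (hb : Good b X) (hY : Y * chainF b 2 = X * chainF b 4) :
    Y = YS b X (X.filter (fun u => b * u ∈ Y)) := by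
  ext y
  constructor
  · intro hy
    obtain ⟨x, hx, l, hl, hxl⟩ := char_levels hb hY y hy
    rw [YS]
    simp only [Finset.mem_union, Finset.mem_image, Finset.mem_filter]
    interval_cases l
    · left; left; simpa [← hxl] using hx
    · left; right
      exact ⟨x, ⟨hx, by rwa [show b * x = x * b ^ 1 by rw [pow_one, mul_comm], hxl]⟩, by
        rw [← hxl, pow_one, mul_comm]⟩
    · right
      exact ⟨x, hx, by rw [← hxl, mul_comm]⟩
  · intro hy
    rw [YS] at hy
    simp only [Finset.mem_union, Finset.mem_image, Finset.mem_filter] at hy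
    rcases hy with (h | h) | h
    · exact char_sub hb hY h
    · obtain ⟨t, ⟨ht, hbt⟩, rfl⟩ := h
      exact hbt
    · obtain ⟨t, ht, rfl⟩ := h
      exact char_top hb hY t ht

end Char

section Equivs

variable {M : Type*} [CancelCommMonoid M] [DecidableEq M]

noncomputable def solEquiv (b : M) (X : redPow M) (hb : Good b (X : Finset M)) :
    {S : Finset M // S ∈ (X : Finset M).powerset} ≃
      {Y : redPow M // Y * pairSet b ^ 2 = X * pairSet b ^ 4} where
  toFun S := ⟨⟨YS b (X : Finset M) S.val, by
      have h1 : (1 : M) ∈ (X : Finset M) := one_mem_val X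
      show (1 : M) ∈ YS b (X : Finset M) S.val
      rw [YS]
      simp [h1]⟩, by
    apply Subtype.ext
    show _ * ((pairSet b ^ 2 : redPow M) : Finset M)
        = (X : Finset M) * ((pairSet b ^ 4 : redPow M) : Finset M)
    rw [coe_pairSet_pow, coe_pairSet_pow]
    exact sol_forward (Finset.mem_powerset.1 S.prop)⟩
  invFun Y := ⟨(X : Finset M).filter (fun u => b * u ∈ (Y.val : Finset M)),
    Finset.mem_powerset.2 (Finset.filter_subset _ _)⟩
  left_inv S := by
    apply Subtype.ext
    exact extract hb (Finset.mem_powerset.1 S.prop)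
  right_inv Y := by
    apply Subtype.ext
    apply Subtype.ext
    have hY : (Y.val : Finset M) * chainF b 2 = (X : Finset M) * chainF b 4 := by
      have h := congrArg (fun Z : redPow M => (Z : Finset M)) Y.prop
      simpa only [MulMemClass.coe_mul, coe_pairSet_pow] using h
    exact (char_backward hb hY).symm

noncomputable def mapEquiv {H K : Type*} [CancelCommMonoid H] [CancelCommMonoid K]
    [DecidableEq H] [DecidableEq K]
    (f : redPow H ≃* redPow K) (b : H) (c : K)
    (hbc : f (pairSet b) = pairSet c) (X : redPow H) :
    {Y : redPow H // Y * pairSet b ^ 2 = X * pairSet b ^ 4} ≃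
      {Y' : redPow K // Y' * pairSet c ^ 2 = f X * pairSet c ^ 4} where
  toFun Y := ⟨f Y.val, by
    rw [← hbc, ← map_pow, ← map_mul, ← map_pow, ← map_mul, Y.prop]⟩
  invFun Y' := ⟨f.symm Y'.val, by
    apply f.injective
    rw [map_mul, map_mul, map_pow, map_pow, hbc, MulEquiv.apply_symm_apply]
    exact Y'.prop⟩
  left_inv Y := Subtype.ext (f.symm_apply_apply Y.val)
  right_inv Y' := Subtype.ext (f.apply_symm_apply Y'.val)

end Equivs

section GInf

variable {H K : Type*} [CancelCommMonoid H] [CancelCommMonoid K]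
    [DecidableEq H] [DecidableEq K]

lemma g_inf (f : redPow H ≃* redPow K) (g : H → K)
    (hg : ∀ a : H, f (pairSet a) = pairSet (g a)) {a : H}
    (ha : ∀ n : ℕ, 0 < n → a ^ n ≠ 1) :
    ∀ n : ℕ, 0 < n → (g a) ^ n ≠ 1 := by
  intro m hm habs
  have hchain : chainF (g a) m = chainF (g a) (m - 1) := by
    ext z
    rw [mem_chainF, mem_chainF]
    constructor
    · rintro ⟨i, hi, rfl⟩
      rcases Nat.lt_or_ge i m with h | h
      · exact ⟨i, by omega, rfl⟩
      · have : i = m := by omega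
        subst this
        exact ⟨0, by omega, by rw [habs, pow_zero]⟩
    · rintro ⟨i, hi, rfl⟩
      exact ⟨i, by omega, rfl⟩
  have hPK : (pairSet (g a) : redPow K) ^ m = pairSet (g a) ^ (m - 1) := by
    apply Subtype.ext
    rw [coe_pairSet_pow, coe_pairSet_pow, hchain]
  have hPH : (pairSet a : redPow H) ^ m = pairSet a ^ (m - 1) := by
    apply f.injective
    rw [map_pow, map_pow, hg, hPK]
  have hch : chainF a m = chainF a (m - 1) := by
    rw [← coe_pairSet_pow, ← coe_pairSet_pow, hPH]
  have hmem : a ^ m ∈ chainF a (m - 1) := by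
    rw [← hch, mem_chainF]; exact ⟨m, le_refl _, rfl⟩
  obtain ⟨i, hi, hia⟩ := mem_chainF.1 hmem
  have := pow_inj ha hia
  omega

lemma g_pow (f : redPow H ≃* redPow K) (g : H → K)
    (hg : ∀ a : H, f (pairSet a) = pairSet (g a)) {a : H}
    (ha : ∀ n : ℕ, 0 < n → a ^ n ≠ 1) {j : ℕ} (hj : 1 ≤ j) :
    g (a ^ j) = (g a) ^ j := by
  have hw := g_inf f g hg ha
  have hHid : (pairSet (a ^ j) : redPow H) * pairSet a ^ j = pairSet a ^ (2 * j) := by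
    apply Subtype.ext
    show ((pairSet (a ^ j) : redPow H) : Finset H) * ((pairSet a ^ j : redPow H) : Finset H) = _
    rw [coe_pairSet, coe_pairSet_pow, coe_pairSet_pow]
    ext z
    rw [Finset.mem_mul]
    constructor
    · rintro ⟨u, hu, v, hv, rfl⟩
      obtain ⟨i, hi, rfl⟩ := mem_chainF.1 hv
      rw [Finset.mem_insert, Finset.mem_singleton] at hu
      rw [mem_chainF]
      rcases hu with rfl | rfl
      · exact ⟨i, by omega, by rw [one_mul]⟩
      · exact ⟨j + i, by omega, by rw [pow_add]⟩
    · intro hz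
      obtain ⟨i, hi, rfl⟩ := mem_chainF.1 hz
      rcases Nat.lt_or_ge i (j + 1) with h | h
      · exact ⟨1, by simp, a ^ i, mem_chainF.2 ⟨i, by omega, rfl⟩, by rw [one_mul]⟩
      · exact ⟨a ^ j, by simp, a ^ (i - j), mem_chainF.2 ⟨i - j, by omega, rfl⟩, by
          rw [← pow_add, show j + (i - j) = i by omega]⟩
  set c := g (a ^ j) with hc
  set w := g a with hwdef
  have hKid : (pairSet c : redPow K) * pairSet w ^ j = pairSet w ^ (2 * j) := by
    have := congrArg f hHid
    rw [map_mul, map_pow, map_pow, hg, hg] at this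
    exact this
  have hKfin : ({1, c} : Finset K) * chainF w j = chainF w (2 * j) := by
    have h := congrArg (fun Z : redPow K => (Z : Finset K)) hKid
    simp only [MulMemClass.coe_mul, coe_pairSet, coe_pairSet_pow] at h
    exact h
  have hcmem : c ∈ chainF w (2 * j) := by
    rw [← hKfin, Finset.mem_mul]
    exact ⟨c, by simp, 1, mem_chainF.2 ⟨0, by omega, pow_zero w⟩, mul_one c⟩
  obtain ⟨e, he, hce⟩ := mem_chainF.1 hcmem
  have htop : w ^ (2 * j) ∈ ({1, c} : Finset K) * chainF w j := by
    rw [hKfin, mem_chainF]; exact ⟨2 * j, le_refl _, rfl⟩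
  have hej : j ≤ e := by
    rw [Finset.mem_mul] at htop
    obtain ⟨u, hu, v, hv, huv⟩ := htop
    obtain ⟨i, hi, rfl⟩ := mem_chainF.1 hv
    rw [Finset.mem_insert, Finset.mem_singleton] at hu
    rcases hu with rfl | rfl
    · rw [one_mul] at huv
      have := pow_inj hw huv
      omega
    · rw [← hce, ← pow_add] at huv
      have := pow_inj hw huv
      omega
  have hle : e ≤ j := by
    have hm : c * w ^ j ∈ chainF w (2 * j) := by
      rw [← hKfin, Finset.mem_mul]
      exact ⟨c, by simp, w ^ j, mem_chainF.2 ⟨j, by omega, rfl⟩, rfl⟩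
    obtain ⟨i, hi, hiw⟩ := mem_chainF.1 hm
    rw [← hce, ← pow_add] at hiw
    have := pow_inj hw hiw
    omega
  have : e = j := by omega
  subst this
  exact hce.symm

end GInf

section EG

variable {H K : Type*} [CancelCommMonoid H] [CancelCommMonoid K]
    [DecidableEq H] [DecidableEq K]

lemma bad_subsingleton {M : Type*} [CancelCommMonoid M] [DecidableEq M] {a : M}
    (ha : ∀ n : ℕ, 0 < n → a ^ n ≠ 1) (u v : M) {s : ℕ} (hs : 1 ≤ s) :
    {j : ℕ | a ^ (j * s) * u = v}.Subsingleton := by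
  intro j1 h1 j2 h2
  simp only [Set.mem_setOf_eq] at h1 h2
  have h3 : a ^ (j1 * s) = a ^ (j2 * s) := mul_right_cancel (h1.trans h2.symm)
  have := pow_inj ha h3
  exact Nat.eq_of_mul_eq_mul_right (by omega) this

lemma exists_good {a : H} (ha : ∀ n : ℕ, 0 < n → a ^ n ≠ 1)
    {w : K} (hw : ∀ n : ℕ, 0 < n → w ^ n ≠ 1) (X : Finset H) (Z : Finset K) :
    ∃ j : ℕ, 1 ≤ j ∧ Good (a ^ j) X ∧ Good (w ^ j) Z := by
  classical
  let TH : Set ℕ := ⋃ s ∈ Finset.Icc 1 6, ⋃ u ∈ X, ⋃ v ∈ X, {j : ℕ | a ^ (j * s) * u = v}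
  let TK : Set ℕ := ⋃ s ∈ Finset.Icc 1 6, ⋃ u ∈ Z, ⋃ v ∈ Z, {j : ℕ | w ^ (j * s) * u = v}
  have hTH : TH.Finite := by
    apply Set.Finite.biUnion (Finset.finite_toSet _)
    intro s hs
    apply Set.Finite.biUnion (Finset.finite_toSet _)
    intro u hu
    apply Set.Finite.biUnion (Finset.finite_toSet _)
    intro v hv
    exact Set.Subsingleton.finite (bad_subsingleton ha u v (by
      simp only [Finset.mem_coe, Finset.mem_Icc] at hs; omega))
  have hTK : TK.Finite := by
    apply Set.Finite.biUnion (Finset.finite_toSet _)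
    intro s hs
    apply Set.Finite.biUnion (Finset.finite_toSet _)
    intro u hu
    apply Set.Finite.biUnion (Finset.finite_toSet _)
    intro v hv
    exact Set.Subsingleton.finite (bad_subsingleton hw u v (by
      simp only [Finset.mem_coe, Finset.mem_Icc] at hs; omega))
  have hfin : (TH ∪ TK ∪ {0} : Set ℕ).Finite :=
    (hTH.union hTK).union (Set.finite_singleton 0)
  obtain ⟨j, hj⟩ := hfin.infinite_compl.nonempty
  simp only [Set.mem_compl_iff, Set.mem_union, Set.mem_singleton_iff, not_or] at hj
  obtain ⟨⟨hjH, hjK⟩, hj0⟩ := hj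
  refine ⟨j, by omega, ?_, ?_⟩
  · intro s h1 h6 u hu v hv habs
    apply hjH
    rw [← pow_mul] at habs
    have hsmem : s ∈ (Finset.Icc 1 6 : Finset ℕ) := Finset.mem_Icc.2 ⟨h1, h6⟩
    exact Set.mem_biUnion hsmem
      (Set.mem_biUnion hu (Set.mem_biUnion hv habs))
  · intro s h1 h6 u hu v hv habs
    apply hjK
    rw [← pow_mul] at habs
    have hsmem : s ∈ (Finset.Icc 1 6 : Finset ℕ) := Finset.mem_Icc.2 ⟨h1, h6⟩
    exact Set.mem_biUnion hsmem
      (Set.mem_biUnion hu (Set.mem_biUnion hv habs))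

end EG

section CP

variable {H K : Type*} [CancelCommMonoid H] [CancelCommMonoid K]
    [DecidableEq H] [DecidableEq K]

lemma cardPres (hH : ∃ a : H, ∀ n : ℕ, 0 < n → a ^ n ≠ 1)
    (f : redPow H ≃* redPow K) (g : H → K)
    (hg : ∀ a : H, f (pairSet a) = pairSet (g a))
    (X : redPow H) :
    ((f X : redPow K) : Finset K).card = ((X : redPow H) : Finset H).card := by
  classical
  obtain ⟨a, ha⟩ := hH
  have hw : ∀ n : ℕ, 0 < n → (g a) ^ n ≠ 1 := g_inf f g hg ha
  obtain ⟨j, hj1, hgoodH, hgoodK⟩ :=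
    exists_good ha hw (X : Finset H) ((f X : redPow K) : Finset K)
  have hc : f (pairSet (a ^ j)) = pairSet ((g a) ^ j) := by
    rw [hg, g_pow f g hg ha hj1]
  let E := ((solEquiv (a ^ j) X hgoodH).trans
      ((mapEquiv f (a ^ j) ((g a) ^ j) hc X).trans
        (solEquiv ((g a) ^ j) (f X) hgoodK).symm))
  have hcard := Fintype.card_congr E
  simp only [Fintype.card_coe] at hcard
  rw [Finset.card_powerset, Finset.card_powerset] at hcard
  exact (Nat.pow_right_injective (le_refl 2) hcard).symm

lemma mult_card_eq {M : Type*} [CancelCommMonoid M] [DecidableEq M]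
    (a : M) (X : Finset M) :
    (X.filter (fun bb => a * bb ∈ X)).card + (({1, a} : Finset M) * X).card
      = 2 * X.card := by
  classical
  have h1 : ({1, a} : Finset M) * X = X ∪ X.image (fun t => a * t) := by
    ext z
    rw [Finset.mem_mul]
    constructor
    · rintro ⟨u, hu, v, hv, rfl⟩
      rw [Finset.mem_insert, Finset.mem_singleton] at hu
      rcases hu with rfl | rfl
      · rw [one_mul]; exact Finset.mem_union_left _ hv
      · exact Finset.mem_union_right _ (Finset.mem_image.2 ⟨v, hv, rfl⟩)
    · intro hz
      rcases Finset.mem_union.1 hz with h | h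
      · exact ⟨1, by simp, z, h, one_mul z⟩
      · obtain ⟨t, ht, rfl⟩ := Finset.mem_image.1 h
        exact ⟨a, by simp, t, ht, rfl⟩
  have h2 : (X.filter (fun bb => a * bb ∈ X)).card
      = (X ∩ X.image (fun t => a * t)).card := by
    apply Finset.card_bij (fun bb _ => a * bb)
    · intro bb hbb
      rw [Finset.mem_filter] at hbb
      exact Finset.mem_inter.2 ⟨hbb.2, Finset.mem_image.2 ⟨bb, hbb.1, rfl⟩⟩
    · intro b1 h1' b2 h2' heq
      exact mul_left_cancel heq
    · intro z hz
      rw [Finset.mem_inter] at hz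
      obtain ⟨t, ht, rfl⟩ := Finset.mem_image.1 hz.2
      exact ⟨t, Finset.mem_filter.2 ⟨ht, hz.1⟩, rfl⟩
  have h3 := Finset.card_inter_add_card_union X (X.image (fun t => a * t))
  have h4 : (X.image (fun t => a * t)).card = X.card :=
    Finset.card_image_of_injective _ (mul_right_injective a)
  rw [h1, h2]
  omega

end CP

end Stmt5Aux

/-- `a ≠ 1` is a quotient of `X` of multiplicity `n` (exactly `n` elements `b ∈ X`
satisfy `a * b ∈ X`) if and only if `g a` is a quotient of `f X` of multiplicity `n`. -/
theorem stmt5 {H K : Type*} [CancelCommMonoid H] [CancelCommMonoid K]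
    [DecidableEq H] [DecidableEq K]
    (hH : ∃ a : H, ∀ n : ℕ, 0 < n → a ^ n ≠ 1)
    (hK : ∃ x : K, ∀ n : ℕ, 0 < n → x ^ n ≠ 1)
    (f : redPow H ≃* redPow K) (g : H → K)
    (hg : ∀ a : H, f (pairSet a) = pairSet (g a))
    (X : redPow H) (a : H) (ha : a ≠ 1) (n : ℕ) :
    ((X : Finset H).filter (fun b => a * b ∈ (X : Finset H))).card = n ↔
      (((f X : redPow K) : Finset K).filter
        (fun b => g a * b ∈ ((f X : redPow K) : Finset K))).card = n := by
  classical
  have e1 := Stmt5Aux.mult_card_eq a (X : Finset H)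
  have e2 := Stmt5Aux.mult_card_eq (g a) ((f X : redPow K) : Finset K)
  have e3 : (({1, g a} : Finset K) * ((f X : redPow K) : Finset K))
      = ((f (pairSet a * X) : redPow K) : Finset K) := by
    rw [map_mul, hg, MulMemClass.coe_mul, Stmt5Aux.coe_pairSet]
  have e4 : ((f (pairSet a * X) : redPow K) : Finset K).card
      = ((pairSet a * X : redPow H) : Finset H).card := Stmt5Aux.cardPres hH f g hg _
  have e5 : ((pairSet a * X : redPow H) : Finset H)
      = ({1, a} : Finset H) * (X : Finset H) := by
    rw [MulMemClass.coe_mul, Stmt5Aux.coe_pairSet]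
  have e6 := Stmt5Aux.cardPres hH f g hg X
  rw [e5] at e4
  rw [e3, e4, e6] at e2
  omega
end

section
/- Let H and K be commutative cancellative monoids each with an element of infinite order, f : P_fin,1(H) → P_fin,1(K) an isomorphism with pullback g, a ∈ H of infinite order, and b ∈ H with b^2 = 1_H and b ≠ 1_H. Then g(ab) = g(a)g(b). -/
open scoped Pointwise

lemma pairSet_injective {M : Type*} [Monoid M] [DecidableEq M] :
    Function.Injective (pairSet (M := M)) := by
  intro x y h
  have h' : ({1, x} : Finset M) = {1, y} := congrArg Subtype.val h
  have hx : x ∈ ({1, y} : Finset M) := h' ▸ (by simp)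
  rcases Finset.mem_insert.1 hx with hx1 | hxy
  · have hy : y ∈ ({1, x} : Finset M) := h'.symm ▸ (by simp)
    rcases Finset.mem_insert.1 hy with hy1 | hyx
    · rw [hx1, hy1]
    · exact (Finset.mem_singleton.1 hyx).symm
  · exact Finset.mem_singleton.1 hxy

lemma pairSet_one {M : Type*} [Monoid M] [DecidableEq M] :
    pairSet (1 : M) = 1 := by
  apply Subtype.ext
  simp [pairSet]
  rfl

/-- If `a` has infinite order and `b` has order 2, then the pullback `g` satisfies
`g(ab) = g(a)g(b)`. -/
theorem stmt6 {H K : Type*} [CancelCommMonoid H] [CancelCommMonoid K]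
    [DecidableEq H] [DecidableEq K]
    (hH : ∃ c : H, ∀ n : ℕ, 0 < n → c ^ n ≠ 1)
    (hK : ∃ x : K, ∀ n : ℕ, 0 < n → x ^ n ≠ 1)
    (f : redPow H ≃* redPow K) (g : H → K)
    (hg : ∀ a : H, f (pairSet a) = pairSet (g a))
    (a b : H) (ha : ∀ n : ℕ, 0 < n → a ^ n ≠ 1)
    (hb2 : b ^ 2 = 1) (hb1 : b ≠ 1) :
    g (a * b) = g a * g b := by
  have ginj : Function.Injective g := by
    intro x y h
    apply pairSet_injective
    apply f.injective
    rw [hg, hg, h]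
  have g1 : g 1 = 1 := by
    apply pairSet_injective
    rw [← hg, pairSet_one, map_one, pairSet_one]
  have key : a * b * b = a := by
    rw [mul_assoc, ← pow_two, hb2, mul_one]
  have hset : pairSet (a * b) * pairSet b = pairSet a * pairSet b := by
    apply Subtype.ext
    have e1 : ((pairSet (a*b) * pairSet b : redPow H) : Finset H)
        = ({1, a*b} : Finset H) * {1, b} := rfl
    have e2 : ((pairSet a * pairSet b : redPow H) : Finset H)
        = ({1, a} : Finset H) * {1, b} := rfl
    rw [e1, e2]
    ext x
    simp only [Finset.mem_mul, Finset.mem_insert, Finset.mem_singleton]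
    constructor
    · rintro ⟨y, hy, z, hz, hxyz⟩
      subst hxyz
      rcases hy with hy | hy <;> rcases hz with hz | hz
      · exact ⟨1, Or.inl rfl, 1, Or.inl rfl, by rw [hy, hz]⟩
      · exact ⟨1, Or.inl rfl, b, Or.inr rfl, by rw [hy, hz]⟩
      · exact ⟨a, Or.inr rfl, b, Or.inr rfl, by rw [hy, hz, mul_one]⟩
      · exact ⟨a, Or.inr rfl, 1, Or.inl rfl, by rw [mul_one, hy, hz, key]⟩
    · rintro ⟨y, hy, z, hz, hxyz⟩
      subst hxyz
      rcases hy with hy | hy <;> rcases hz with hz | hz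
      · exact ⟨1, Or.inl rfl, 1, Or.inl rfl, by rw [hy, hz]⟩
      · exact ⟨1, Or.inl rfl, b, Or.inr rfl, by rw [hy, hz]⟩
      · exact ⟨a*b, Or.inr rfl, b, Or.inr rfl, by rw [key, hy, hz, mul_one]⟩
      · exact ⟨a*b, Or.inr rfl, 1, Or.inl rfl, by rw [mul_one, hy, hz]⟩
  have hK' : pairSet (g (a*b)) * pairSet (g b) = pairSet (g a) * pairSet (g b) := by
    rw [← hg, ← hg, ← hg, ← map_mul, ← map_mul, hset]
  have hKv : ({1, g (a*b)} : Finset K) * {1, g b} = ({1, g a} : Finset K) * {1, g b} :=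
    congrArg Subtype.val hK'
  have hmem : g (a*b) ∈ ({1, g a} : Finset K) * {1, g b} := by
    rw [← hKv]
    have : g (a*b) * 1 ∈ ({1, g (a*b)} : Finset K) * {1, g b} :=
      Finset.mul_mem_mul (by simp) (by simp)
    simpa using this
  rw [Finset.mem_mul] at hmem
  obtain ⟨y, hy, z, hz, hyz⟩ := hmem
  simp only [Finset.mem_insert, Finset.mem_singleton] at hy hz
  rcases hy with rfl | rfl <;> rcases hz with rfl | rfl
  · exfalso
    have hab : a * b = 1 := ginj (by simp [← hyz, g1])
    have h2 : a ^ 2 = 1 := by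
      have := congrArg (· ^ 2) hab
      simpa [mul_pow, hb2] using this
    exact ha 2 (by norm_num) h2
  · exfalso
    have hab : a * b = b := ginj (by simp [← hyz])
    have ha1 : a = 1 := by
      have h := hab
      nth_rewrite 2 [← one_mul b] at h
      exact mul_right_cancel h
    exact ha 1 (by norm_num) (by simpa using ha1)
  · exfalso
    have hab : a * b = a := ginj (by simp [← hyz])
    have hb' : b = 1 := by
      have h := hab
      nth_rewrite 2 [← mul_one a] at h
      exact mul_left_cancel h
    exact hb1 hb'
  · exact hyz.symm
end

section
/- Let H and K be commutative cancellative monoids each with an element of infinite order, f : P_fin,1(H) → P_fin,1(K) an isomorphism with pullback g. If a, b ∈ H both have infinite order and a^n = b^m for some nonzero integers n, m (with the relevant powers making sense in the quotient group), then g(ab) = g(a)g(b). -/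
set_option linter.unusedSectionVars false
set_option linter.unusedVariables false

open scoped Pointwise
open Finset

namespace S7Aux

variable {M : Type*} [CommMonoid M] [DecidableEq M]

def PP (x : M) : Finset M := {1, x}

lemma PP_pow (x : M) (k : ℕ) : (PP x) ^ k = (Finset.range (k+1)).image (x ^ ·) := by
  induction k with
  | zero =>
    ext z
    simp [PP]
  | succ n ih =>
    rw [pow_succ, ih]
    ext z
    simp only [Finset.mem_mul, Finset.mem_image, Finset.mem_range, PP, Finset.mem_insert,
      Finset.mem_singleton]
    constructor
    · rintro ⟨u, ⟨i, hi, rfl⟩, w, (rfl | hw), rfl⟩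
      · exact ⟨i, by omega, by simp⟩
      · exact ⟨i+1, by omega, by rw [hw]; exact pow_succ x i⟩
    · rintro ⟨i, hi, rfl⟩
      by_cases h : i ≤ n
      · exact ⟨x ^ i, ⟨i, by omega, rfl⟩, 1, Or.inl rfl, mul_one _⟩
      · have : i = n + 1 := by omega
        subst this
        exact ⟨x ^ n, ⟨n, by omega, rfl⟩, x, Or.inr rfl, (pow_succ x n).symm⟩

lemma mem_PP_pow {x z : M} {k : ℕ} : z ∈ (PP x) ^ k ↔ ∃ i ≤ k, x ^ i = z := by
  rw [PP_pow]
  simp [Nat.lt_succ_iff]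

def Wd (x y z : M) (p q r : ℕ) : Finset M := (PP x) ^ p * (PP y) ^ q * (PP z) ^ r

lemma mem_W {x y z t : M} {p q r : ℕ} :
    t ∈ Wd x y z p q r ↔ ∃ i j k, i ≤ p ∧ j ≤ q ∧ k ≤ r ∧ x ^ i * y ^ j * z ^ k = t := by
  unfold Wd
  constructor
  · intro h
    obtain ⟨u, hu, w, hw, rfl⟩ := Finset.mem_mul.mp h
    obtain ⟨u1, hu1, u2, hu2, rfl⟩ := Finset.mem_mul.mp hu
    obtain ⟨i, hi, rfl⟩ := mem_PP_pow.mp hu1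
    obtain ⟨j, hj, rfl⟩ := mem_PP_pow.mp hu2
    obtain ⟨k, hk, rfl⟩ := mem_PP_pow.mp hw
    exact ⟨i, j, k, hi, hj, hk, rfl⟩
  · rintro ⟨i, j, k, hi, hj, hk, rfl⟩
    exact Finset.mul_mem_mul
      (Finset.mul_mem_mul (mem_PP_pow.mpr ⟨i, hi, rfl⟩) (mem_PP_pow.mpr ⟨j, hj, rfl⟩))
      (mem_PP_pow.mpr ⟨k, hk, rfl⟩)


lemma stabId (x : M) (e : ℕ) (he : 1 ≤ e) (h1 : x ^ e = 1) :
    Wd x x x e 0 0 = Wd x x x (e+1) 0 0 := by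
  ext t
  rw [mem_W, mem_W]
  constructor
  · rintro ⟨i, j, k, hi, hj, hk, rfl⟩
    exact ⟨i, j, k, by omega, hj, hk, rfl⟩
  · rintro ⟨i, j, k, hi, hj, hk, rfl⟩
    obtain rfl : j = 0 := by omega
    obtain rfl : k = 0 := by omega
    by_cases h : i ≤ e
    · exact ⟨i, 0, 0, h, le_refl _, le_refl _, rfl⟩
    · obtain rfl : i = e + 1 := by omega
      refine ⟨1, 0, 0, he, le_refl _, le_refl _, ?_⟩
      simp [pow_succ, h1]

lemma pinId (x : M) (k : ℕ) : Wd (x^k) x x 1 k 0 = Wd x x x (2*k) 0 0 := by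
  ext t
  rw [mem_W, mem_W]
  constructor
  · rintro ⟨e, i, j, he, hi, hj, rfl⟩
    obtain rfl : j = 0 := by omega
    interval_cases e
    · exact ⟨i, 0, 0, by omega, le_refl _, le_refl _, by simp⟩
    · exact ⟨k + i, 0, 0, by omega, le_refl _, le_refl _, by simp [pow_add]⟩
  · rintro ⟨i, j, l, hi, hj, hl, rfl⟩
    obtain rfl : j = 0 := by omega
    obtain rfl : l = 0 := by omega
    by_cases h : i ≤ k
    · exact ⟨0, i, 0, by omega, h, le_refl _, by simp⟩
    · obtain ⟨i', rfl, hi'⟩ : ∃ i', i = k + i' ∧ i' ≤ k := ⟨i - k, by omega, by omega⟩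
      exact ⟨1, i', 0, le_refl _, hi', le_refl _, by simp [pow_add]⟩

lemma invId (x y : M) (h : x * y = 1) : Wd x y y 2 1 0 = Wd (x^2) y y 1 1 0 := by
  have hx2y : x^2 * y = x := by rw [pow_two, mul_assoc, h, mul_one]
  ext t
  rw [mem_W, mem_W]
  constructor
  · rintro ⟨i, j, k, hi, hj, hk, rfl⟩
    obtain rfl : k = 0 := by omega
    interval_cases i <;> interval_cases j
    · exact ⟨0, 0, 0, by omega, by omega, by omega, by simp⟩
    · exact ⟨0, 1, 0, by omega, by omega, by omega, by simp⟩
    · exact ⟨1, 1, 0, by omega, by omega, by omega, by simpa using hx2y⟩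
    · exact ⟨0, 0, 0, by omega, by omega, by omega, by simpa using h.symm⟩
    · exact ⟨1, 0, 0, by omega, by omega, by omega, by simp⟩
    · exact ⟨1, 1, 0, by omega, by omega, by omega, by simp⟩
  · rintro ⟨i, j, k, hi, hj, hk, rfl⟩
    obtain rfl : k = 0 := by omega
    interval_cases i <;> interval_cases j
    · exact ⟨0, 0, 0, by omega, by omega, by omega, by simp⟩
    · exact ⟨0, 1, 0, by omega, by omega, by omega, by simp⟩
    · exact ⟨2, 0, 0, by omega, by omega, by omega, by simp⟩
    · exact ⟨2, 1, 0, by omega, by omega, by omega, by simp⟩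

lemma posId (x y : M) (N M' : ℕ) (h : x^(N+1) = y^M') :
    Wd (x*y) x y 1 N M' = Wd x y y (N+1) (M'+1) 0 := by
  have key : x * y * x^N = y^(M'+1) := by
    rw [show x*y*x^N = x^(N+1)*y from by rw [pow_succ]; ac_rfl, h, ← pow_succ]
  ext t
  rw [mem_W, mem_W]
  constructor
  · rintro ⟨e, i, j, he, hi, hj, rfl⟩
    refine ⟨i + e, j + e, 0, by omega, by omega, le_refl _, ?_⟩
    simp [pow_add, mul_pow, mul_comm, mul_assoc, mul_left_comm]
  · rintro ⟨i, j, k, hi, hj, hk, rfl⟩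
    obtain rfl : k = 0 := by omega
    by_cases hi0 : 1 ≤ i
    · by_cases hj0 : 1 ≤ j
      · obtain ⟨i', rfl⟩ : ∃ i', i = i' + 1 := ⟨i - 1, by omega⟩
        obtain ⟨j', rfl⟩ : ∃ j', j = j' + 1 := ⟨j - 1, by omega⟩
        refine ⟨1, i', j', le_refl _, by omega, by omega, ?_⟩
        simp [pow_succ, mul_comm, mul_assoc, mul_left_comm]
      · obtain rfl : j = 0 := by omega
        by_cases hiN : i ≤ N
        · exact ⟨0, i, 0, by omega, hiN, by omega, by simp⟩
        · obtain rfl : i = N + 1 := by omega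
          exact ⟨0, 0, M', by omega, by omega, le_refl _, by simpa using h.symm⟩
    · obtain rfl : i = 0 := by omega
      by_cases hjM : j ≤ M'
      · exact ⟨0, 0, j, by omega, by omega, hjM, by simp⟩
      · obtain rfl : j = M' + 1 := by omega
        exact ⟨1, N, 0, le_refl _, le_refl _, by omega, by simpa using key⟩

lemma torsId (x y : M) (e : ℕ) (h : (x*y)^(e+1) = 1) :
    Wd ((x*y)^e) x y 1 1 1 = Wd (x*y) ((x*y)^e * y) ((x*y)^e * x) 1 1 1 := by
  have h1 : (x*y) * ((x*y)^e * x) = x := by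
    rw [← mul_assoc, mul_comm (x*y) ((x*y)^e), ← pow_succ, h, one_mul]
  have h2 : (x*y) * ((x*y)^e * y) = y := by
    rw [← mul_assoc, mul_comm (x*y) ((x*y)^e), ← pow_succ, h, one_mul]
  have h3 : ((x*y)^e * y) * ((x*y)^e * x) = (x*y)^e := by
    rw [show ((x*y)^e * y) * ((x*y)^e * x) = (x*y)^e*((x*y)^e*(x*y)) from by ac_rfl,
      ← pow_succ, h, mul_one]
  have h4 : (x*y)^e * x * y = 1 := by rw [mul_assoc, ← pow_succ, h]
  have h5 : (x*y)*((x*y)^e*y)*((x*y)^e*x) = 1 := by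
    rw [show (x*y)*((x*y)^e*y)*((x*y)^e*x) = ((x*y)^e*(x*y))*((x*y)^e*(x*y)) from by ac_rfl,
      ← pow_succ, h, one_mul]
  ext t
  rw [mem_W, mem_W]
  constructor
  · rintro ⟨i, j, k, hi, hj, hk, rfl⟩
    interval_cases i <;> interval_cases j <;> interval_cases k
    · exact ⟨0,0,0, by omega, by omega, by omega, by norm_num⟩
    · exact ⟨1,1,0, by omega, by omega, by omega, by simpa using h2⟩
    · exact ⟨1,0,1, by omega, by omega, by omega, by simpa using h1⟩
    · exact ⟨1,0,0, by omega, by omega, by omega, by norm_num⟩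
    · exact ⟨0,1,1, by omega, by omega, by omega, by simpa using h3⟩
    · exact ⟨0,1,0, by omega, by omega, by omega, by norm_num⟩
    · exact ⟨0,0,1, by omega, by omega, by omega, by norm_num⟩
    · exact ⟨0,0,0, by omega, by omega, by omega, by simpa using h4.symm⟩
  · rintro ⟨i, j, k, hi, hj, hk, rfl⟩
    interval_cases i <;> interval_cases j <;> interval_cases k
    · exact ⟨0,0,0, by omega, by omega, by omega, by norm_num⟩
    · exact ⟨1,1,0, by omega, by omega, by omega, by norm_num⟩
    · exact ⟨1,0,1, by omega, by omega, by omega, by norm_num⟩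
    · exact ⟨1,0,0, by omega, by omega, by omega, by simpa using h3.symm⟩
    · exact ⟨0,1,1, by omega, by omega, by omega, by norm_num⟩
    · exact ⟨0,1,0, by omega, by omega, by omega, by simpa using h1.symm⟩
    · exact ⟨0,0,1, by omega, by omega, by omega, by simpa using h2.symm⟩
    · exact ⟨0,0,0, by omega, by omega, by omega, by simpa using h5.symm⟩


lemma aux_mix1 (x y : M) (e k : ℕ) : ((x*y)^e*y)^k = x^(e*k) * y^(e*k+k) := by
  rw [mul_pow, ← pow_mul, mul_pow, pow_add, mul_assoc]

lemma aux_mix2 (x y : M) (e k : ℕ) : ((x*y)^e*x)^k = x^(e*k+k) * y^(e*k) := by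
  rw [mul_pow, ← pow_mul, mul_pow, pow_add]
  ac_rfl

def InfOrd {α : Type*} [Monoid α] (x : α) : Prop := ∀ k : ℕ, 0 < k → x ^ k ≠ 1

lemma infZ {Γ : Type*} [Group Γ] {X : Γ} (hX : InfOrd X) : ∀ z : ℤ, X ^ z = 1 → z = 0 := by
  intro z hz
  obtain ⟨n, rfl | rfl⟩ := z.eq_nat_or_neg
  · rw [zpow_natCast] at hz
    rcases Nat.eq_zero_or_pos n with h | h
    · simp [h]
    · exact absurd hz (hX n h)
  · rw [zpow_neg, inv_eq_one, zpow_natCast] at hz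
    rcases Nat.eq_zero_or_pos n with h | h
    · simp [h]
    · exact absurd hz (hX n h)

lemma phiZ {Γ : Type*} [CommGroup Γ] {X Y : Γ} (hX : InfOrd X) {N M : ℤ} (h : X ^ N = Y ^ M)
    {u v : ℤ} (huv : X ^ u * Y ^ v = 1) : u * M + v * N = 0 := by
  have h1 : X ^ u = Y ^ (-v) := by
    rw [zpow_neg]
    exact eq_inv_of_mul_eq_one_left ((mul_comm (X^u) (Y^v)) ▸ huv)
  have h2 : X ^ (u * M) = X ^ (-(v * N)) := by
    calc X ^ (u*M) = (X ^ u) ^ M := zpow_mul X u M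
    _ = (Y ^ (-v)) ^ M := by rw [h1]
    _ = (Y ^ M) ^ (-v) := by rw [← zpow_mul, mul_comm, zpow_mul]
    _ = (X ^ N) ^ (-v) := by rw [h]
    _ = X ^ (-(v*N)) := by rw [← zpow_mul, mul_comm N (-v), neg_mul]
  have h3 : X ^ (u * M + v * N) = 1 := by
    rw [zpow_add, h2, zpow_neg, inv_mul_cancel]
  exact infZ hX _ h3


section Ctx

variable {G G' : Type*} [CommGroup G] [CommGroup G'] [DecidableEq G] [DecidableEq G']
  {H : Submonoid G} {K : Submonoid G'}

def Wr (x y z : ↥H) (p q r : ℕ) : redPow H :=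
  (pairSet x) ^ p * (pairSet y) ^ q * (pairSet z) ^ r

lemma Wr_val (x y z : ↥H) (p q r : ℕ) :
    ((Wr x y z p q r : redPow H) : Finset ↥H) = Wd x y z p q r := by
  simp only [Wr, Wd, Submonoid.coe_mul, SubmonoidClass.coe_pow]
  rfl

lemma ftrans (f : redPow H ≃* redPow K) (g : ↥H → ↥K)
    (hg : ∀ a : ↥H, f (pairSet a) = pairSet (g a))
    (x y z : ↥H) (p q r : ℕ) :
    f (Wr x y z p q r) = Wr (g x) (g y) (g z) p q r := by
  simp only [Wr, map_mul, map_pow, hg]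

lemma gW (f : redPow H ≃* redPow K) (g : ↥H → ↥K)
    (hg : ∀ a : ↥H, f (pairSet a) = pairSet (g a))
    {x y z x' y' z' : ↥H} {p q r p' q' r' : ℕ}
    (h : Wd x y z p q r = Wd x' y' z' p' q' r') :
    Wd (g x) (g y) (g z) p q r = Wd (g x') (g y') (g z') p' q' r' := by
  have h2 : Wr x y z p q r = Wr x' y' z' p' q' r' :=
    Subtype.ext (by rw [Wr_val, Wr_val, h])
  have h3 := congrArg f h2
  rw [ftrans f g hg, ftrans f g hg] at h3
  have h4 := congrArg (Subtype.val) h3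
  rwa [Wr_val, Wr_val] at h4

lemma gWrev (f : redPow H ≃* redPow K) (g : ↥H → ↥K)
    (hg : ∀ a : ↥H, f (pairSet a) = pairSet (g a))
    {x y z x' y' z' : ↥H} {p q r p' q' r' : ℕ}
    (h : Wd (g x) (g y) (g z) p q r = Wd (g x') (g y') (g z') p' q' r') :
    Wd x y z p q r = Wd x' y' z' p' q' r' := by
  have h2 : Wr (g x) (g y) (g z) p q r = Wr (g x') (g y') (g z') p' q' r' :=
    Subtype.ext (by rw [Wr_val, Wr_val, h])
  rw [← ftrans f g hg, ← ftrans f g hg] at h2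
  have h3 := f.injective h2
  have h4 := congrArg (Subtype.val) h3
  rwa [Wr_val, Wr_val] at h4

lemma g_one (f : redPow H ≃* redPow K) (g : ↥H → ↥K)
    (hg : ∀ a : ↥H, f (pairSet a) = pairSet (g a)) : g 1 = 1 := by
  have h0 : pairSet (1 : ↥H) = (1 : redPow H) := by
    apply Subtype.ext
    simp [pairSet]
    rfl
  have h1 := hg 1
  rw [h0, map_one] at h1
  have h2 : ((1 : redPow K) : Finset ↥K) = {1, g 1} := by rw [h1]; rfl
  have h3 : g (1:↥H) ∈ ((1 : redPow K) : Finset ↥K) := by rw [h2]; simp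
  have h4 : ((1 : redPow K) : Finset ↥K) = {1} := rfl
  rw [h4, Finset.mem_singleton] at h3
  exact h3

lemma g_inj (f : redPow H ≃* redPow K) (g : ↥H → ↥K)
    (hg : ∀ a : ↥H, f (pairSet a) = pairSet (g a)) : Function.Injective g := by
  intro x y hxy
  have h1 : f (pairSet x) = f (pairSet y) := by rw [hg, hg, hxy]
  have h2 := f.injective h1
  have h3 : ({1, x} : Finset ↥H) = {1, y} := congrArg Subtype.val h2
  have hx : x ∈ ({1, y} : Finset ↥H) := by rw [← h3]; simp
  have hy : y ∈ ({1, x} : Finset ↥H) := by rw [h3]; simp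
  rcases Finset.mem_insert.mp hx with h | h
  · rcases Finset.mem_insert.mp hy with h' | h'
    · rw [h, h']
    · exact (Finset.mem_singleton.mp h').symm
  · exact Finset.mem_singleton.mp h


lemma inford_coe {x : ↥H} (hx : InfOrd x) : InfOrd (x : G) := by
  intro k hk h
  refine hx k hk (Subtype.ext ?_)
  rw [SubmonoidClass.coe_pow]
  exact h

lemma pow_inj {Γ : Type*} [Group Γ] {X : Γ} (hX : InfOrd X) {p q : ℕ} (h : X ^ p = X ^ q) :
    p = q := by
  have h2 : X ^ ((p:ℤ) - q) = 1 := by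
    rw [zpow_sub, zpow_natCast, zpow_natCast, h]
    simp
  have := infZ hX _ h2
  omega

lemma g_inford (f : redPow H ≃* redPow K) (g : ↥H → ↥K)
    (hg : ∀ a : ↥H, f (pairSet a) = pairSet (g a))
    {x : ↥H} (hx : InfOrd x) : InfOrd (g x) := by
  intro e he h1
  have hK := stabId (g x) e he h1
  have hH := gWrev f g hg (x := x) (y := x) (z := x) (x' := x) (y' := x) (z' := x) hK
  have hm : x ^ (e+1) ∈ Wd x x x (e+1) 0 0 :=
    mem_W.mpr ⟨e+1, 0, 0, le_refl _, le_refl _, le_refl _, by simp⟩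
  rw [← hH] at hm
  obtain ⟨i, j, k, hi, hj, hk, heq⟩ := mem_W.mp hm
  obtain rfl : j = 0 := by omega
  obtain rfl : k = 0 := by omega
  simp only [pow_zero, mul_one, one_mul] at heq
  have hGeq : (x:G) ^ i = (x:G) ^ (e+1) := by
    have := congrArg Subtype.val heq
    simpa [SubmonoidClass.coe_pow] using this
  have := pow_inj (inford_coe hx) hGeq
  omega

lemma g_pow (f : redPow H ≃* redPow K) (g : ↥H → ↥K)
    (hg : ∀ a : ↥H, f (pairSet a) = pairSet (g a))
    {x : ↥H} (hx : InfOrd x) (k : ℕ) : g (x ^ k) = (g x) ^ k := by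
  rcases Nat.eq_zero_or_pos k with rfl | hk
  · rw [pow_zero, pow_zero]
    exact g_one f g hg
  have hH := pinId (M := ↥H) x k
  have hK := gW f g hg hH
  set Z := g (x ^ k) with hZ
  set X := g x with hX
  have hXinf : InfOrd (X : G') := inford_coe (g_inford f g hg hx)
  have hmZ : Z ∈ Wd Z X X 1 k 0 := mem_W.mpr ⟨1, 0, 0, le_refl _, by omega, le_refl _, by simp⟩
  rw [hK] at hmZ
  obtain ⟨t, j, l, ht, hj, hl, heqZ⟩ := mem_W.mp hmZ
  obtain rfl : j = 0 := by omega
  obtain rfl : l = 0 := by omega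
  simp only [pow_zero, mul_one, one_mul] at heqZ
  -- heqZ : X ^ t = Z
  have htk : t = k := by
    by_contra hne
    rcases Nat.lt_or_ge t k with hlt | hge
    · -- X^{2k} ∈ LHS
      have hm2 : X ^ (2*k) ∈ Wd X X X (2*k) 0 0 :=
        mem_W.mpr ⟨2*k, 0, 0, le_refl _, le_refl _, le_refl _, by simp⟩
      rw [← hK] at hm2
      obtain ⟨e, i, j, he, hi, hj, heq⟩ := mem_W.mp hm2
      obtain rfl : j = 0 := by omega
      simp only [pow_zero, mul_one, one_mul] at heq
      rw [← heqZ] at heq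
      have heqG : ((X:G') ^ t) ^ e * (X:G') ^ i = (X:G') ^ (2*k) := by
        have := congrArg Subtype.val heq
        simpa [SubmonoidClass.coe_pow, Submonoid.coe_mul] using this
      rw [← pow_mul, ← pow_add] at heqG
      have := pow_inj hXinf heqG
      interval_cases e <;> omega
    · have hgt : k < t := by omega
      have hm2 : Z * X ^ k ∈ Wd Z X X 1 k 0 :=
        mem_W.mpr ⟨1, k, 0, le_refl _, le_refl _, le_refl _, by simp⟩
      rw [hK] at hm2
      obtain ⟨s, j, l, hs, hj, hl, heq⟩ := mem_W.mp hm2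
      obtain rfl : j = 0 := by omega
      obtain rfl : l = 0 := by omega
      simp only [pow_zero, mul_one, one_mul] at heq
      rw [← heqZ] at heq
      have heqG : (X:G') ^ s = (X:G') ^ (t + k) := by
        have := congrArg Subtype.val heq
        simpa [SubmonoidClass.coe_pow, Submonoid.coe_mul, pow_add] using this
      have := pow_inj hXinf heqG
      omega
  rw [htk] at heqZ
  exact heqZ.symm


lemma g_invpair (f : redPow H ≃* redPow K) (g : ↥H → ↥K)
    (hg : ∀ a : ↥H, f (pairSet a) = pairSet (g a))
    {x y : ↥H} (hx : InfOrd x) (hxy : x * y = 1) : (g x) * (g y) = 1 := by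
  have hH := invId (M := ↥H) x y hxy
  have hK := gW f g hg hH
  rw [g_pow f g hg hx 2] at hK
  set X := g x with hXd
  set Y := g y with hYd
  have hXinf : InfOrd X := g_inford f g hg hx
  have hXG : InfOrd (X : G') := inford_coe hXinf
  have hmX : X ∈ Wd X Y Y 2 1 0 := mem_W.mpr ⟨1, 0, 0, by omega, by omega, by omega, by simp⟩
  rw [hK] at hmX
  obtain ⟨e, j, l, he, hj, hl, heq⟩ := mem_W.mp hmX
  obtain rfl : l = 0 := by omega
  simp only [pow_zero, mul_one, one_mul] at heq
  interval_cases e <;> interval_cases j <;> simp only [pow_zero, pow_one, one_mul, mul_one] at heq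
  · exact absurd heq.symm (by simpa using hXinf 1 one_pos)
  · -- Y = X
    have := g_inj f g hg (hYd ▸ hXd ▸ heq)
    rw [this] at hxy
    rw [← pow_two] at hxy
    exact absurd hxy (hx 2 (by omega))
  · -- X^2 = X
    have hG : (X:G') ^ 2 = (X:G') ^ 1 := by
      have := congrArg Subtype.val heq
      simpa [SubmonoidClass.coe_pow] using this
    have := pow_inj hXG hG
    omega
  · -- X^2 * Y = X
    apply Subtype.ext
    have hG : (X:G') ^ 2 * (Y:G') = (X:G') := by
      have := congrArg Subtype.val heq
      simpa [SubmonoidClass.coe_pow, Submonoid.coe_mul] using this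
    have : (X:G') * ((X:G') * (Y:G')) = (X:G') * 1 := by
      rw [mul_one, ← mul_assoc, ← pow_two]
      exact hG
    have h2 := mul_left_cancel this
    simpa [Submonoid.coe_mul] using h2

lemma g_tors (f : redPow H ≃* redPow K) (g : ↥H → ↥K)
    (hg : ∀ a : ↥H, f (pairSet a) = pairSet (g a))
    {x : ↥H} {k : ℕ} (hk : 0 < k) (h1 : x ^ k = 1) : ∃ e : ℕ, 0 < e ∧ (g x) ^ e = 1 := by
  have hH := stabId (M := ↥H) x k hk h1
  have hK := gW f g hg hH
  set X := g x with hXd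
  have hmX : X ^ (k+1) ∈ Wd X X X (k+1) 0 0 :=
    mem_W.mpr ⟨k+1, 0, 0, le_refl _, le_refl _, le_refl _, by simp⟩
  rw [← hK] at hmX
  obtain ⟨i, j, l, hi, hj, hl, heq⟩ := mem_W.mp hmX
  obtain rfl : j = 0 := by omega
  obtain rfl : l = 0 := by omega
  simp only [pow_zero, mul_one, one_mul] at heq
  refine ⟨k + 1 - i, by omega, ?_⟩
  apply Subtype.ext
  have hG : (X:G') ^ i = (X:G') ^ (k+1) := by
    have := congrArg Subtype.val heq
    simpa [SubmonoidClass.coe_pow] using this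
  have h2 : (X:G') ^ i * (X:G') ^ (k+1-i) = (X:G') ^ i * 1 := by
    rw [mul_one, ← pow_add]
    rw [show i + (k+1-i) = k+1 by omega]
    exact hG.symm
  have h3 := mul_left_cancel h2
  simpa [SubmonoidClass.coe_pow] using h3


lemma MPOS (f : redPow H ≃* redPow K) (g : ↥H → ↥K)
    (hg : ∀ a : ↥H, f (pairSet a) = pairSet (g a))
    {a b : ↥H} (ha : InfOrd a) (hb : InfOrd b) (N M : ℕ)
    (hrel : a ^ (N+1) = b ^ (M+1)) : g (a*b) = g a * g b := by
  have hH := posId (M := ↥H) a b N (M+1) hrel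
  have hK := gW f g hg hH
  set c := g (a*b) with hcd
  set A := g a with hAd
  set B := g b with hBd
  have hAinfG : InfOrd (A : G') := inford_coe (g_inford f g hg ha)
  have hrelK : A ^ (N+1) = B ^ (M+1) := by
    rw [hAd, hBd, ← g_pow f g hg ha, ← g_pow f g hg hb, hrel]
  have hrelG : (A:G') ^ (N+1) = (B:G') ^ (M+1) := by
    have := congrArg Subtype.val hrelK
    simpa [SubmonoidClass.coe_pow] using this
  obtain ⟨P, hPd⟩ : ∃ P : ℤ, ((M:ℤ)+1) = P := ⟨_, rfl⟩
  obtain ⟨Q, hQd⟩ : ∃ Q : ℤ, ((N:ℤ)+1) = Q := ⟨_, rfl⟩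
  have hP1 : 1 ≤ P := by omega
  have hQ1 : 1 ≤ Q := by omega
  have hrelZ : (A:G') ^ (Q) = (B:G') ^ (P) := by
    rw [← hPd, ← hQd, show (N:ℤ)+1 = ((N+1 : ℕ):ℤ) by push_cast; ring,
      show (M:ℤ)+1 = ((M+1 : ℕ):ℤ) by push_cast; ring, zpow_natCast, zpow_natCast]
    exact hrelG
  have phi : ∀ u v : ℤ, (A:G')^u * (B:G')^v = 1 → u*P + v*Q = 0 := by
    intro u v huv
    exact phiZ hAinfG hrelZ huv
  have phiEq : ∀ p q p' q' : ℕ, (A:G')^p * (B:G')^q = (A:G')^p' * (B:G')^q' →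
      (p:ℤ)*P + (q:ℤ)*Q = (p':ℤ)*P + (q':ℤ)*Q := by
    intro p q p' q' h
    have hc : (A:G')^(p:ℤ) * (B:G')^(q:ℤ) = (A:G')^(p':ℤ) * (B:G')^(q':ℤ) := by
      simpa [zpow_natCast] using h
    have h1 : (A:G')^((p:ℤ)-p') * (B:G')^((q:ℤ)-q') = 1 := by
      rw [zpow_sub, zpow_sub, mul_mul_mul_comm, hc, ← mul_inv]
      group
    have h2 := phi _ _ h1
    linear_combination h2
  -- representation of c
  have hc : c ∈ Wd c A B 1 N (M+1) :=
    mem_W.mpr ⟨1, 0, 0, le_refl _, by omega, by omega, by simp⟩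
  rw [hK] at hc
  obtain ⟨i0, j0, l0, hi0, hj0, hl0, hc0⟩ := mem_W.mp hc
  obtain rfl : l0 = 0 := by omega
  simp only [pow_zero, mul_one, one_mul] at hc0
  have hc0G : (A:G')^i0 * (B:G')^j0 = (c:G') := by
    have := congrArg Subtype.val hc0
    simpa [SubmonoidClass.coe_pow, Submonoid.coe_mul] using this
  -- K1
  have hm1 : A^(N+1) * B^(M+1+1) ∈ Wd A B B (N+1) (M+1+1) 0 :=
    mem_W.mpr ⟨N+1, M+1+1, 0, le_refl _, le_refl _, le_refl _, by simp⟩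
  rw [← hK] at hm1
  obtain ⟨e1, i1, j1, he1, hi1, hj1, heq1⟩ := mem_W.mp hm1
  have heq1G : (c:G')^e1 * (A:G')^i1 * (B:G')^j1 = (A:G')^(N+1) * (B:G')^(M+2) := by
    have := congrArg Subtype.val heq1
    simpa [SubmonoidClass.coe_pow, Submonoid.coe_mul, show M+1+1 = M+2 by omega] using this
  interval_cases e1
  · -- impossible
    rw [pow_zero, one_mul] at heq1G
    have hcon := phiEq i1 j1 (N+1) (M+2) heq1G
    push_cast at hcon
    have hb1 : (i1:ℤ)*P ≤ (N:ℤ)*P :=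
      mul_le_mul_of_nonneg_right (by omega) (by omega)
    have hb2 : (j1:ℤ)*Q ≤ ((M:ℤ)+1)*Q :=
      mul_le_mul_of_nonneg_right (by omega) (by omega)
    linarith [hcon, hb1, hb2]
  · -- e1 = 1 : c * A^i1 * B^j1 = A^(N+1) B^(M+2)
    rw [pow_one] at heq1G
    have hstar := phiEq (i0+i1) (j0+j1) (N+1) (M+2) (by
      rw [pow_add (A:G') i0 i1, pow_add (B:G') j0 j1,
        show (A:G')^i0*(A:G')^i1*((B:G')^j0*(B:G')^j1)
          = ((A:G')^i0*(B:G')^j0)*((A:G')^i1*(B:G')^j1) from by ac_rfl, hc0G, ← mul_assoc]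
      exact heq1G)
    -- K2
    have hm2 : c * A^N * B^(M+1) ∈ Wd c A B 1 N (M+1) :=
      mem_W.mpr ⟨1, N, M+1, le_refl _, le_refl _, le_refl _, by simp⟩
    rw [hK] at hm2
    obtain ⟨i2, j2, l2, hi2, hj2, hl2, heq2⟩ := mem_W.mp hm2
    obtain rfl : l2 = 0 := by omega
    simp only [pow_zero, mul_one, one_mul] at heq2
    have heq2G : (A:G')^i2 * (B:G')^j2 = (c:G') * (A:G')^N * (B:G')^(M+1) := by
      have := congrArg Subtype.val heq2
      simpa [SubmonoidClass.coe_pow, Submonoid.coe_mul] using this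
    have hstar2 := phiEq i2 j2 (i0+N) (j0+(M+1)) (by
      rw [pow_add (A:G') i0 N, pow_add (B:G') j0 (M+1),
        show (A:G')^i0*(A:G')^N*((B:G')^j0*(B:G')^(M+1))
          = ((A:G')^i0*(B:G')^j0)*((A:G')^N*(B:G')^(M+1)) from by ac_rfl, hc0G, ← mul_assoc]
      exact heq2G)
    push_cast at hstar hstar2
    have hb3 : (i2:ℤ)*P ≤ ((N:ℤ)+1)*P :=
      mul_le_mul_of_nonneg_right (by omega) (by omega)
    have hb4 : (j2:ℤ)*Q ≤ ((M:ℤ)+2)*Q :=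
      mul_le_mul_of_nonneg_right (by omega) (by omega)
    have haux : (i0:ℤ)*P + (j0:ℤ)*Q ≤ P + Q := by linarith [hstar2, hb3, hb4]
    have hnn1 : 0 ≤ ((N:ℤ) - i1) * P := mul_nonneg (by omega) (by omega)
    have hnn2 : 0 ≤ (((M:ℤ)+1) - j1) * Q := mul_nonneg (by omega) (by omega)
    have hdi : ((N:ℤ) - i1) * P = 0 := by linarith [hstar, haux, hnn1, hnn2]
    have hdj : (((M:ℤ)+1) - j1) * Q = 0 := by linarith [hstar, haux, hnn1, hnn2]
    have hi1N : i1 = N := by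
      rcases mul_eq_zero.mp hdi with h | h
      · omega
      · omega
    have hj1M : j1 = M+1 := by
      rcases mul_eq_zero.mp hdj with h | h
      · omega
      · omega
    rw [hi1N, hj1M] at heq1G
    -- c * A^N * B^(M+1) = A^(N+1) * B^(M+2) ⇒ c = A*B
    have hfin : (c:G') * ((A:G')^N * (B:G')^(M+1))
        = ((A:G') * (B:G')) * ((A:G')^N * (B:G')^(M+1)) := by
      rw [← mul_assoc, heq1G, pow_succ, pow_succ]
      ac_rfl
    have hcAB := mul_right_cancel hfin
    apply Subtype.ext
    simpa [Submonoid.coe_mul] using hcAB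


lemma pow_inford {α : Type*} [Monoid α] {x : α} (hx : InfOrd x) {p : ℕ} (hp : 0 < p) :
    InfOrd (x ^ p) := by
  intro k hk h
  rw [← pow_mul] at h
  exact hx (p*k) (by positivity) h

lemma NEGlt (f : redPow H ≃* redPow K) (g : ↥H → ↥K)
    (hg : ∀ a : ↥H, f (pairSet a) = pairSet (g a))
    {a b : ↥H} (ha : InfOrd a) (hb : InfOrd b) (P Q : ℕ)
    (hP : 1 ≤ P) (hPQ : P < Q) (hrel : a^P * b^Q = 1) : g (a*b) = g a * g b := by
  have hrelG : (a:G)^P * (b:G)^Q = 1 := by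
    have := congrArg Subtype.val hrel
    simpa [SubmonoidClass.coe_pow, Submonoid.coe_mul] using this
  have haG : InfOrd (a:G) := inford_coe ha
  have hrelZ : (a:G)^(P:ℤ) = (b:G)^(-(Q:ℤ)) := by
    rw [zpow_neg, zpow_natCast, zpow_natCast]
    exact mul_eq_one_iff_eq_inv.mp hrelG
  have phiH : ∀ u v : ℤ, (a:G)^u * (b:G)^v = 1 → u*(Q:ℤ) = v*(P:ℤ) := by
    intro u v huv
    have := phiZ haG hrelZ huv
    linarith
  -- a*b has infinite order
  have hab_inf : InfOrd (a*b : ↥H) := by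
    intro k hk h1
    have h1G : (a:G)^k * (b:G)^k = 1 := by
      have := congrArg Subtype.val h1
      simpa [SubmonoidClass.coe_pow, Submonoid.coe_mul, mul_pow] using this
    have := phiH k k (by exact_mod_cast h1G)
    have hk0 : (k:ℤ) = 0 := by
      rcases mul_eq_zero.mp (show (k:ℤ)*((Q:ℤ)-(P:ℤ)) = 0 by linarith) with h | h
      · exact h
      · omega
    omega
  -- A^P B^Q = 1
  have hABK : (g a)^P * (g b)^Q = 1 := by
    rw [← g_pow f g hg ha, ← g_pow f g hg hb]
    exact g_invpair f g hg (pow_inford ha hP) hrel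
  -- w = a^P * b
  have hw_eq : (a^P * b : ↥H) * b^(Q-1) = 1 := by
    rw [mul_assoc, ← pow_succ', show Q-1+1 = Q by omega]
    exact hrel
  have hw_inf : InfOrd (a^P * b : ↥H) := by
    intro k hk h1
    have h1G : (a:G)^(P*k) * (b:G)^k = 1 := by
      have := congrArg Subtype.val h1
      simpa [SubmonoidClass.coe_pow, Submonoid.coe_mul, mul_pow, pow_mul] using this
    have := phiH (P*k) k (by exact_mod_cast h1G)
    have : (k:ℤ)*((P:ℤ)*(Q:ℤ) - (P:ℤ)) = 0 := by push_cast at this ⊢; linarith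
    rcases mul_eq_zero.mp this with h | h
    · omega
    · have hPQ2 : 2 ≤ Q := by omega
      nlinarith [h]
  have hgw : g (a^P * b) * (g b)^(Q-1) = 1 := by
    rw [← g_pow f g hg hb]
    exact g_invpair f g hg hw_inf hw_eq
  set c := g (a*b) with hcd
  set A := g a with hAd
  set B := g b with hBd
  have hgwG : (g (a^P*b) : G') * (B:G')^(Q-1) = 1 := by
    have := congrArg Subtype.val hgw
    simpa [SubmonoidClass.coe_pow, Submonoid.coe_mul] using this
  have hABG : (A:G')^P * (B:G')^Q = 1 := by
    have := congrArg Subtype.val hABK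
    simpa [SubmonoidClass.coe_pow, Submonoid.coe_mul] using this
  rcases Nat.lt_or_ge P 2 with hP1 | hP2
  · -- P = 1
    obtain rfl : P = 1 := by omega
    have hw' : (a^1*b : ↥H) = a*b := by rw [pow_one]
    rw [hw'] at hgwG
    rw [pow_one] at hABG
    have hfin : (c:G') * (B:G')^(Q-1) = ((A:G')*(B:G')) * (B:G')^(Q-1) := by
      rw [hgwG, mul_assoc, ← pow_succ', show Q-1+1 = Q by omega]
      exact hABG.symm
    have hcc := mul_right_cancel hfin
    apply Subtype.ext
    simpa [Submonoid.coe_mul] using hcc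
  · -- P ≥ 2
    have hbQ : (b:G)^(Q:ℤ) = (a:G)^(-(P:ℤ)) := by
      rw [zpow_neg, zpow_natCast, zpow_natCast]
      exact mul_eq_one_iff_eq_inv.mp (by rw [mul_comm]; exact hrelG)
    have keyZ : ((a:G)*(b:G))^(((P:ℤ)-1)*(Q:ℤ)) = ((a:G))^(((P:ℤ)-1)*((Q:ℤ)-(P:ℤ))) := by
      rw [mul_zpow]
      rw [show ((P:ℤ)-1)*(Q:ℤ) = (Q:ℤ)*((P:ℤ)-1) by ring, zpow_mul (b:G), hbQ, ← zpow_mul,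
        ← zpow_add]
      congr 1
      ring
    have c1 : ((P-1:ℕ):ℤ) = (P:ℤ)-1 := by omega
    have c2 : ((Q-P:ℕ):ℤ) = (Q:ℤ)-(P:ℤ) := by omega
    have keyN : ((a:G)*(b:G))^((P-1)*Q) = ((a:G))^((P-1)*(Q-P)) := by
      have e1 : (((P-1)*Q : ℕ):ℤ) = ((P:ℤ)-1)*(Q:ℤ) := by rw [← c1]; push_cast; ring
      have e2 : (((P-1)*(Q-P) : ℕ):ℤ) = ((P:ℤ)-1)*((Q:ℤ)-(P:ℤ)) := by
        rw [← c1, ← c2]; push_cast; ring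
      have := keyZ
      rw [← e1, ← e2, zpow_natCast, zpow_natCast] at this
      exact this
    have keyH : (a*b)^((P-1)*Q) = (a^(P-1))^(Q-P) := by
      apply Subtype.ext
      rw [SubmonoidClass.coe_pow, SubmonoidClass.coe_pow, SubmonoidClass.coe_pow,
        Submonoid.coe_mul, ← pow_mul]
      exact keyN
    have hy_inf : InfOrd (a^(P-1) : ↥H) := pow_inford ha (by omega)
    have hposPQ : 0 < (P-1)*Q := Nat.mul_pos (by omega) (by omega)
    have hmp := MPOS f g hg hab_inf hy_inf ((P-1)*Q-1) (Q-P-1) (by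
      rw [show (P-1)*Q-1+1 = (P-1)*Q by omega, show Q-P-1+1 = Q-P by omega]
      exact keyH)
    have hprod : (a*b)*a^(P-1) = a^P*b := by
      apply Subtype.ext
      rw [Submonoid.coe_mul, Submonoid.coe_mul, Submonoid.coe_mul, SubmonoidClass.coe_pow,
        SubmonoidClass.coe_pow]
      rw [show (a:G)*(b:G)*(a:G)^(P-1) = (a:G)*(a:G)^(P-1)*(b:G) from by ac_rfl,
        ← pow_succ', show P-1+1 = P by omega]
    rw [hprod, g_pow f g hg ha] at hmp
    -- hmp : g (a^P*b) = c * A^(P-1)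
    have hmpG : (g (a^P*b) : G') = (c:G') * (A:G')^(P-1) := by
      have := congrArg Subtype.val hmp
      simpa [Submonoid.coe_mul, SubmonoidClass.coe_pow] using this
    have hL : (c:G') * ((A:G')^(P-1)*(B:G')^(Q-1)) = 1 := by
      rw [← mul_assoc, ← hmpG]
      exact hgwG
    have hR : ((A:G')*(B:G')) * ((A:G')^(P-1)*(B:G')^(Q-1)) = 1 := by
      rw [show ((A:G')*(B:G'))*((A:G')^(P-1)*(B:G')^(Q-1))
          = ((A:G')*(A:G')^(P-1))*((B:G')*(B:G')^(Q-1)) from by ac_rfl,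
        ← pow_succ', ← pow_succ', show P-1+1 = P by omega, show Q-1+1 = Q by omega]
      exact hABG
    have hfin : (c:G') * ((A:G')^(P-1)*(B:G')^(Q-1))
        = ((A:G')*(B:G')) * ((A:G')^(P-1)*(B:G')^(Q-1)) := by rw [hL, hR]
    have hcc := mul_right_cancel hfin
    apply Subtype.ext
    simpa [Submonoid.coe_mul] using hcc


lemma N2 (f : redPow H ≃* redPow K) (g : ↥H → ↥K)
    (hg : ∀ a : ↥H, f (pairSet a) = pairSet (g a))
    {a b : ↥H} (ha : InfOrd a) (hb : InfOrd b) (d : ℕ) (hd2 : 2 ≤ d)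
    (hd : (a*b)^d = 1) (hdm : (a*b)^(d-1) ≠ 1) : g (a*b) = g a * g b := by
  obtain ⟨e, rfl⟩ : ∃ e, d = e + 1 := ⟨d-1, by omega⟩
  have he1 : 1 ≤ e := by omega
  rw [show e+1-1 = e by omega] at hdm
  -- relation a^d b^d = 1
  have hab : a^(e+1) * b^(e+1) = 1 := by rw [← mul_pow]; exact hd
  have haG : InfOrd (a:G) := inford_coe ha
  have habG : (a:G)^(e+1) * (b:G)^(e+1) = 1 := by
    have := congrArg Subtype.val hab
    simpa [SubmonoidClass.coe_pow, Submonoid.coe_mul] using this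
  have hrelZ : (a:G)^((e:ℤ)+1) = (b:G)^(-((e:ℤ)+1)) := by
    rw [zpow_neg, show (e:ℤ)+1 = ((e+1 : ℕ):ℤ) by push_cast; ring, zpow_natCast, zpow_natCast]
    exact mul_eq_one_iff_eq_inv.mp habG
  have phiH : ∀ u v : ℤ, (a:G)^u * (b:G)^v = 1 → u = v := by
    intro u v huv
    have := phiZ haG hrelZ huv
    have he0 : 0 < (e:ℤ)+1 := by omega
    nlinarith [this]
  -- u1 = (ab)^e b, u2 = (ab)^e a
  have hu1a : ((a*b)^e*b) * a = 1 := by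
    rw [mul_assoc, mul_comm (b : ↥H) a, ← pow_succ]
    exact hd
  have hu2b : ((a*b)^e*a) * b = 1 := by
    rw [mul_assoc, ← pow_succ]
    exact hd
  have hu1_inf : InfOrd ((a*b)^e*b : ↥H) := by
    intro k hk h1
    rw [aux_mix1] at h1
    have h1G : (a:G)^(e*k) * (b:G)^(e*k+k) = 1 := by
      have := congrArg Subtype.val h1
      simpa [SubmonoidClass.coe_pow, Submonoid.coe_mul] using this
    have := phiH (e*k) (e*k+k) (by exact_mod_cast h1G)
    omega
  have hu2_inf : InfOrd ((a*b)^e*a : ↥H) := by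
    intro k hk h1
    rw [aux_mix2] at h1
    have h1G : (a:G)^(e*k+k) * (b:G)^(e*k) = 1 := by
      have := congrArg Subtype.val h1
      simpa [SubmonoidClass.coe_pow, Submonoid.coe_mul] using this
    have := phiH (e*k+k) (e*k) (by exact_mod_cast h1G)
    omega
  -- K side facts
  set C := g (a*b) with hCd
  set A := g a with hAd
  set B := g b with hBd
  set Y1 := g ((a*b)^e*b) with hY1d
  set Y2 := g ((a*b)^e*a) with hY2d
  have h1K : Y1 * A = 1 := g_invpair f g hg hu1_inf hu1a
  have h2K : Y2 * B = 1 := g_invpair f g hg hu2_inf hu2b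
  have hABd : A^(e+1) * B^(e+1) = 1 := by
    rw [hAd, hBd, ← g_pow f g hg ha, ← g_pow f g hg hb]
    exact g_invpair f g hg (pow_inford ha (by omega)) hab
  have hAinfG : InfOrd (A:G') := inford_coe (g_inford f g hg ha)
  have hABdG : (A:G')^(e+1) * (B:G')^(e+1) = 1 := by
    have := congrArg Subtype.val hABd
    simpa [SubmonoidClass.coe_pow, Submonoid.coe_mul] using this
  have hrelZK : (A:G')^((e:ℤ)+1) = (B:G')^(-((e:ℤ)+1)) := by
    rw [zpow_neg, show (e:ℤ)+1 = ((e+1 : ℕ):ℤ) by push_cast; ring, zpow_natCast, zpow_natCast]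
    exact mul_eq_one_iff_eq_inv.mp hABdG
  have phiK : ∀ u v : ℤ, (A:G')^u * (B:G')^v = 1 → u = v := by
    intro u v huv
    have := phiZ hAinfG hrelZK huv
    have he0 : 0 < (e:ℤ)+1 := by omega
    nlinarith [this]
  have hY1G : (Y1:G') = (A:G')⁻¹ := by
    have := congrArg Subtype.val h1K
    rw [Submonoid.coe_mul] at this
    exact mul_eq_one_iff_eq_inv.mp this
  have hY2G : (Y2:G') = (B:G')⁻¹ := by
    have := congrArg Subtype.val h2K
    rw [Submonoid.coe_mul] at this
    exact mul_eq_one_iff_eq_inv.mp this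
  obtain ⟨eC, heC0, heC⟩ := g_tors f g hg (show 0 < e+1 by omega) hd
  have heCG : (C:G')^eC = 1 := by
    have := congrArg Subtype.val heC
    simpa [SubmonoidClass.coe_pow] using this
  -- the identity
  have hH := torsId (M := ↥H) a b e hd
  have hK := gW f g hg hH
  have hmA : A ∈ Wd (g ((a*b)^e)) A B 1 1 1 :=
    mem_W.mpr ⟨0, 1, 0, by omega, le_refl _, by omega, by simp⟩
  rw [hK] at hmA
  obtain ⟨e1, e2, e3, he1, he2, he3, heq⟩ := mem_W.mp hmA
  have heqG : (C:G')^e1 * (Y1:G')^e2 * (Y2:G')^e3 = (A:G') := by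
    have := congrArg Subtype.val heq
    simpa [SubmonoidClass.coe_pow, Submonoid.coe_mul] using this
  rw [hY1G, hY2G] at heqG
  interval_cases e1 <;> interval_cases e2 <;> interval_cases e3 <;>
    simp only [pow_zero, pow_one, one_mul, mul_one] at heqG
  · -- 1 = A
    exact absurd (by rw [pow_one]; exact heqG.symm) (hAinfG 1 one_pos)
  · -- B⁻¹ = A
    exfalso
    have hBA : (B:G') = (A:G')⁻¹ := by rw [← heqG]; simp
    have hY1B : (Y1:G') = (B:G') := by rw [hY1G, hBA]
    have : Y1 = B := Subtype.val_injective hY1B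
    rw [hY1d, hBd] at this
    have := g_inj f g hg this
    have hτ : ((a*b)^e : ↥H) = 1 := by
      have hG := congrArg Subtype.val this
      rw [Submonoid.coe_mul] at hG
      apply Subtype.ext
      have := mul_right_cancel (hG.trans (one_mul (b:G)).symm)
      simpa using this
    exact hdm hτ
  · -- A⁻¹ = A
    exfalso
    have : (A:G')^2 = 1 := by
      rw [pow_two]
      nth_rewrite 1 [← heqG]
      exact inv_mul_cancel _
    exact hAinfG 2 (by omega) this
  · -- A⁻¹ * B⁻¹ = A
    exfalso
    have h2 : (A:G')^(2:ℤ) * (B:G')^(1:ℤ) = 1 := by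
      rw [show (2:ℤ) = 1+1 by ring, zpow_add, zpow_one, zpow_one]
      rw [show (A:G')*(A:G')*(B:G') = ((A:G')*(B:G'))*(A:G') from by ac_rfl]
      rw [show (A:G')*(B:G') = ((A:G')⁻¹*(B:G')⁻¹)⁻¹ from by simp [mul_inv, mul_comm]]
      rw [heqG]
      simp
    have := phiK 2 1 h2
    omega
  · -- C = A
    exfalso
    have : C = A := Subtype.val_injective heqG
    rw [hCd, hAd] at this
    have := g_inj f g hg this
    have hb1 : (b : ↥H) = 1 := by
      apply Subtype.ext
      have hG := congrArg Subtype.val this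
      rw [Submonoid.coe_mul] at hG
      have : (a:G) * (b:G) = (a:G) * 1 := by rw [mul_one]; exact hG
      simpa using mul_left_cancel this
    exact hb (1:ℕ) one_pos (by rw [pow_one]; exact hb1)
  · -- C * B⁻¹ = A : goal case
    have hCG : (C:G') = (A:G') * (B:G') := by
      have : (C:G') * (B:G')⁻¹ * (B:G') = (A:G') * (B:G') := by rw [heqG]
      rw [mul_assoc, inv_mul_cancel, mul_one] at this
      exact this
    apply Subtype.val_injective
    rw [Submonoid.coe_mul]
    exact hCG
  · -- C * A⁻¹ = A
    exfalso
    have hCG : (C:G') = (A:G')^2 := by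
      have : (C:G') * (A:G')⁻¹ * (A:G') = (A:G') * (A:G') := by rw [heqG]
      rw [mul_assoc, inv_mul_cancel, mul_one, ← pow_two] at this
      exact this
    have : (A:G')^(2*eC) = 1 := by
      rw [pow_mul, ← hCG]
      exact heCG
    exact hAinfG (2*eC) (by omega) this
  · -- C * A⁻¹ * B⁻¹ = A
    exfalso
    have hCG : (C:G') = (A:G')^2 * (B:G') := by
      have h0 : (C:G') * (A:G')⁻¹ * (B:G')⁻¹ * ((B:G')*(A:G')) = (A:G') * ((B:G')*(A:G')) := by
        rw [heqG]
      rw [show (C:G') * (A:G')⁻¹ * (B:G')⁻¹ * ((B:G')*(A:G'))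
          = (C:G') * ((A:G')⁻¹ * (A:G')) * ((B:G')⁻¹*(B:G')) from by ac_rfl,
        inv_mul_cancel, inv_mul_cancel, mul_one, mul_one] at h0
      rw [h0, pow_two]
      ac_rfl
    have h2 : (A:G')^((2*eC : ℕ):ℤ) * (B:G')^((eC:ℕ):ℤ) = 1 := by
      rw [zpow_natCast, zpow_natCast]
      have : ((A:G')^2 * (B:G'))^eC = 1 := by rw [← hCG]; exact heCG
      rw [mul_pow, ← pow_mul, mul_comm 2 eC] at this
      rw [mul_comm 2 eC]
      exact this
    have h3 := phiK _ _ h2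
    push_cast at h3
    omega


lemma NEGall (f : redPow H ≃* redPow K) (g : ↥H → ↥K)
    (hg : ∀ a : ↥H, f (pairSet a) = pairSet (g a))
    {a b : ↥H} (ha : InfOrd a) (hb : InfOrd b) (P Q : ℕ)
    (hP : 1 ≤ P) (hQ : 1 ≤ Q) (hrel : a^P * b^Q = 1) : g (a*b) = g a * g b := by
  rcases lt_trichotomy P Q with h | h | h
  · exact NEGlt f g hg ha hb P Q hP h hrel
  · subst h
    by_cases habt : a*b = 1
    · rw [habt, g_one f g hg]
      exact (g_invpair f g hg ha habt).symm
    · have hdP : (a*b)^P = 1 := by rw [mul_pow]; exact hrel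
      have hex : ∃ t, 0 < t ∧ (a*b)^t = 1 := ⟨P, by omega, hdP⟩
      have hspec := Nat.find_spec hex
      have hd2 : 2 ≤ Nat.find hex := by
        by_contra h2
        have hd1 : Nat.find hex = 1 := by omega
        rw [hd1] at hspec
        exact habt (by simpa using hspec.2)
      have hdm : (a*b)^(Nat.find hex - 1) ≠ 1 := by
        intro hcon
        exact Nat.find_min hex (show Nat.find hex - 1 < Nat.find hex by omega)
          ⟨by omega, hcon⟩
      exact N2 f g hg ha hb (Nat.find hex) hd2 hspec.2 hdm
  · have hthis := NEGlt f g hg hb ha Q P hQ h (by rw [mul_comm]; exact hrel)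
    rw [mul_comm a b, hthis, mul_comm (g b) (g a)]

end Ctx

end S7Aux

/-- If `a, b` have infinite order and satisfy a relation `a^n = b^m` (in the quotient
group, with `n, m` nonzero integers), then the pullback satisfies `g(ab) = g(a)g(b)`.
Here the commutative cancellative monoids are realized as submonoids `H ≤ G`, `K ≤ G'`
of abelian groups, so that integer powers make sense. -/
theorem stmt7 {G G' : Type*} [CommGroup G] [CommGroup G'] [DecidableEq G] [DecidableEq G']
    (H : Submonoid G) (K : Submonoid G')
    (hH : ∃ c : H, ∀ n : ℕ, 0 < n → c ^ n ≠ 1)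
    (hK : ∃ x : K, ∀ n : ℕ, 0 < n → x ^ n ≠ 1)
    (f : redPow H ≃* redPow K) (g : H → K)
    (hg : ∀ a : H, f (pairSet a) = pairSet (g a))
    (a b : H) (ha : ∀ n : ℕ, 0 < n → a ^ n ≠ 1) (hb : ∀ n : ℕ, 0 < n → b ^ n ≠ 1)
    (n m : ℤ) (hn : n ≠ 0) (hm : m ≠ 0) (hrel : (a : G) ^ n = (b : G) ^ m) :
    g (a * b) = g a * g b := by
  have ha' : S7Aux.InfOrd a := ha
  have hb' : S7Aux.InfOrd b := hb
  rcases lt_trichotomy 0 n with hn1 | hn1 | hn1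
  · rcases lt_trichotomy 0 m with hm1 | hm1 | hm1
    · -- n > 0, m > 0
      have h1 : a ^ (n.toNat) = b ^ (m.toNat) := by
        apply Subtype.ext
        rw [SubmonoidClass.coe_pow, SubmonoidClass.coe_pow, ← zpow_natCast, ← zpow_natCast,
          Int.toNat_of_nonneg (by omega : (0:ℤ) ≤ n), Int.toNat_of_nonneg (by omega : (0:ℤ) ≤ m)]
        exact hrel
      exact S7Aux.MPOS f g hg ha' hb' (n.toNat - 1) (m.toNat - 1) (by
        rw [show n.toNat-1+1 = n.toNat by omega, show m.toNat-1+1 = m.toNat by omega]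
        exact h1)
    · exact absurd hm1.symm hm
    · -- n > 0, m < 0
      have h1 : a ^ (n.toNat) * b ^ ((-m).toNat) = 1 := by
        apply Subtype.ext
        rw [Submonoid.coe_mul, SubmonoidClass.coe_pow, SubmonoidClass.coe_pow,
          ← zpow_natCast, ← zpow_natCast,
          Int.toNat_of_nonneg (by omega : (0:ℤ) ≤ n), Int.toNat_of_nonneg (by omega : (0:ℤ) ≤ -m)]
        rw [hrel, ← zpow_add, add_neg_cancel, zpow_zero]
        simp
      exact S7Aux.NEGall f g hg ha' hb' n.toNat (-m).toNat (by omega) (by omega) h1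
  · exact absurd hn1.symm hn
  · rcases lt_trichotomy 0 m with hm1 | hm1 | hm1
    · -- n < 0, m > 0
      have h1 : a ^ ((-n).toNat) * b ^ (m.toNat) = 1 := by
        apply Subtype.ext
        rw [Submonoid.coe_mul, SubmonoidClass.coe_pow, SubmonoidClass.coe_pow,
          ← zpow_natCast, ← zpow_natCast,
          Int.toNat_of_nonneg (by omega : (0:ℤ) ≤ -n), Int.toNat_of_nonneg (by omega : (0:ℤ) ≤ m)]
        rw [zpow_neg, hrel, inv_mul_cancel]
        simp
      exact S7Aux.NEGall f g hg ha' hb' (-n).toNat m.toNat (by omega) (by omega) h1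
    · exact absurd hm1.symm hm
    · -- n < 0, m < 0
      have h1 : a ^ ((-n).toNat) = b ^ ((-m).toNat) := by
        apply Subtype.ext
        rw [SubmonoidClass.coe_pow, SubmonoidClass.coe_pow, ← zpow_natCast, ← zpow_natCast,
          Int.toNat_of_nonneg (by omega : (0:ℤ) ≤ -n), Int.toNat_of_nonneg (by omega : (0:ℤ) ≤ -m)]
        rw [zpow_neg, zpow_neg, hrel]
      exact S7Aux.MPOS f g hg ha' hb' ((-n).toNat - 1) ((-m).toNat - 1) (by
        rw [show (-n).toNat-1+1 = (-n).toNat by omega, show (-m).toNat-1+1 = (-m).toNat by omega]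
        exact h1)
end

section
/- Let H and K be commutative cancellative monoids each with an element of infinite order, and f : P_fin,1(H) → P_fin,1(K) an isomorphism with pullback g. If a ∈ H is a non-trivial unit of infinite order, then a is not reversed under f, i.e., f({1_H, a, a^3}) = {1_K, g(a), g(a)^3} (and not {1_K, g(a)^2, g(a)^3}). -/
open scoped Pointwise

/-- The element `{1, x, y}` of the reduced finitary power monoid. -/
def tripSet {M : Type*} [Monoid M] [DecidableEq M] (x y : M) : redPow M :=
  ⟨{1, x, y}, by simp [redPow]⟩

section aux
variable {M : Type*} [CancelCommMonoid M] [DecidableEq M]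

/-- image of a finite set of naturals under powers of `x` -/
def nset (x : M) (S : Finset ℕ) : Finset M := S.image (x ^ ·)

lemma nset_mul (x : M) (S T : Finset ℕ) : nset x S * nset x T = nset x (S + T) := by
  ext z
  simp only [nset, Finset.mem_mul, Finset.mem_image, Finset.mem_add]
  constructor
  · rintro ⟨y, ⟨s, hs, rfl⟩, w, ⟨t, ht, rfl⟩, rfl⟩
    exact ⟨s + t, ⟨s, hs, t, ht, rfl⟩, (pow_add x s t)⟩
  · rintro ⟨k, ⟨s, hs, t, ht, rfl⟩, rfl⟩
    exact ⟨x ^ s, ⟨s, hs, rfl⟩, x ^ t, ⟨t, ht, rfl⟩, (pow_add x s t).symm⟩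

lemma nset_pow (x : M) (S : Finset ℕ) (n : ℕ) : (nset x S) ^ n = nset x (n • S) := by
  induction n with
  | zero => simp [nset]; rfl
  | succ n ih =>
    rw [pow_succ, ih, nset_mul, succ_nsmul]

lemma pow_inj_of_infinite {x : M} (hx : ∀ n : ℕ, 0 < n → x ^ n ≠ 1) :
    Function.Injective (fun n : ℕ => x ^ n) := by
  have key : ∀ m n : ℕ, m < n → x ^ m ≠ x ^ n := by
    intro m n hmn h
    have h1 : x ^ n = x ^ m * x ^ (n - m) := by
      rw [← pow_add]
      congr 1
      omega
    have h2 : x ^ m * x ^ (n - m) = x ^ m * 1 := by rw [← h1, mul_one, h]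
    exact hx (n - m) (by omega) (mul_left_cancel h2)
  intro m n h
  by_contra hne
  rcases Nat.lt_or_ge m n with h1 | h1
  · exact key m n h1 h
  · exact key n m (by omega) h.symm

lemma nset_inj {x : M} (hx : ∀ n : ℕ, 0 < n → x ^ n ≠ 1) :
    Function.Injective (nset x) :=
  Finset.image_injective (pow_inj_of_infinite hx)

/-- image of a finite set of integers under zpowers of a unit -/
def zset (u : Mˣ) (S : Finset ℤ) : Finset M := S.image (fun e => ((u ^ e : Mˣ) : M))

lemma zset_mul (u : Mˣ) (S T : Finset ℤ) : zset u S * zset u T = zset u (S + T) := by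
  ext z
  simp only [zset, Finset.mem_mul, Finset.mem_image, Finset.mem_add]
  constructor
  · rintro ⟨y, ⟨s, hs, rfl⟩, w, ⟨t, ht, rfl⟩, rfl⟩
    exact ⟨s + t, ⟨s, hs, t, ht, rfl⟩, by rw [zpow_add, Units.val_mul]⟩
  · rintro ⟨k, ⟨s, hs, t, ht, rfl⟩, rfl⟩
    exact ⟨((u ^ s : Mˣ) : M), ⟨s, hs, rfl⟩, ((u ^ t : Mˣ) : M), ⟨t, ht, rfl⟩,
      by rw [zpow_add, Units.val_mul]⟩

lemma zset_pow (u : Mˣ) (S : Finset ℤ) (n : ℕ) : (zset u S) ^ n = zset u (n • S) := by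
  induction n with
  | zero => simp [zset]; rfl
  | succ n ih => rw [pow_succ, ih, zset_mul, succ_nsmul]

lemma zpow_inj_of_infinite {u : Mˣ} (hx : ∀ n : ℕ, 0 < n → (u : M) ^ n ≠ 1) :
    Function.Injective (fun e : ℤ => ((u ^ e : Mˣ) : M)) := by
  have key : ∀ n : ℕ, 0 < n → u ^ (n : ℤ) ≠ 1 := by
    intro n hn h
    apply hx n hn
    have := congrArg (Units.val) h
    simpa [Units.val_pow_eq_pow_val] using this
  intro d e h
  have h' : u ^ d = u ^ e := Units.ext h
  by_contra hne
  rcases lt_or_gt_of_ne hne with h1 | h1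
  · have : u ^ (e - d) = 1 := by
      rw [zpow_sub, h', mul_inv_cancel]
    obtain ⟨n, hn⟩ : ∃ n : ℕ, (n : ℤ) = e - d := ⟨(e - d).toNat, by omega⟩
    exact key n (by omega) (hn ▸ this)
  · have : u ^ (d - e) = 1 := by
      rw [zpow_sub, h', mul_inv_cancel]
    obtain ⟨n, hn⟩ : ∃ n : ℕ, (n : ℤ) = d - e := ⟨(d - e).toNat, by omega⟩
    exact key n (by omega) (hn ▸ this)

lemma zset_inj {u : Mˣ} (hx : ∀ n : ℕ, 0 < n → (u : M) ^ n ≠ 1) :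
    Function.Injective (zset u) :=
  Finset.image_injective (zpow_inj_of_infinite hx)

lemma nset_eq_zset (u : Mˣ) (S : Finset ℕ) :
    nset (u : M) S = zset u (S.image (Nat.cast)) := by
  ext z
  simp only [nset, zset, Finset.mem_image]
  constructor
  · rintro ⟨k, hk, rfl⟩
    exact ⟨(k : ℤ), ⟨k, hk, rfl⟩, by rw [zpow_natCast, Units.val_pow_eq_pow_val]⟩
  · rintro ⟨e, ⟨k, hk, rfl⟩, rfl⟩
    exact ⟨k, hk, by rw [zpow_natCast, Units.val_pow_eq_pow_val]⟩

end aux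

section aux2
variable {M : Type*} [CancelCommMonoid M] [DecidableEq M]

lemma pair_nset (x : M) : ({1, x} : Finset M) = nset x {0,1} := by
  simp [nset, Finset.image_insert]

lemma trip_nset (x : M) : ({1, x, x^3} : Finset M) = nset x {0,1,3} := by
  simp [nset, Finset.image_insert]

lemma pair_zset (u : Mˣ) (e : ℤ) :
    ({1, ((u^e : Mˣ) : M)} : Finset M) = zset u {0,e} := by
  simp [zset, Finset.image_insert]

example : ({0,2,3} : Finset ℕ).image (Nat.cast : ℕ → ℤ) = ({0,2,3} : Finset ℤ) := by decide

example : (2 : ℕ) • ({0,-1} : Finset ℤ) = ({-2,-1,0} : Finset ℤ) := by decide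
example : Finset.range 4 = ({0,1,2,3} : Finset ℕ) := by decide

example (x y : redPow M) : ((x * y : redPow M) : Finset M) = (x : Finset M) * y := rfl
example (x : redPow M) (n : ℕ) : ((x ^ n : redPow M) : Finset M) = (x : Finset M) ^ n := by
  exact SubmonoidClass.coe_pow x n
example (x : M) : ((pairSet x : redPow M) : Finset M) = {1, x} := rfl
example (x y : M) : ((tripSet x y : redPow M) : Finset M) = {1, x, y} := rfl

lemma pairSet_pow_val (x : M) (n : ℕ) :
    ((pairSet x ^ n : redPow M) : Finset M) = nset x (Finset.range (n+1)) := by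
  rw [SubmonoidClass.coe_pow]
  show ({1, x} : Finset M) ^ n = _
  rw [pair_nset, nset_pow]
  congr 1
  induction n with
  | zero => decide
  | succ n ih =>
    rw [succ_nsmul, ih]
    ext k
    simp only [Finset.mem_add, Finset.mem_range, Finset.mem_insert, Finset.mem_singleton]
    constructor
    · rintro ⟨y, hy, z, hz, rfl⟩
      rcases hz with rfl | rfl <;> omega
    · intro hk
      by_cases h : k ≤ n
      · exact ⟨k, by omega, 0, Or.inl rfl, by omega⟩
      · exact ⟨n, by omega, 1, Or.inr rfl, by omega⟩
end aux2

lemma infinite_order_transfer {H K : Type*} [CancelCommMonoid H] [CancelCommMonoid K]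
    [DecidableEq H] [DecidableEq K] (f : redPow H ≃* redPow K) {a : H} {b : K}
    (hfa : f (pairSet a) = pairSet b) (ha : ∀ n : ℕ, 0 < n → a ^ n ≠ 1) :
    ∀ n : ℕ, 0 < n → b ^ n ≠ 1 := by
  intro n hn h1
  have hset : nset b (Finset.range (2*n+1)) = nset b (Finset.range (n+1)) := by
    apply Finset.Subset.antisymm
    · intro z hz
      simp only [nset, Finset.mem_image, Finset.mem_range] at hz ⊢
      obtain ⟨k, hk, rfl⟩ := hz
      by_cases h : k ≤ n
      · exact ⟨k, by omega, rfl⟩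
      · refine ⟨k - n, by omega, ?_⟩
        have : b ^ k = b ^ (k - n) * b ^ n := by
          rw [← pow_add]; congr 1; omega
        rw [this, h1, mul_one]
    · apply Finset.image_subset_image
      intro k hk
      simp only [Finset.mem_range] at hk ⊢
      omega
  have hppow : pairSet b ^ (2*n) = pairSet b ^ n := by
    apply Subtype.ext
    rw [pairSet_pow_val, pairSet_pow_val, hset]
  have h2 : pairSet a ^ (2*n) = pairSet a ^ n := by
    apply f.injective
    rw [map_pow, map_pow, hfa, hppow]
  have h3 : nset a (Finset.range (2*n+1)) = nset a (Finset.range (n+1)) := by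
    rw [← pairSet_pow_val, ← pairSet_pow_val, h2]
  have h4 := nset_inj ha h3
  have : (2*n : ℕ) ∈ Finset.range (2*n+1) := by simp
  rw [h4] at this
  simp only [Finset.mem_range] at this
  omega
/-- A non-trivial unit `a` of infinite order is not reversed under `f`:
`f({1, a, a³}) = {1, g a, (g a)³}`. -/
theorem stmt11 {H K : Type*} [CancelCommMonoid H] [CancelCommMonoid K]
    [DecidableEq H] [DecidableEq K]
    (hH : ∃ c : H, ∀ n : ℕ, 0 < n → c ^ n ≠ 1)
    (hK : ∃ x : K, ∀ n : ℕ, 0 < n → x ^ n ≠ 1)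
    (f : redPow H ≃* redPow K) (g : H → K)
    (hg : ∀ a : H, f (pairSet a) = pairSet (g a))
    (a : H) (haU : IsUnit a) (ha1 : a ≠ 1) (ha : ∀ n : ℕ, 0 < n → a ^ n ≠ 1) :
    f (tripSet a (a ^ 3)) = tripSet (g a) (g a ^ 3) := by
  classical
  have hfa := hg a
  set b := g a with hb_def
  have hbn : ∀ n : ℕ, 0 < n → b ^ n ≠ 1 := infinite_order_transfer f hfa ha
  have hb1 : b ≠ 1 := by
    intro h
    have := hbn 1 (by omega)
    simp [h] at this
  -- the relation {1,a,a³}·{1,a} = {1,a}⁴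
  have hXrel : tripSet a (a^3) * pairSet a = pairSet a ^ 4 := by
    apply Subtype.ext
    show ({1, a, a^3} : Finset H) * {1, a} = _
    rw [pairSet_pow_val, trip_nset, pair_nset, nset_mul]
    congr 1
    all_goals decide
  have hFrel : f (tripSet a (a^3)) * pairSet b = pairSet b ^ 4 := by
    rw [← hfa, ← map_pow, ← map_mul, hXrel]
  set F := f (tripSet a (a^3)) with hF_def
  have hF1 : (1 : K) ∈ (F : Finset K) := F.2
  have hFval : (F : Finset K) * nset b {0,1} = nset b (Finset.range 5) := by
    have := congrArg (Subtype.val) hFrel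
    rw [pairSet_pow_val] at this
    rw [← pair_nset]
    exact this
  have hFsub : (F : Finset K) ⊆ nset b (Finset.range 5) := by
    intro z hz
    rw [← hFval]
    have h1 : (1:K) ∈ nset b {0,1} := by
      simp only [nset, Finset.mem_image]
      exact ⟨0, by simp, by simp⟩
    simpa using Finset.mul_mem_mul hz h1
  set E := (Finset.range 5).filter (fun i => b ^ i ∈ (F : Finset K)) with hE_def
  have hEF : nset b E = (F : Finset K) := by
    apply Finset.Subset.antisymm
    · intro z hz
      simp only [nset, Finset.mem_image, hE_def, Finset.mem_filter] at hz
      obtain ⟨i, ⟨_, hi⟩, rfl⟩ := hz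
      exact hi
    · intro z hz
      have := hFsub hz
      simp only [nset, Finset.mem_image, Finset.mem_range] at this
      obtain ⟨i, hi5, rfl⟩ := this
      simp only [nset, Finset.mem_image, hE_def, Finset.mem_filter, Finset.mem_range]
      exact ⟨i, ⟨hi5, hz⟩, rfl⟩
  have hE0 : (0 : ℕ) ∈ E := by
    simp only [hE_def, Finset.mem_filter, Finset.mem_range]
    exact ⟨by omega, by simpa using hF1⟩
  have hEsub : E ⊆ Finset.range 5 := Finset.filter_subset _ _
  have hEadd : E + {0,1} = Finset.range 5 := by
    apply nset_inj hbn
    rw [← nset_mul, hEF, hFval]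
  have hcases : E = {0,1,3} ∨ E = {0,2,3} ∨ E = {0,1,2,3} := by
    have key : ∀ E' ∈ (Finset.range 5).powerset, 0 ∈ E' → E' + {0,1} = Finset.range 5 →
        (E' = {0,1,3} ∨ E' = {0,2,3} ∨ E' = {0,1,2,3}) := by decide
    exact key E (Finset.mem_powerset.mpr hEsub) hE0 hEadd
  rcases hcases with hE | hE | hE
  · -- good case
    apply Subtype.ext
    show (F : Finset K) = ({1, b, b^3} : Finset K)
    rw [← hEF, hE, trip_nset]
  · -- reversed case: contradiction
    exfalso
    set u := haU.unit with hu_def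
    have hu : (u : H) = a := haU.unit_spec
    have hxu : ∀ n : ℕ, 0 < n → (u : H) ^ n ≠ 1 := by rw [hu]; exact ha
    have zinja := zpow_inj_of_infinite hxu
    have hFv0 : (F : Finset K) = nset b {0,2,3} := by rw [← hEF, hE]
    have htrip_z : ((tripSet a (a^3) : redPow H) : Finset H) = zset u {0,1,3} := by
      show ({1, a, a^3} : Finset H) = _
      rw [trip_nset, ← hu, nset_eq_zset]
      congr 1
      all_goals decide
    have hpair_z : ((pairSet a : redPow H) : Finset H) = zset u {0,1} := by
      show ({1, a} : Finset H) = _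
      rw [pair_nset, ← hu, nset_eq_zset]
      congr 1
      all_goals decide
    set P1 := pairSet ((u^(-1:ℤ) : Hˣ) : H) with hP1_def
    set P2 := pairSet ((u^(-2:ℤ) : Hˣ) : H) with hP2_def
    set P3 := pairSet ((u^(-3:ℤ) : Hˣ) : H) with hP3_def
    have hP1v : (P1 : Finset H) = zset u {0,-1} := pair_zset u (-1)
    have hP2v : (P2 : Finset H) = zset u {0,-2} := pair_zset u (-2)
    have hP3v : (P3 : Finset H) = zset u {0,-3} := pair_zset u (-3)
    set c := g ((u^(-1:ℤ) : Hˣ) : H) with hc_def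
    have hfc : f P1 = pairSet c := hg _
    have e1 : tripSet a (a^3) * P1 = P1 * pairSet a ^ 3 := by
      apply Subtype.ext
      simp only [MulMemClass.coe_mul, SubmonoidClass.coe_pow]
      rw [htrip_z, hP1v, hpair_z, zset_pow, zset_mul, zset_mul]
      congr 1
      all_goals decide
    have e1K : F * pairSet c = pairSet c * pairSet b ^ 3 := by
      rw [hF_def, ← hfc, ← hfa, ← map_pow, ← map_mul, ← map_mul, e1]
    have e1v : nset b {0,2,3} * ({1,c} : Finset K)
        = ({1,c} : Finset K) * nset b (Finset.range 4) := by
      have hv := congrArg (Subtype.val) e1K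
      simp only [MulMemClass.coe_mul] at hv
      rw [pairSet_pow_val, hFv0] at hv
      exact hv
    have hcb_ne : c ≠ b := by
      intro h
      have h2 : P1 = pairSet a := by
        apply f.injective
        rw [hfc, h, hfa]
      have hv := congrArg (Subtype.val) h2
      rw [hP1v, hpair_z] at hv
      have hmem : ((u^(-1:ℤ) : Hˣ) : H) ∈ zset u {0,1} := by
        rw [← hv]
        simp only [zset, Finset.mem_image]
        exact ⟨-1, by simp, rfl⟩
      simp only [zset, Finset.mem_image] at hmem
      obtain ⟨e, he, hee⟩ := hmem
      have := zinja hee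
      simp only [Finset.mem_insert, Finset.mem_singleton] at he
      omega
    have hpi := pow_inj_of_infinite hbn
    have hbmem : b ∈ nset b {0,2,3} * ({1,c} : Finset K) := by
      rw [e1v]
      have h2 : b ∈ nset b (Finset.range 4) := by
        simp only [nset, Finset.mem_image]
        exact ⟨1, by simp, pow_one b⟩
      simpa using Finset.mul_mem_mul (show (1:K) ∈ ({1,c} : Finset K) by simp) h2
    obtain ⟨y, hy, z, hz, hyz⟩ := Finset.mem_mul.mp hbmem
    simp only [nset, Finset.mem_image] at hy
    obtain ⟨i, hi, rfl⟩ := hy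
    simp only [Finset.mem_insert, Finset.mem_singleton] at hz
    have hbc : b * c = 1 := by
      fin_cases hi <;> rcases hz with rfl | rfl
      · exact absurd (by simpa using hyz.symm) hb1
      · exact absurd (by simpa using hyz) hcb_ne
      · have h2 := hpi (show b^2 = b^1 by rw [pow_one]; simpa using hyz)
        norm_num at h2
      · refine mul_left_cancel (a := b) ?_
        rw [mul_one, ← mul_assoc, ← pow_two]
        exact hyz
      · have h2 := hpi (show b^3 = b^1 by rw [pow_one]; simpa using hyz)
        norm_num at h2
      · exfalso
        have hb2c : b^2 * c = 1 := by
          refine mul_left_cancel (a := b) ?_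
          rw [mul_one, ← mul_assoc, ← pow_succ']
          exact hyz
        have hmem2 : b * c ∈ nset b {0,2,3} * ({1,c} : Finset K) := by
          rw [e1v]
          have h1 : c ∈ ({1,c} : Finset K) := by simp
          have h2 : b ∈ nset b (Finset.range 4) := by
            simp only [nset, Finset.mem_image]
            exact ⟨1, by simp, pow_one b⟩
          have := Finset.mul_mem_mul h1 h2
          rwa [mul_comm c b] at this
        obtain ⟨y2, hy2, z2, hz2, hyz2⟩ := Finset.mem_mul.mp hmem2
        simp only [nset, Finset.mem_image] at hy2
        obtain ⟨j, hj, rfl⟩ := hy2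
        simp only [Finset.mem_insert, Finset.mem_singleton] at hz2
        fin_cases hj <;> rcases hz2 with rfl | rfl
        · have h1 : b * c = 1 := by simpa using hyz2.symm
          have hbeq : b = 1 := by
            calc b = b * (b * c) := by rw [h1, mul_one]
            _ = b^2 * c := by rw [pow_two, mul_assoc]
            _ = 1 := hb2c
          exact hb1 hbeq
        · have h1 : (1:K) * c = b * c := by simpa using hyz2
          exact hb1 (mul_right_cancel h1).symm
        · have h1 : b * b = b * c := by rw [← pow_two]; simpa using hyz2
          exact hcb_ne (mul_left_cancel h1).symm
        · have h1 : b^2 * c = b^1 * c := by rw [pow_one]; exact hyz2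
          have h2 := hpi (mul_right_cancel h1)
          norm_num at h2
        · have h1 : b * b^2 = b * c := by rw [← pow_succ']; simpa using hyz2
          have h2 : c = b^2 := (mul_left_cancel h1).symm
          have h3 : b^4 = 1 := by
            have h4 : b^2 * c = 1 := hb2c
            rw [h2, ← pow_add] at h4
            exact h4
          exact hbn 4 (by norm_num) h3
        · have h1 : b^3 * c = b^1 * c := by rw [pow_one]; exact hyz2
          have h2 := hpi (mul_right_cancel h1)
          norm_num at h2
    set ub : Kˣ := ⟨b, c, hbc, by rw [mul_comm]; exact hbc⟩ with hub_def
    have hxb : ∀ n : ℕ, 0 < n → (ub : K) ^ n ≠ 1 := hbn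
    have zinjb := zpow_inj_of_infinite hxb
    have hnz : ∀ S : Finset ℕ, nset b S = zset ub (S.image Nat.cast) := fun S =>
      nset_eq_zset ub S
    have hpbz : ((pairSet b : redPow K) : Finset K) = zset ub {0,1} := by
      have h1 := pair_zset ub 1
      rw [zpow_one] at h1
      exact h1
    have hpcz : ((pairSet c : redPow K) : Finset K) = zset ub {0,-1} := by
      have h1 := pair_zset ub (-1)
      rw [zpow_neg, zpow_one] at h1
      exact h1
    have hFvz : (F : Finset K) = zset ub {0,2,3} := by
      rw [hFv0, hnz]
      congr 1
      all_goals decide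
    have hd2 : g ((u^(-2:ℤ) : Hˣ) : H) = ((ub^(-2:ℤ) : Kˣ) : K) := by
      have em : P2 * pairSet a ^ 2 = P1 ^ 2 * pairSet a ^ 2 := by
        apply Subtype.ext
        simp only [MulMemClass.coe_mul, SubmonoidClass.coe_pow]
        rw [hP2v, hP1v, hpair_z, zset_pow, zset_pow, zset_mul, zset_mul]
        congr 1
        all_goals decide
      have emK : pairSet (g ((u^(-2:ℤ) : Hˣ) : H)) * pairSet b ^ 2
          = pairSet c ^ 2 * pairSet b ^ 2 := by
        rw [← hg ((u^(-2:ℤ) : Hˣ) : H), ← hP2_def, ← hfc, ← hfa, ← map_pow, ← map_pow,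
          ← map_mul, ← map_mul, em]
      set d := g ((u^(-2:ℤ) : Hˣ) : H) with hd_def
      have emv : ({1, d} : Finset K) * zset ub ({0,1,2} : Finset ℤ)
          = zset ub ({-2,-1,0,1,2} : Finset ℤ) := by
        have hv := congrArg (Subtype.val) emK
        simp only [MulMemClass.coe_mul, SubmonoidClass.coe_pow] at hv
        rw [hpbz, hpcz, zset_pow, zset_pow, zset_mul,
          show (2:ℕ) • ({0,1} : Finset ℤ) = ({0,1,2} : Finset ℤ) by decide,
          show (2:ℕ) • ({0,-1} : Finset ℤ) + ({0,1,2} : Finset ℤ)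
            = ({-2,-1,0,1,2} : Finset ℤ) by decide] at hv
        exact hv
      have hone : (1:K) ∈ zset ub ({0,1,2} : Finset ℤ) := by
        simp only [zset, Finset.mem_image]
        exact ⟨0, by simp, by simp⟩
      have hd_in : d ∈ zset ub ({-2,-1,0,1,2} : Finset ℤ) := by
        rw [← emv]
        simpa using Finset.mul_mem_mul (show d ∈ ({1,d} : Finset K) by simp) hone
      simp only [zset, Finset.mem_image] at hd_in
      obtain ⟨e, he, hde⟩ := hd_in
      have hm_in : ((ub^(-2:ℤ) : Kˣ) : K) ∈ ({1, d} : Finset K) * zset ub ({0,1,2} : Finset ℤ) := by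
        rw [emv]
        simp only [zset, Finset.mem_image]
        exact ⟨-2, by simp, rfl⟩
      obtain ⟨x, hx, y, hy, hxy⟩ := Finset.mem_mul.mp hm_in
      simp only [Finset.mem_insert, Finset.mem_singleton] at hx
      simp only [zset, Finset.mem_image] at hy
      obtain ⟨j, hj, rfl⟩ := hy
      simp only [Finset.mem_insert, Finset.mem_singleton] at he hj
      rcases hx with rfl | rfl
      · rw [one_mul] at hxy
        have hj2 := zinjb hxy
        exfalso
        omega
      · rw [← hde] at hxy ⊢
        rw [← Units.val_mul, ← zpow_add] at hxy
        have hsum := zinjb hxy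
        have he2 : e = -2 := by omega
        rw [he2]
    have hd3 : g ((u^(-3:ℤ) : Hˣ) : H) = ((ub^(-3:ℤ) : Kˣ) : K) := by
      have em : P3 * pairSet a ^ 3 = P1 ^ 3 * pairSet a ^ 3 := by
        apply Subtype.ext
        simp only [MulMemClass.coe_mul, SubmonoidClass.coe_pow]
        rw [hP3v, hP1v, hpair_z, zset_pow, zset_pow, zset_mul, zset_mul]
        congr 1
        all_goals decide
      have emK : pairSet (g ((u^(-3:ℤ) : Hˣ) : H)) * pairSet b ^ 3
          = pairSet c ^ 3 * pairSet b ^ 3 := by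
        rw [← hg ((u^(-3:ℤ) : Hˣ) : H), ← hP3_def, ← hfc, ← hfa, ← map_pow, ← map_pow,
          ← map_mul, ← map_mul, em]
      set d := g ((u^(-3:ℤ) : Hˣ) : H) with hd_def
      have emv : ({1, d} : Finset K) * zset ub ({0,1,2,3} : Finset ℤ)
          = zset ub ({-3,-2,-1,0,1,2,3} : Finset ℤ) := by
        have hv := congrArg (Subtype.val) emK
        simp only [MulMemClass.coe_mul, SubmonoidClass.coe_pow] at hv
        rw [hpbz, hpcz, zset_pow, zset_pow, zset_mul,
          show (3:ℕ) • ({0,1} : Finset ℤ) = ({0,1,2,3} : Finset ℤ) by decide,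
          show (3:ℕ) • ({0,-1} : Finset ℤ) + ({0,1,2,3} : Finset ℤ)
            = ({-3,-2,-1,0,1,2,3} : Finset ℤ) by decide] at hv
        exact hv
      have hone : (1:K) ∈ zset ub ({0,1,2,3} : Finset ℤ) := by
        simp only [zset, Finset.mem_image]
        exact ⟨0, by simp, by simp⟩
      have hd_in : d ∈ zset ub ({-3,-2,-1,0,1,2,3} : Finset ℤ) := by
        rw [← emv]
        simpa using Finset.mul_mem_mul (show d ∈ ({1,d} : Finset K) by simp) hone
      simp only [zset, Finset.mem_image] at hd_in
      obtain ⟨e, he, hde⟩ := hd_in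
      have hm_in : ((ub^(-3:ℤ) : Kˣ) : K) ∈ ({1, d} : Finset K) * zset ub ({0,1,2,3} : Finset ℤ) := by
        rw [emv]
        simp only [zset, Finset.mem_image]
        exact ⟨-3, by simp, rfl⟩
      obtain ⟨x, hx, y, hy, hxy⟩ := Finset.mem_mul.mp hm_in
      simp only [Finset.mem_insert, Finset.mem_singleton] at hx
      simp only [zset, Finset.mem_image] at hy
      obtain ⟨j, hj, rfl⟩ := hy
      simp only [Finset.mem_insert, Finset.mem_singleton] at he hj
      rcases hx with rfl | rfl
      · rw [one_mul] at hxy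
        have hj2 := zinjb hxy
        exfalso
        omega
      · rw [← hde] at hxy ⊢
        rw [← Units.val_mul, ← zpow_add] at hxy
        have hsum := zinjb hxy
        have he2 : e = -3 := by omega
        rw [he2]
    -- the final contradiction
    have hT1 : (1:H) ∈ zset u ({-1,0,1,3} : Finset ℤ) := by
      simp only [zset, Finset.mem_image]
      exact ⟨0, by simp, by simp⟩
    set T : redPow H := ⟨zset u {-1,0,1,3}, hT1⟩ with hT_def
    have eT : T * P3 = tripSet a (a^3) * P2 * P2 := by
      apply Subtype.ext
      simp only [MulMemClass.coe_mul]
      rw [hP3v, hP2v, htrip_z, zset_mul, zset_mul, zset_mul]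
      congr 1
      all_goals decide
    have eTK : f T * pairSet (g ((u^(-3:ℤ) : Hˣ) : H))
        = F * pairSet (g ((u^(-2:ℤ) : Hˣ) : H)) * pairSet (g ((u^(-2:ℤ) : Hˣ) : H)) := by
      rw [← hg ((u^(-3:ℤ) : Hˣ) : H), ← hg ((u^(-2:ℤ) : Hˣ) : H), ← hP3_def, ← hP2_def,
        hF_def, ← map_mul, ← map_mul, ← map_mul, eT]
    have eTv : (f T : Finset K) * ({1, ((ub^(-3:ℤ) : Kˣ) : K)} : Finset K)
        = zset ub ({-4,-2,-1,0,1,2,3} : Finset ℤ) := by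
      have hv := congrArg (Subtype.val) eTK
      simp only [MulMemClass.coe_mul] at hv
      rw [hd2, hd3, hFvz,
        show ((pairSet ((ub^(-3:ℤ) : Kˣ) : K) : redPow K) : Finset K) = zset ub {0,-3}
          from pair_zset ub (-3),
        show ((pairSet ((ub^(-2:ℤ) : Kˣ) : K) : redPow K) : Finset K) = zset ub {0,-2}
          from pair_zset ub (-2),
        zset_mul, zset_mul] at hv
      rw [show ({1, ((ub^(-3:ℤ) : Kˣ) : K)} : Finset K) = zset ub {0,-3} from pair_zset ub (-3),
        hv]
      congr 1
      all_goals decide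
    have hmem3 : ((ub^(-3:ℤ) : Kˣ) : K) ∈ (f T : Finset K)
        * ({1, ((ub^(-3:ℤ) : Kˣ) : K)} : Finset K) := by
      have h1 : (1:K) ∈ (f T : Finset K) := (f T).2
      simpa using Finset.mul_mem_mul h1
        (show ((ub^(-3:ℤ) : Kˣ) : K) ∈ ({1, ((ub^(-3:ℤ) : Kˣ) : K)} : Finset K) by simp)
    rw [eTv] at hmem3
    simp only [zset, Finset.mem_image] at hmem3
    obtain ⟨e, he, hee⟩ := hmem3
    have hfin := zinjb hee
    simp only [Finset.mem_insert, Finset.mem_singleton] at he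
    omega

  · -- interval case: contradiction with injectivity
    exfalso
    have hFp : F = pairSet b ^ 3 := by
      apply Subtype.ext
      rw [pairSet_pow_val, ← hEF, hE]
      congr 1
      all_goals decide
    have h2 : tripSet a (a^3) = pairSet a ^ 3 := by
      apply f.injective
      rw [map_pow, hfa, ← hFp]
    have h3 := congrArg (Subtype.val) h2
    rw [pairSet_pow_val] at h3
    have h4 : nset a {0,1,3} = nset a (Finset.range 4) := by
      rw [← trip_nset]
      exact h3
    have h5 := nset_inj ha h4
    rw [show Finset.range 4 = ({0,1,2,3} : Finset ℕ) by decide] at h5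
    exact absurd h5 (by decide)
end

section
/- Let H be a reduced commutative cancellative monoid, viewed inside its quotient group q(H). Then the set H_v of pseudo-units of H is a submonoid of H which is a valuation monoid, and its complement H_v^c = H \ H_v is a subsemigroup of H (closed under multiplication). Moreover H_v^c · q(H_v) = H_v^c. -/
/-- The set of pseudo-units of a submonoid `H` of an abelian group `G` (thought of as
containing the quotient group of `H`): elements `a ∈ H` such that for every `b ∈ H`,
`a * b⁻¹ ∈ H` or `b * a⁻¹ ∈ H`. -/
def pseudoUnits {G : Type*} [CommGroup G] (H : Submonoid G) : Set G :=
  {a | a ∈ H ∧ ∀ b ∈ H, a * b⁻¹ ∈ H ∨ b * a⁻¹ ∈ H}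

/-- If `a` is a pseudo-unit, `b ∈ H`, and `a * b⁻¹ ∈ H`, then `a * b⁻¹` is a pseudo-unit. -/
lemma pseudoUnits_div {G : Type*} [CommGroup G] {H : Submonoid G} {a b : G}
    (ha : a ∈ pseudoUnits H) (hb : b ∈ H) (hab : a * b⁻¹ ∈ H) :
    a * b⁻¹ ∈ pseudoUnits H := by
  refine ⟨hab, fun c hc => ?_⟩
  rcases ha.2 (b * c) (H.mul_mem hb hc) with h | h
  · left
    have e : a * b⁻¹ * c⁻¹ = a * (b * c)⁻¹ := by simp [mul_comm, mul_left_comm, mul_assoc]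
    rw [e]; exact h
  · right
    have e : c * (a * b⁻¹)⁻¹ = b * c * a⁻¹ := by simp [mul_comm, mul_left_comm, mul_assoc]
    rw [e]; exact h

/-- A factor of a pseudo-unit (within `H`) is a pseudo-unit. -/
lemma pseudoUnits_of_mul {G : Type*} [CommGroup G] {H : Submonoid G} {a b : G}
    (ha : a ∈ H) (hb : b ∈ H) (hab : a * b ∈ pseudoUnits H) :
    a ∈ pseudoUnits H := by
  refine ⟨ha, fun c hc => ?_⟩
  rcases hab.2 (b * c) (H.mul_mem hb hc) with h | h
  · left
    have e : a * c⁻¹ = a * b * (b * c)⁻¹ := by simp [mul_comm, mul_left_comm, mul_assoc]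
    rw [e]; exact h
  · right
    have e : c * a⁻¹ = b * c * (a * b)⁻¹ := by
      rw [mul_inv_rev, mul_comm b c, mul_assoc, mul_inv_cancel_left]
    rw [e]; exact h

/-- Pseudo-units are closed under multiplication. -/
lemma pseudoUnits_mul {G : Type*} [CommGroup G] {H : Submonoid G} {a b : G}
    (ha : a ∈ pseudoUnits H) (hb : b ∈ pseudoUnits H) :
    a * b ∈ pseudoUnits H := by
  refine ⟨H.mul_mem ha.1 hb.1, fun c hc => ?_⟩
  rcases ha.2 c hc with h | h
  · left
    have e : a * b * c⁻¹ = b * (a * c⁻¹) := by simp [mul_comm, mul_left_comm, mul_assoc]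
    rw [e]; exact H.mul_mem hb.1 h
  · rcases hb.2 (c * a⁻¹) h with h' | h'
    · left
      have e : a * b * c⁻¹ = b * (c * a⁻¹)⁻¹ := by simp [mul_comm, mul_left_comm, mul_assoc]
      rw [e]; exact h'
    · right
      have e : c * (a * b)⁻¹ = c * a⁻¹ * b⁻¹ := by simp [mul_comm, mul_left_comm, mul_assoc]
      rw [e]; exact h'

/-- For a reduced commutative cancellative monoid `H` (realized as a submonoid of its
quotient group), the pseudo-units `H_v` form a valuation submonoid of `H`, the
complement `H_v^c = H \ H_v` is a subsemigroup, and `H_v^c · q(H_v) = H_v^c`. -/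
theorem stmt14 {G : Type*} [CommGroup G] (H : Submonoid G)
    (hq : ∀ x : G, ∃ a ∈ H, ∃ b ∈ H, x = a * b⁻¹)
    (hred : ∀ a ∈ H, a⁻¹ ∈ H → a = 1) :
    (1 : G) ∈ pseudoUnits H ∧
    (∀ a ∈ pseudoUnits H, ∀ b ∈ pseudoUnits H, a * b ∈ pseudoUnits H) ∧
    (∀ a ∈ pseudoUnits H, ∀ b ∈ pseudoUnits H,
      a * b⁻¹ ∈ pseudoUnits H ∨ b * a⁻¹ ∈ pseudoUnits H) ∧
    (∀ a ∈ (H : Set G) \ pseudoUnits H, ∀ b ∈ (H : Set G) \ pseudoUnits H,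
      a * b ∈ (H : Set G) \ pseudoUnits H) ∧
    (∀ a ∈ (H : Set G) \ pseudoUnits H, ∀ u ∈ pseudoUnits H, ∀ v ∈ pseudoUnits H,
      a * (u * v⁻¹) ∈ (H : Set G) \ pseudoUnits H) := by
  refine ⟨⟨H.one_mem, fun b hb => Or.inr (by simpa using hb)⟩,
    fun a ha b hb => pseudoUnits_mul ha hb, fun a ha b hb => ?_, fun a ha b hb => ?_,
    fun a ha u hu v hv => ?_⟩
  · rcases ha.2 b hb.1 with h | h
    · exact Or.inl (pseudoUnits_div ha hb.1 h)
    · exact Or.inr (pseudoUnits_div hb ha.1 h)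
  · exact ⟨H.mul_mem ha.1 hb.1, fun h => ha.2 (pseudoUnits_of_mul ha.1 hb.1 h)⟩
  · rcases hu.2 v hv.1 with h | h
    · -- u * v⁻¹ ∈ H
      have hw : u * v⁻¹ ∈ pseudoUnits H := pseudoUnits_div hu hv.1 h
      refine ⟨H.mul_mem ha.1 h, fun hp => ha.2 ?_⟩
      have e : a * (u * v⁻¹) * (u * v⁻¹)⁻¹ = a := by simp [mul_comm, mul_left_comm, mul_assoc]
      have := pseudoUnits_div hp h (by rw [e]; exact ha.1)
      rwa [e] at this
    · -- v * u⁻¹ ∈ H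
      have hw : v * u⁻¹ ∈ pseudoUnits H := pseudoUnits_div hv hu.1 h
      rcases hw.2 a ha.1 with h' | h'
      · -- (v * u⁻¹) * a⁻¹ ∈ H, forces a to be a pseudo-unit, contradiction
        exfalso
        apply ha.2
        have e : a * (v * u⁻¹ * a⁻¹) = v * u⁻¹ := by
          rw [mul_comm (v * u⁻¹) a⁻¹, mul_inv_cancel_left]
        exact pseudoUnits_of_mul ha.1 h' (by rw [e]; exact hw)
      · have e : a * (v * u⁻¹)⁻¹ = a * (u * v⁻¹) := by simp [mul_comm, mul_left_comm, mul_assoc]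
        rw [e] at h'
        refine ⟨h', fun hp => ha.2 ?_⟩
        have e2 : a * (u * v⁻¹) * (v * u⁻¹) = a := by simp [mul_comm, mul_left_comm, mul_assoc]
        have := pseudoUnits_mul hp hw
        rwa [e2] at this
end

section
/- Let H be a reduced commutative cancellative monoid with pseudo-unit monoid H_v and complement H_v^c, and let K = H_v^c ⊔ H̃ be a submonoid of q(H), where H̃ is a reduced valuation monoid with q(H̃) = q(H_v). Then for every X ∈ P_fin,1(H) there exists a unique a ∈ q(H) with aX ∈ P_fin,1(K), and symmetrically for every Y ∈ P_fin,1(K) there is a unique b ∈ q(H) with bY ∈ P_fin,1(H). -/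
section Aux

variable {G : Type*} [CommGroup G] {H : Submonoid G}

lemma one_mem_pu : (1 : G) ∈ pseudoUnits H :=
  ⟨H.one_mem, fun b hb => Or.inr (by simpa using hb)⟩

lemma mul_mem_pu {u v : G} (hu : u ∈ pseudoUnits H) (hv : v ∈ pseudoUnits H) :
    u * v ∈ pseudoUnits H := by
  refine ⟨H.mul_mem hu.1 hv.1, fun b hb => ?_⟩
  rcases hu.2 b hb with h | h
  · left
    have h2 : u * v * b⁻¹ = (u * b⁻¹) * v := by simp [mul_assoc, mul_comm, mul_left_comm, mul_inv_rev, inv_inv]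
    rw [h2]; exact H.mul_mem h hv.1
  · rcases hv.2 (b * u⁻¹) h with h3 | h3
    · left
      have h2 : u * v * b⁻¹ = v * (b * u⁻¹)⁻¹ := by simp [mul_assoc, mul_comm, mul_left_comm, mul_inv_rev, inv_inv]
      rw [h2]; exact h3
    · right
      have h2 : b * (u * v)⁻¹ = (b * u⁻¹) * v⁻¹ := by simp [mul_assoc, mul_comm, mul_left_comm, mul_inv_rev, inv_inv]
      rw [h2]; exact h3

lemma div_pu {a c : G} (ha : a ∈ H) (hc : c ∈ H) (h : a * c ∈ pseudoUnits H) :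
    a ∈ pseudoUnits H := by
  refine ⟨ha, fun b hb => ?_⟩
  rcases h.2 (b * c) (H.mul_mem hb hc) with h' | h'
  · left
    have h2 : a * b⁻¹ = (a * c) * (b * c)⁻¹ := by simp [mul_assoc, mul_comm, mul_left_comm, mul_inv_rev, inv_inv]
    rw [h2]; exact h'
  · right
    have h2 : b * a⁻¹ = (b * c) * (a * c)⁻¹ := by group
    rw [h2]; exact h'

lemma hvc_mul_pu {c u : G} (hc : c ∈ H) (hcn : c ∉ pseudoUnits H)
    (hu : u ∈ pseudoUnits H) : c * u ∈ H ∧ c * u ∉ pseudoUnits H :=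
  ⟨H.mul_mem hc hu.1, fun h => hcn (div_pu hc hu.1 h)⟩

lemma hvc_mul_inv_pu {d v : G} (hd : d ∈ H) (hdn : d ∉ pseudoUnits H)
    (hv : v ∈ pseudoUnits H) : d * v⁻¹ ∈ H ∧ d * v⁻¹ ∉ pseudoUnits H := by
  have h1 : d * v⁻¹ ∈ H := by
    rcases hv.2 d hd with h | h
    · exfalso
      apply hdn
      apply div_pu hd h
      have e : d * (v * d⁻¹) = v := by simp [mul_assoc, mul_comm, mul_left_comm, mul_inv_rev, inv_inv]
      rw [e]; exact hv
    · exact h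
  refine ⟨h1, fun hmem => hdn ?_⟩
  have h3 := mul_mem_pu hmem hv
  have h2 : d * v⁻¹ * v = d := by simp [mul_assoc, mul_comm, mul_left_comm, mul_inv_rev, inv_inv]
  rwa [h2] at h3

lemma hvc_mul_q {c u v : G} (hc : c ∈ H) (hcn : c ∉ pseudoUnits H)
    (hu : u ∈ pseudoUnits H) (hv : v ∈ pseudoUnits H) :
    c * (u * v⁻¹) ∈ H ∧ c * (u * v⁻¹) ∉ pseudoUnits H := by
  obtain ⟨h1, h2⟩ := hvc_mul_pu hc hcn hu
  obtain ⟨h3, h4⟩ := hvc_mul_inv_pu h1 h2 hv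
  have e : c * u * v⁻¹ = c * (u * v⁻¹) := by simp [mul_assoc, mul_comm, mul_left_comm, mul_inv_rev, inv_inv]
  rw [e] at h3 h4
  exact ⟨h3, h4⟩

lemma exists_min_aux (M : Set G) (h1 : (1 : G) ∈ M)
    (hmul : ∀ x ∈ M, ∀ y ∈ M, x * y ∈ M) (S : Finset G) (hne : S.Nonempty)
    (htot : ∀ x ∈ S, ∀ y ∈ S, x * y⁻¹ ∈ M ∨ y * x⁻¹ ∈ M) :
    ∃ m ∈ S, ∀ x ∈ S, x * m⁻¹ ∈ M := by
  classical
  induction S using Finset.induction_on with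
  | empty => simp at hne
  | @insert a s ha ih =>
    by_cases hs : s.Nonempty
    · obtain ⟨m, hm, hmin⟩ := ih hs
        (fun x hx y hy => htot x (Finset.mem_insert_of_mem hx) y (Finset.mem_insert_of_mem hy))
      rcases htot a (Finset.mem_insert_self a s) m (Finset.mem_insert_of_mem hm) with h | h
      · refine ⟨m, Finset.mem_insert_of_mem hm, ?_⟩
        intro x hx
        rcases Finset.mem_insert.mp hx with rfl | hx
        · exact h
        · exact hmin x hx
      · refine ⟨a, Finset.mem_insert_self a s, ?_⟩
        intro x hx
        rcases Finset.mem_insert.mp hx with rfl | hx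
        · simpa using h1
        · have h2 := hmin x hx
          have h3 : (x * m⁻¹) * (m * a⁻¹) ∈ M := hmul _ h2 _ h
          have e : (x * m⁻¹) * (m * a⁻¹) = x * a⁻¹ := by simp [mul_assoc, mul_comm, mul_left_comm, mul_inv_rev, inv_inv]
          rwa [e] at h3
    · refine ⟨a, Finset.mem_insert_self a s, ?_⟩
      intro x hx
      rcases Finset.mem_insert.mp hx with rfl | hx
      · simpa using h1
      · exact absurd ⟨x, hx⟩ hs

end Aux

/-- Let `H` be a reduced monoid inside its quotient group `G`, and let
`K = H_v^c ⊔ H̃` where `H̃` is a reduced valuation monoid with `q(H̃) = q(H_v)`.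
Then every finite set `X ⊆ H` containing `1` has a unique translate `aX` that is a
finite subset of `K` containing `1`, and symmetrically. -/
theorem stmt17 {G : Type*} [CommGroup G] [DecidableEq G]
    (H : Submonoid G)
    (hq : ∀ x : G, ∃ a ∈ H, ∃ b ∈ H, x = a * b⁻¹)
    (hHred : ∀ a ∈ H, a⁻¹ ∈ H → a = 1)
    (Ht : Submonoid G)
    (hTred : ∀ a ∈ Ht, a⁻¹ ∈ Ht → a = 1)
    (hTval : ∀ u ∈ Ht, ∀ v ∈ Ht, u * v⁻¹ ∈ Ht ∨ v * u⁻¹ ∈ Ht)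
    (hqq : {x : G | ∃ u ∈ Ht, ∃ v ∈ Ht, x = u * v⁻¹} =
      {x : G | ∃ u ∈ pseudoUnits H, ∃ v ∈ pseudoUnits H, x = u * v⁻¹})
    (K : Submonoid G)
    (hK : (K : Set G) = ((H : Set G) \ pseudoUnits H) ∪ (Ht : Set G))
    (hdisj : ((H : Set G) \ pseudoUnits H) ∩ (Ht : Set G) = ∅) :
    (∀ X : Finset G, (1 : G) ∈ X → (↑X : Set G) ⊆ (H : Set G) →
      ∃! a : G, (1 : G) ∈ X.image (fun x => a * x) ∧
        (↑(X.image (fun x => a * x)) : Set G) ⊆ (K : Set G)) ∧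
    (∀ Y : Finset G, (1 : G) ∈ Y → (↑Y : Set G) ⊆ (K : Set G) →
      ∃! b : G, (1 : G) ∈ Y.image (fun y => b * y) ∧
        (↑(Y.image (fun y => b * y)) : Set G) ⊆ (H : Set G)) := by
  classical
  have h1v : (1 : G) ∈ pseudoUnits H := one_mem_pu
  -- Q : the common quotient group of Ht and pseudoUnits H, as a predicate
  have hHvQ : ∀ x ∈ pseudoUnits H, ∃ u ∈ Ht, ∃ v ∈ Ht, x = u * v⁻¹ := by
    intro x hx
    have hx' : x ∈ {x : G | ∃ u ∈ pseudoUnits H, ∃ v ∈ pseudoUnits H, x = u * v⁻¹} :=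
      ⟨x, hx, 1, h1v, by simp⟩
    rw [← hqq] at hx'
    exact hx'
  have hQHv : ∀ x : G, (∃ u ∈ Ht, ∃ v ∈ Ht, x = u * v⁻¹) →
      ∃ u ∈ pseudoUnits H, ∃ v ∈ pseudoUnits H, x = u * v⁻¹ := by
    intro x hx
    have hx' : x ∈ {x : G | ∃ u ∈ Ht, ∃ v ∈ Ht, x = u * v⁻¹} := hx
    rw [hqq] at hx'
    exact hx'
  have hHtQ : ∀ x ∈ Ht, ∃ u ∈ Ht, ∃ v ∈ Ht, x = u * v⁻¹ :=
    fun x hx => ⟨x, hx, 1, Ht.one_mem, by simp⟩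
  have hQmul : ∀ x y : G, (∃ u ∈ Ht, ∃ v ∈ Ht, x = u * v⁻¹) →
      (∃ u ∈ Ht, ∃ v ∈ Ht, y = u * v⁻¹) → ∃ u ∈ Ht, ∃ v ∈ Ht, x * y = u * v⁻¹ := by
    rintro x y ⟨u1, hu1, v1, hv1, rfl⟩ ⟨u2, hu2, v2, hv2, rfl⟩
    exact ⟨u1 * u2, Ht.mul_mem hu1 hu2, v1 * v2, Ht.mul_mem hv1 hv2, by simp [mul_assoc, mul_comm, mul_left_comm, mul_inv_rev, inv_inv]⟩
  have hQinv : ∀ x : G, (∃ u ∈ Ht, ∃ v ∈ Ht, x = u * v⁻¹) →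
      ∃ u ∈ Ht, ∃ v ∈ Ht, x⁻¹ = u * v⁻¹ := by
    rintro x ⟨u, hu, v, hv, rfl⟩
    exact ⟨v, hv, u, hu, by simp [mul_assoc, mul_comm, mul_left_comm, mul_inv_rev, inv_inv]⟩
  have hQval : ∀ x y : G, (∃ u ∈ Ht, ∃ v ∈ Ht, x = u * v⁻¹) →
      (∃ u ∈ Ht, ∃ v ∈ Ht, y = u * v⁻¹) → x * y⁻¹ ∈ Ht ∨ y * x⁻¹ ∈ Ht := by
    rintro x y ⟨u1, hu1, v1, hv1, rfl⟩ ⟨u2, hu2, v2, hv2, rfl⟩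
    rcases hTval (u1 * v2) (Ht.mul_mem hu1 hv2) (u2 * v1) (Ht.mul_mem hu2 hv1) with h | h
    · left
      have e : u1 * v1⁻¹ * (u2 * v2⁻¹)⁻¹ = (u1 * v2) * (u2 * v1)⁻¹ := by simp [mul_assoc, mul_comm, mul_left_comm, mul_inv_rev, inv_inv]
      rw [e]; exact h
    · right
      have e : u2 * v2⁻¹ * (u1 * v1⁻¹)⁻¹ = (u2 * v1) * (u1 * v2)⁻¹ := by simp [mul_assoc, mul_comm, mul_left_comm, mul_inv_rev, inv_inv]
      rw [e]; exact h
  have hHvcQ : ∀ c : G, c ∈ H → c ∉ pseudoUnits H → ∀ q : G,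
      (∃ u ∈ Ht, ∃ v ∈ Ht, q = u * v⁻¹) → c * q ∈ H ∧ c * q ∉ pseudoUnits H := by
    intro c hc hcn q hq'
    obtain ⟨u, hu, v, hv, rfl⟩ := hQHv q hq'
    exact hvc_mul_q hc hcn hu hv
  have hHQ : ∀ x : G, (∃ u ∈ Ht, ∃ v ∈ Ht, x = u * v⁻¹) → x ∈ H → x ∈ pseudoUnits H := by
    intro x hx hxH
    by_contra hxn
    obtain ⟨u, hu, v, hv, hxe⟩ := hQHv x hx
    have h1 := hvc_mul_pu hxH hxn hv
    have h2 : x * v = u := by rw [hxe]; simp [mul_assoc, mul_comm, mul_left_comm, mul_inv_rev, inv_inv]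
    rw [h2] at h1
    exact h1.2 hu
  have hQK : ∀ x : G, (∃ u ∈ Ht, ∃ v ∈ Ht, x = u * v⁻¹) → x ∈ (K : Set G) → x ∈ Ht := by
    intro x hx hxK
    rw [hK] at hxK
    rcases hxK with ⟨hxH, hxn⟩ | h
    · exact absurd (hHQ x hx hxH) hxn
    · exact h
  have hQvalHv : ∀ x y : G, (∃ u ∈ Ht, ∃ v ∈ Ht, x = u * v⁻¹) →
      (∃ u ∈ Ht, ∃ v ∈ Ht, y = u * v⁻¹) →
      x * y⁻¹ ∈ pseudoUnits H ∨ y * x⁻¹ ∈ pseudoUnits H := by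
    intro x y hx hy
    obtain ⟨u1, hu1, v1, hv1, hxe⟩ := hQHv x hx
    obtain ⟨u2, hu2, v2, hv2, hye⟩ := hQHv y hy
    have key := (mul_mem_pu hu1 hv2).2 (u2 * v1) (H.mul_mem hu2.1 hv1.1)
    have e1 : x * y⁻¹ = (u1 * v2) * (u2 * v1)⁻¹ := by rw [hxe, hye]; simp [mul_assoc, mul_comm, mul_left_comm, mul_inv_rev, inv_inv]
    have e2 : y * x⁻¹ = (u2 * v1) * (u1 * v2)⁻¹ := by rw [hxe, hye]; simp [mul_assoc, mul_comm, mul_left_comm, mul_inv_rev, inv_inv]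
    rcases key with h | h
    · left
      exact hHQ _ (hQmul x y⁻¹ hx (hQinv y hy)) (by rw [e1]; exact h)
    · right
      exact hHQ _ (hQmul y x⁻¹ hy (hQinv x hx)) (by rw [e2]; exact h)
  constructor
  · -- Part 1: X ⊆ H
    intro X hX1 hXH
    set S := X.filter (fun x => x ∈ pseudoUnits H) with hS
    have hS1 : (1 : G) ∈ S := Finset.mem_filter.mpr ⟨hX1, h1v⟩
    have hSQ : ∀ x ∈ S, ∃ u ∈ Ht, ∃ v ∈ Ht, x = u * v⁻¹ :=
      fun x hx => hHvQ x (Finset.mem_filter.mp hx).2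
    obtain ⟨m, hmS, hmin⟩ := exists_min_aux (Ht : Set G) Ht.one_mem
      (fun x hx y hy => Ht.mul_mem hx hy) S ⟨1, hS1⟩
      (fun x hx y hy => hQval x y (hSQ x hx) (hSQ y hy))
    have hmX : m ∈ X := (Finset.mem_filter.mp hmS).1
    have hmHv : m ∈ pseudoUnits H := (Finset.mem_filter.mp hmS).2
    have hmQ : ∃ u ∈ Ht, ∃ v ∈ Ht, m = u * v⁻¹ := hHvQ m hmHv
    refine ⟨m⁻¹, ⟨Finset.mem_image.mpr ⟨m, hmX, by simp⟩, ?_⟩, ?_⟩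
    · intro y hy
      simp only [Finset.coe_image, Set.mem_image, Finset.mem_coe] at hy
      obtain ⟨x, hxX, rfl⟩ := hy
      rw [hK]
      by_cases hxv : x ∈ pseudoUnits H
      · apply Set.mem_union_right
        have h := hmin x (Finset.mem_filter.mpr ⟨hxX, hxv⟩)
        rwa [mul_comm] at h
      · apply Set.mem_union_left
        have h := hHvcQ x (hXH hxX) hxv m⁻¹ (hQinv m hmQ)
        rw [mul_comm m⁻¹ x]
        exact ⟨h.1, h.2⟩
    · rintro a ⟨ha1, haK⟩
      obtain ⟨x₀, hx₀X, hax₀⟩ := Finset.mem_image.mp ha1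
      have haeq : a = x₀⁻¹ := eq_inv_of_mul_eq_one_left hax₀
      have hmemK : ∀ x ∈ X, a * x ∈ (K : Set G) := by
        intro x hx
        apply haK
        rw [Finset.coe_image]
        exact Set.mem_image_of_mem _ hx
      have haK' : a ∈ (K : Set G) := by simpa using hmemK 1 hX1
      have haQ : ∃ u ∈ Ht, ∃ v ∈ Ht, a = u * v⁻¹ := by
        rw [hK] at haK'
        rcases haK' with ⟨haH, han⟩ | h
        · exfalso
          have hx₀H : x₀ ∈ H := hXH hx₀X
          have ha1' : a = 1 := hHred a haH (by rw [haeq, inv_inv]; exact hx₀H)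
          rw [ha1'] at han
          exact han h1v
        · exact hHtQ a h
      have hx₀Q : ∃ u ∈ Ht, ∃ v ∈ Ht, x₀ = u * v⁻¹ := by
        have e : x₀ = a⁻¹ := by rw [haeq, inv_inv]
        rw [e]; exact hQinv a haQ
      have hx₀Hv : x₀ ∈ pseudoUnits H := hHQ x₀ hx₀Q (hXH hx₀X)
      have hx₀S : x₀ ∈ S := Finset.mem_filter.mpr ⟨hx₀X, hx₀Hv⟩
      have h1 : a * m ∈ Ht := hQK _ (hQmul a m haQ hmQ) (hmemK m hmX)
      have h2 : (a * m)⁻¹ ∈ Ht := by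
        have h := hmin x₀ hx₀S
        have e : (a * m)⁻¹ = x₀ * m⁻¹ := by rw [haeq]; simp [mul_assoc, mul_comm, mul_left_comm, mul_inv_rev, inv_inv]
        rw [e]; exact h
      exact eq_inv_of_mul_eq_one_left (hTred (a * m) h1 h2)
  · -- Part 2: Y ⊆ K
    intro Y hY1 hYK
    set T := Y.filter (fun y => y ∈ Ht) with hT
    have hT1 : (1 : G) ∈ T := Finset.mem_filter.mpr ⟨hY1, Ht.one_mem⟩
    have hTQ : ∀ x ∈ T, ∃ u ∈ Ht, ∃ v ∈ Ht, x = u * v⁻¹ :=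
      fun x hx => hHtQ x (Finset.mem_filter.mp hx).2
    obtain ⟨m, hmT, hmin⟩ := exists_min_aux (pseudoUnits H) h1v
      (fun x hx y hy => mul_mem_pu hx hy) T ⟨1, hT1⟩
      (fun x hx y hy => hQvalHv x y (hTQ x hx) (hTQ y hy))
    have hmY : m ∈ Y := (Finset.mem_filter.mp hmT).1
    have hmHt : m ∈ Ht := (Finset.mem_filter.mp hmT).2
    have hmQ : ∃ u ∈ Ht, ∃ v ∈ Ht, m = u * v⁻¹ := hHtQ m hmHt
    refine ⟨m⁻¹, ⟨Finset.mem_image.mpr ⟨m, hmY, by simp⟩, ?_⟩, ?_⟩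
    · intro z hz
      simp only [Finset.coe_image, Set.mem_image, Finset.mem_coe] at hz
      obtain ⟨y, hyY, rfl⟩ := hz
      have hyK : y ∈ (K : Set G) := hYK hyY
      rw [hK] at hyK
      rcases hyK with ⟨hyH, hyn⟩ | hyT
      · have h := hHvcQ y hyH hyn m⁻¹ (hQinv m hmQ)
        rw [mul_comm m⁻¹ y]
        exact h.1
      · have h : y * m⁻¹ ∈ pseudoUnits H := hmin y (Finset.mem_filter.mpr ⟨hyY, hyT⟩)
        rw [mul_comm m⁻¹ y]
        exact h.1
    · rintro b ⟨hb1, hbH⟩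
      obtain ⟨y₀, hy₀Y, hby₀⟩ := Finset.mem_image.mp hb1
      have hbeq : b = y₀⁻¹ := eq_inv_of_mul_eq_one_left hby₀
      have hmemH : ∀ y ∈ Y, b * y ∈ (H : Set G) := by
        intro y hy
        apply hbH
        rw [Finset.coe_image]
        exact Set.mem_image_of_mem _ hy
      have hbH' : b ∈ (H : Set G) := by simpa using hmemH 1 hY1
      have hy₀K : y₀ ∈ (K : Set G) := hYK hy₀Y
      rw [hK] at hy₀K
      have hy₀Ht : y₀ ∈ Ht := by
        rcases hy₀K with ⟨hyH, hyn⟩ | h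
        · exfalso
          have hy1 : y₀ = 1 := hHred y₀ hyH (by rw [← hbeq]; exact hbH')
          rw [hy1] at hyn
          exact hyn h1v
        · exact h
      have hbQ : ∃ u ∈ Ht, ∃ v ∈ Ht, b = u * v⁻¹ := by
        rw [hbeq]; exact hQinv y₀ (hHtQ y₀ hy₀Ht)
      have hy₀T : y₀ ∈ T := Finset.mem_filter.mpr ⟨hy₀Y, hy₀Ht⟩
      have h1 : b * m ∈ pseudoUnits H := hHQ _ (hQmul b m hbQ hmQ) (hmemH m hmY)
      have h2 : (b * m)⁻¹ ∈ pseudoUnits H := by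
        have h := hmin y₀ hy₀T
        have e : (b * m)⁻¹ = y₀ * m⁻¹ := by rw [hbeq]; simp [mul_assoc, mul_comm, mul_left_comm, mul_inv_rev, inv_inv]
        rw [e]; exact h
      exact eq_inv_of_mul_eq_one_left (hHred (b * m) h1.1 h2.1)
end

section
/- Let H and K be reduced commutative cancellative valuation monoids with q(H) = q(K). Then P_fin,1(H) ≅ P_fin,1(K), via the map sending X ∈ P_fin,1(H) to the unique translate aX (a ∈ q(H)) that lies in P_fin,1(K). -/
open scoped Pointwise

section Aux19

variable {G : Type*} [CommGroup G] [DecidableEq G]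

theorem aux19_exists_min (K : Submonoid G) (hK : ∀ x : G, x ∈ K ∨ x⁻¹ ∈ K)
    (X : Finset G) (hX : X.Nonempty) : ∃ m ∈ X, ∀ x ∈ X, m⁻¹ * x ∈ K := by
  classical
  induction X using Finset.induction_on with
  | empty => exact absurd hX (by simp)
  | @insert a s ha ih =>
    rcases s.eq_empty_or_nonempty with rfl | hs
    · refine ⟨a, by simp, ?_⟩
      intro x hx
      simp only [Finset.mem_insert, Finset.notMem_empty, or_false] at hx
      subst hx
      simpa using K.one_mem
    · obtain ⟨m, hm, hmin⟩ := ih hs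
      rcases hK (m⁻¹ * a) with h | h
      · refine ⟨m, Finset.mem_insert_of_mem hm, ?_⟩
        intro x hx
        rcases Finset.mem_insert.1 hx with rfl | hx
        · exact h
        · exact hmin x hx
      · refine ⟨a, Finset.mem_insert_self _ _, ?_⟩
        intro x hx
        rcases Finset.mem_insert.1 hx with rfl | hx
        · simpa using K.one_mem
        · have h2 := K.mul_mem h (hmin x hx)
          have : (m⁻¹ * a)⁻¹ * (m⁻¹ * x) = a⁻¹ * x := by simp [mul_inv_rev, mul_assoc, mul_comm, mul_left_comm]
          rwa [this] at h2

theorem aux19_min_unique (K : Submonoid G) (hKred : ∀ x ∈ K, x⁻¹ ∈ K → x = 1)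
    {X : Finset G} {m m' : G} (hm : m ∈ X) (hm' : m' ∈ X)
    (h : ∀ x ∈ X, m⁻¹ * x ∈ K) (h' : ∀ x ∈ X, m'⁻¹ * x ∈ K) : m = m' := by
  have h1 := h m' hm'
  have h2 := h' m hm
  have h3 : (m⁻¹ * m')⁻¹ ∈ K := by
    have : (m⁻¹ * m')⁻¹ = m'⁻¹ * m := by simp [mul_inv_rev, mul_assoc, mul_comm, mul_left_comm]
    rwa [this]
  have := hKred _ h1 h3
  exact (inv_mul_eq_one.mp this)

noncomputable def minOf19 (K : Submonoid G) (hK : ∀ x : G, x ∈ K ∨ x⁻¹ ∈ K)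
    (X : Finset G) (hX : X.Nonempty) : G :=
  (aux19_exists_min K hK X hX).choose

theorem minOf19_mem (K : Submonoid G) (hK : ∀ x : G, x ∈ K ∨ x⁻¹ ∈ K)
    (X : Finset G) (hX : X.Nonempty) : minOf19 K hK X hX ∈ X :=
  (aux19_exists_min K hK X hX).choose_spec.1

theorem minOf19_spec (K : Submonoid G) (hK : ∀ x : G, x ∈ K ∨ x⁻¹ ∈ K)
    (X : Finset G) (hX : X.Nonempty) :
    ∀ x ∈ X, (minOf19 K hK X hX)⁻¹ * x ∈ K :=
  (aux19_exists_min K hK X hX).choose_spec.2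

theorem minOf19_eq (K : Submonoid G) (hK : ∀ x : G, x ∈ K ∨ x⁻¹ ∈ K)
    (hKred : ∀ x ∈ K, x⁻¹ ∈ K → x = 1)
    {X : Finset G} (hX : X.Nonempty) {m : G} (hm : m ∈ X)
    (h : ∀ x ∈ X, m⁻¹ * x ∈ K) : minOf19 K hK X hX = m :=
  aux19_min_unique K hKred (minOf19_mem K hK X hX) hm (minOf19_spec K hK X hX) h

theorem minOf19_eq_one (K : Submonoid G) (hK : ∀ x : G, x ∈ K ∨ x⁻¹ ∈ K)
    (hKred : ∀ x ∈ K, x⁻¹ ∈ K → x = 1)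
    {X : Finset G} (h1 : (1 : G) ∈ X) (hsub : ∀ x ∈ X, x ∈ K) :
    minOf19 K hK X ⟨1, h1⟩ = 1 :=
  minOf19_eq K hK hKred _ h1 (fun x hx => by simpa using hsub x hx)

theorem minOf19_mul (K : Submonoid G) (hK : ∀ x : G, x ∈ K ∨ x⁻¹ ∈ K)
    (hKred : ∀ x ∈ K, x⁻¹ ∈ K → x = 1)
    {X Y : Finset G} (hX : X.Nonempty) (hY : Y.Nonempty) (hXY : (X * Y).Nonempty) :
    minOf19 K hK (X * Y) hXY = minOf19 K hK X hX * minOf19 K hK Y hY := by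
  apply minOf19_eq K hK hKred
  · exact Finset.mul_mem_mul (minOf19_mem K hK X hX) (minOf19_mem K hK Y hY)
  · intro z hz
    obtain ⟨x, hx, y, hy, rfl⟩ := Finset.mem_mul.1 hz
    have h1 := K.mul_mem (minOf19_spec K hK X hX x hx) (minOf19_spec K hK Y hY y hy)
    have : (minOf19 K hK X hX)⁻¹ * x * ((minOf19 K hK Y hY)⁻¹ * y)
        = (minOf19 K hK X hX * minOf19 K hK Y hY)⁻¹ * (x * y) := by simp [mul_inv_rev, mul_assoc, mul_comm, mul_left_comm]
    rwa [this] at h1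

theorem minOf19_smul (K : Submonoid G) (hK : ∀ x : G, x ∈ K ∨ x⁻¹ ∈ K)
    (hKred : ∀ x ∈ K, x⁻¹ ∈ K → x = 1)
    {X : Finset G} (hX : X.Nonempty) (a : G) (haX : (a • X).Nonempty) :
    minOf19 K hK (a • X) haX = a * minOf19 K hK X hX := by
  apply minOf19_eq K hK hKred
  · exact Finset.smul_mem_smul_finset (minOf19_mem K hK X hX)
  · intro z hz
    obtain ⟨x, hx, rfl⟩ := Finset.mem_smul_finset.1 hz
    have h1 := minOf19_spec K hK X hX x hx
    have : (minOf19 K hK X hX)⁻¹ * x = (a * minOf19 K hK X hX)⁻¹ * (a • x) := by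
      simp only [smul_eq_mul]; group
    rwa [this] at h1

theorem minOf19_congr (K : Submonoid G) (hK : ∀ x : G, x ∈ K ∨ x⁻¹ ∈ K)
    {X Y : Finset G} (h : X = Y) (hX : X.Nonempty) :
    minOf19 K hK X hX = minOf19 K hK Y (h ▸ hX) := by subst h; rfl

theorem smul_mul_smul19 (a b : G) (s t : Finset G) :
    (a * b)⁻¹ • (s * t) = a⁻¹ • s * b⁻¹ • t := by
  rw [← Finset.singleton_mul, ← Finset.singleton_mul, ← Finset.singleton_mul,
    mul_inv_rev, mul_comm b⁻¹ a⁻¹, ← Finset.singleton_mul_singleton]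
  exact mul_mul_mul_comm _ _ _ _

noncomputable def transMap19 (K : Submonoid G) (hK : ∀ x : G, x ∈ K ∨ x⁻¹ ∈ K)
    (X : Finset G) : Finset K :=
  letI := Classical.decPred (· ∈ K)
  if hX : X.Nonempty then ((minOf19 K hK X hX)⁻¹ • X).subtype (· ∈ K) else ∅

theorem transMap19_image (K : Submonoid G) (hK : ∀ x : G, x ∈ K ∨ x⁻¹ ∈ K)
    {X : Finset G} (hX : X.Nonempty) :
    (transMap19 K hK X).image Subtype.val = (minOf19 K hK X hX)⁻¹ • X := by
  classical
  unfold transMap19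
  rw [dif_pos hX]
  ext a
  simp only [Finset.mem_image, Finset.mem_subtype]
  constructor
  · rintro ⟨b, hb, rfl⟩
    exact hb
  · intro ha
    have haK : a ∈ K := by
      obtain ⟨x, hx, rfl⟩ := Finset.mem_smul_finset.1 ha
      simpa [smul_eq_mul] using minOf19_spec K hK X hX x hx
    exact ⟨⟨a, haK⟩, ha, rfl⟩

end Aux19

/-- If `H` and `K` are reduced valuation monoids with the same quotient group `G`
(i.e. `x ∈ H` or `x⁻¹ ∈ H` for every `x ∈ G`, and likewise for `K`), then
`P_fin,1(H) ≅ P_fin,1(K)` via the map sending `X` to its unique translate `aX`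
lying in `P_fin,1(K)`. -/
theorem stmt19 {G : Type*} [CommGroup G] [DecidableEq G]
    (H K : Submonoid G)
    (hHred : ∀ a ∈ H, a⁻¹ ∈ H → a = 1) (hKred : ∀ x ∈ K, x⁻¹ ∈ K → x = 1)
    (hHval : ∀ x : G, x ∈ H ∨ x⁻¹ ∈ H) (hKval : ∀ x : G, x ∈ K ∨ x⁻¹ ∈ K) :
    ∃ e : redPow H ≃* redPow K, ∀ X : redPow H, ∃ a : G,
      ((e X : redPow K) : Finset K).image (Subtype.val) =
        ((X : Finset H).image (Subtype.val)).image (fun x => a * x) := by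
  classical
  -- the forward and backward maps on the level of `Finset G`
  have hmem1H : ∀ X : redPow H, (1 : G) ∈ (X : Finset H).image Subtype.val := by
    intro X
    exact Finset.mem_image.2 ⟨1, X.2, rfl⟩
  have hmem1K : ∀ X : redPow K, (1 : G) ∈ (X : Finset K).image Subtype.val := by
    intro X
    exact Finset.mem_image.2 ⟨1, X.2, rfl⟩
  -- generic one-membership for transMap
  have transMem : ∀ (L : Submonoid G) (hL : ∀ x : G, x ∈ L ∨ x⁻¹ ∈ L)
      (X : Finset G) (h1 : (1 : G) ∈ X), (1 : L) ∈ transMap19 L hL X := by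
    intro L hL X h1
    have hne : X.Nonempty := ⟨1, h1⟩
    have himg := transMap19_image L hL hne
    have : (1 : G) ∈ (minOf19 L hL X hne)⁻¹ • X := by
      refine Finset.mem_smul_finset.2 ⟨minOf19 L hL X hne, minOf19_mem L hL X hne, ?_⟩
      simp [smul_eq_mul]
    rw [← himg] at this
    obtain ⟨b, hb, hb1⟩ := Finset.mem_image.1 this
    have : b = (1 : L) := Subtype.ext (by simpa using hb1)
    rwa [this] at hb
  set F : redPow H → redPow K := fun X =>
    ⟨transMap19 K hKval ((X : Finset H).image Subtype.val),
      transMem K hKval _ (hmem1H X)⟩ with hF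
  set F' : redPow K → redPow H := fun X =>
    ⟨transMap19 H hHval ((X : Finset K).image Subtype.val),
      transMem H hHval _ (hmem1K X)⟩ with hF'
  -- image computation for F
  have himgF : ∀ X : redPow H,
      ((F X : Finset K)).image Subtype.val =
        (minOf19 K hKval ((X : Finset H).image Subtype.val) ⟨1, hmem1H X⟩)⁻¹ •
          ((X : Finset H).image Subtype.val) := by
    intro X
    exact transMap19_image K hKval ⟨1, hmem1H X⟩
  have himgF' : ∀ X : redPow K,
      ((F' X : Finset H)).image Subtype.val =
        (minOf19 H hHval ((X : Finset K).image Subtype.val) ⟨1, hmem1K X⟩)⁻¹ •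
          ((X : Finset K).image Subtype.val) := by
    intro X
    exact transMap19_image H hHval ⟨1, hmem1K X⟩
  -- generic round-trip computation
  have roundtrip : ∀ (L L' : Submonoid G) (hL : ∀ x : G, x ∈ L ∨ x⁻¹ ∈ L)
      (hL' : ∀ x : G, x ∈ L' ∨ x⁻¹ ∈ L') (hLred : ∀ x ∈ L, x⁻¹ ∈ L → x = 1)
      (X : Finset G) (h1 : (1 : G) ∈ X) (hsub : ∀ x ∈ X, x ∈ L),
      (minOf19 L hL ((minOf19 L' hL' X ⟨1, h1⟩)⁻¹ • X)
          (Finset.Nonempty.smul_finset (⟨1, h1⟩ : X.Nonempty)))⁻¹ •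
        ((minOf19 L' hL' X ⟨1, h1⟩)⁻¹ • X) = X := by
    intro L L' hL hL' hLred X h1 hsub
    have hne : X.Nonempty := ⟨1, h1⟩
    set m := minOf19 L' hL' X hne with hm
    have h2 : minOf19 L hL (m⁻¹ • X) (hne.smul_finset) = m⁻¹ * minOf19 L hL X hne :=
      minOf19_smul L hL hLred hne m⁻¹ _
    have h3 : minOf19 L hL X hne = 1 := minOf19_eq_one L hL hLred h1 hsub
    rw [h2, h3, mul_one, inv_inv, smul_smul]
    simp
  have subH : ∀ X : redPow H, ∀ x ∈ (X : Finset H).image Subtype.val, x ∈ H := by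
    rintro X x hx
    obtain ⟨b, _, rfl⟩ := Finset.mem_image.1 hx
    exact b.2
  have subK : ∀ X : redPow K, ∀ x ∈ (X : Finset K).image Subtype.val, x ∈ K := by
    rintro X x hx
    obtain ⟨b, _, rfl⟩ := Finset.mem_image.1 hx
    exact b.2
  have left_inv : Function.LeftInverse F' F := by
    intro X
    apply Subtype.ext
    apply Finset.image_injective Subtype.val_injective
    have h1 := himgF' (F X)
    rw [h1]
    have h2 := himgF X
    have key := roundtrip H K hHval hKval hHred ((X : Finset H).image Subtype.val)
      (hmem1H X) (subH X)
    -- rewrite the inner image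
    simp only [h2]
    convert key using 3
  have right_inv : Function.RightInverse F' F := by
    intro X
    apply Subtype.ext
    apply Finset.image_injective Subtype.val_injective
    have h1 := himgF (F' X)
    rw [h1]
    have h2 := himgF' X
    have key := roundtrip K H hKval hHval hKred ((X : Finset K).image Subtype.val)
      (hmem1K X) (subK X)
    simp only [h2]
    convert key using 3
  have hmul : ∀ X Y : redPow H, F (X * Y) = F X * F Y := by
    intro X Y
    apply Subtype.ext
    apply Finset.image_injective Subtype.val_injective
    have hXY : ((X * Y : redPow H) : Finset H).image Subtype.val =
        (X : Finset H).image Subtype.val * (Y : Finset H).image Subtype.val := by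
      have : ((X * Y : redPow H) : Finset H) = (X : Finset H) * (Y : Finset H) := rfl
      rw [this]
      exact Finset.image_mul H.subtype
    have hXne : ((X : Finset H).image Subtype.val).Nonempty := ⟨1, hmem1H X⟩
    have hYne : ((Y : Finset H).image Subtype.val).Nonempty := ⟨1, hmem1H Y⟩
    have hL := himgF (X * Y)
    rw [hL]
    have hR : (((F X * F Y : redPow K)) : Finset K).image Subtype.val =
        ((F X : Finset K)).image Subtype.val * ((F Y : Finset K)).image Subtype.val := by
      have : ((F X * F Y : redPow K) : Finset K) = (F X : Finset K) * (F Y : Finset K) := rfl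
      rw [this]
      exact Finset.image_mul K.subtype
    set A := (X : Finset H).image Subtype.val with hA
    set B := (Y : Finset H).image Subtype.val with hB
    rw [hR, himgF X, himgF Y]
    have e1 : minOf19 K hKval (((X * Y : redPow H) : Finset H).image Subtype.val)
        ⟨1, hmem1H (X * Y)⟩ = minOf19 K hKval A hXne * minOf19 K hKval B hYne := by
      rw [minOf19_congr K hKval hXY ⟨1, hmem1H (X * Y)⟩]
      exact minOf19_mul K hKval hKred hXne hYne _
    rw [e1, hXY]
    exact smul_mul_smul19 _ _ _ _
  refine ⟨MulEquiv.mk ⟨F, F', left_inv, right_inv⟩ hmul, ?_⟩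
  intro X
  refine ⟨(minOf19 K hKval ((X : Finset H).image Subtype.val) ⟨1, hmem1H X⟩)⁻¹, ?_⟩
  have h := himgF X
  rw [show ((MulEquiv.mk ⟨F, F', left_inv, right_inv⟩ hmul) X : redPow K) = F X from rfl]
  rw [h, Finset.smul_finset_def]
  simp [smul_eq_mul]
end
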